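/- arXiv:math/9404227 — 10 statements merged into one kernel-verified Lean document; each statement's English description precedes it below -/
import Mathlib

section
/- Let C be a densely ordered linear order with at least two elements, let I be a finite set, and let f be an additive colouring of C by I. Then there exist a < b in C and a set D contained in the open interval (a,b) such that D is homogeneous for f and D is dense in the interval, i.e. for all x, y with a ≤ x < y ≤ b there is d ∈ D with x < d < y. -/
/-- `f` is an additive colouring of the linear order `C`. -/
def IsAdditiveColouring {C I : Type*} [LinearOrder C] (f : C → C → I) : Prop :=
  ∀ x₁ y₁ z₁ x₂ y₂ z₂ : C, x₁ < y₁ → y₁ < z₁ → x₂ < y₂ → y₂ < z₂ →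
    f x₁ y₁ = f x₂ y₂ → f y₁ z₁ = f y₂ z₂ → f x₁ z₁ = f x₂ z₂

/-- Pigeonhole lemma: if a family of sets indexed by a finite set covers a set `G` which is
dense (relative to a predicate `P`) in the interval `[c,d]`, then one member of the family is
dense in some subinterval. -/
theorem shelah_pigeon {ι C : Type*} [LinearOrder C] {P : C → Prop}
    (T : Finset ι) (A : ι → Set C) (G : Set C) :
    ∀ c d : C, P c → P d → c < d →
    (∀ x y, P x → P y → c ≤ x → x < y → y ≤ d → ∃ q ∈ G, x < q ∧ q < y) →
    (∀ x, x ∈ G → c < x → x < d → ∃ i ∈ T, x ∈ A i) →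
    ∃ i ∈ T, ∃ c' d', P c' ∧ P d' ∧ c ≤ c' ∧ c' < d' ∧ d' ≤ d ∧
      ∀ x y, P x → P y → c' ≤ x → x < y → y ≤ d' → ∃ q ∈ A i, x < q ∧ q < y := by
  classical
  induction T using Finset.induction_on with
  | empty =>
    intro c d hc hd hcd hG hcov
    obtain ⟨q, hqG, hq1, hq2⟩ := hG c d hc hd le_rfl hcd le_rfl
    obtain ⟨i, hi, -⟩ := hcov q hqG hq1 hq2
    exact absurd hi (Finset.notMem_empty i)
  | @insert i T hiT ih =>
    intro c d hc hd hcd hG hcov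
    by_cases h : ∃ c' d', P c' ∧ P d' ∧ c ≤ c' ∧ c' < d' ∧ d' ≤ d ∧
      ∀ x y, P x → P y → c' ≤ x → x < y → y ≤ d' → ∃ q ∈ A i, x < q ∧ q < y
    · obtain ⟨c', d', h1, h2, h3, h4, h5, h6⟩ := h
      exact ⟨i, Finset.mem_insert_self i T, c', d', h1, h2, h3, h4, h5, h6⟩
    · push_neg at h
      obtain ⟨x, y, hx, hy, hcx, hxy, hyd, hfree⟩ := h c d hc hd le_rfl hcd le_rfl
      obtain ⟨j, hj, c', d', h1, h2, h3, h4, h5, h6⟩ := ih x y hx hy hxy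
        (fun p q hp hq hxp hpq hqy =>
          hG p q hp hq (le_trans hcx hxp) hpq (le_trans hqy hyd))
        (fun p hpG hxp hpy => by
          obtain ⟨j, hj, hpA⟩ := hcov p hpG (lt_of_le_of_lt hcx hxp)
            (lt_of_lt_of_le hpy hyd)
          rcases Finset.mem_insert.mp hj with rfl | hjT
          · exact absurd (hfree p hpA hxp) (not_le.mpr hpy)
          · exact ⟨j, hjT, hpA⟩)
      exact ⟨j, Finset.mem_insert_of_mem hj, c', d', h1, h2, le_trans hcx h3, h4,
        le_trans h5 hyd, h6⟩

/-- Main inductive lemma for Shelah's dense additive Ramsey theorem: induction on the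
number of colours realized between points satisfying a predicate `P` which carves out a
dense-in-itself nontrivial suborder. -/
theorem shelah_aux {C I : Type*} [LinearOrder C] [Finite I] (f : C → C → I)
    (hf : IsAdditiveColouring f) :
    ∀ (n : ℕ) (P : C → Prop),
      (∀ x y, P x → P y → x < y → ∃ z, P z ∧ x < z ∧ z < y) →
      (∃ x y, P x ∧ P y ∧ x < y) →
      {i | ∃ x y, P x ∧ P y ∧ x < y ∧ f x y = i}.ncard ≤ n →
      ∃ a b, P a ∧ P b ∧ a < b ∧ ∃ D : Set C, D ⊆ Set.Ioo a b ∧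
        (∃ i₀ : I, ∀ x ∈ D, ∀ y ∈ D, x < y → f x y = i₀) ∧
        (∀ x y, P x → P y → a ≤ x → x < y → y ≤ b → ∃ q ∈ D, x < q ∧ q < y) := by
  classical
  intro n
  induction n with
  | zero =>
    intro P hP hnt hcard
    obtain ⟨x, y, hx, hy, hxy⟩ := hnt
    have hmem : f x y ∈ {i | ∃ x y, P x ∧ P y ∧ x < y ∧ f x y = i} :=
      ⟨x, y, hx, hy, hxy, rfl⟩
    have hfin : {i | ∃ x y, P x ∧ P y ∧ x < y ∧ f x y = i}.Finite := Set.toFinite _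
    have h0 := (Set.ncard_eq_zero hfin).mp (Nat.le_zero.mp hcard)
    rw [h0] at hmem
    exact absurd hmem (Set.notMem_empty _)
  | succ n ih =>
    intro P hP hnt hcard
    set S := {i | ∃ x y, P x ∧ P y ∧ x < y ∧ f x y = i} with hSdef
    have hSfin : S.Finite := Set.toFinite _
    -- helper: recurse on a sub-suborder with strictly fewer realized colours, and lift
    have lift : ∀ (Q : C → Prop) (c₀ d₀ : C), P c₀ → P d₀ → c₀ < d₀ →
        (∀ x, Q x → P x ∧ c₀ < x ∧ x < d₀) →
        (∀ x y, P x → P y → c₀ ≤ x → x < y → y ≤ d₀ → ∃ q, Q q ∧ x < q ∧ q < y) →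
        {i | ∃ x y, Q x ∧ Q y ∧ x < y ∧ f x y = i}.ncard ≤ n →
        ∃ a b, P a ∧ P b ∧ a < b ∧ ∃ D : Set C, D ⊆ Set.Ioo a b ∧
          (∃ i₀ : I, ∀ x ∈ D, ∀ y ∈ D, x < y → f x y = i₀) ∧
          (∀ x y, P x → P y → a ≤ x → x < y → y ≤ b → ∃ q ∈ D, x < q ∧ q < y) := by
      intro Q c₀ d₀ hc₀ hd₀ hcd₀ hQsub hQdens hQcard
      have hQd : ∀ x y, Q x → Q y → x < y → ∃ z, Q z ∧ x < z ∧ z < y := by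
        intro x y hx hy hxy
        obtain ⟨hPx, h1, h2⟩ := hQsub x hx
        obtain ⟨hPy, h3, h4⟩ := hQsub y hy
        exact hQdens x y hPx hPy h1.le hxy h4.le
      have hQnt : ∃ x y, Q x ∧ Q y ∧ x < y := by
        obtain ⟨q, hq, hq1, hq2⟩ := hQdens c₀ d₀ hc₀ hd₀ le_rfl hcd₀ le_rfl
        obtain ⟨hPq, h1, h2⟩ := hQsub q hq
        obtain ⟨q', hq', hq1', hq2'⟩ := hQdens q d₀ hPq hd₀ h1.le h2 le_rfl
        exact ⟨q, q', hq, hq', hq1'⟩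
      obtain ⟨a', b', hQA, hQB, hab', D, hDsub, hhom, hdens⟩ := ih Q hQd hQnt hQcard
      obtain ⟨hPa', ha'1, ha'2⟩ := hQsub a' hQA
      obtain ⟨hPb', hb'1, hb'2⟩ := hQsub b' hQB
      refine ⟨a', b', hPa', hPb', hab', D, hDsub, hhom, ?_⟩
      intro x y hx hy hax hxy hyb
      obtain ⟨e₁, he₁Q, he₁1, he₁2⟩ :=
        hQdens x y hx hy (le_trans ha'1.le hax) hxy (le_trans hyb hb'2.le)
      obtain ⟨hPe₁, he₁c, he₁d⟩ := hQsub e₁ he₁Q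
      obtain ⟨e₂, he₂Q, he₂1, he₂2⟩ :=
        hQdens e₁ y hPe₁ hy he₁c.le he₁2 (le_trans hyb hb'2.le)
      obtain ⟨d, hdD, hd1, hd2⟩ := hdens e₁ e₂ he₁Q he₂Q
        (le_of_lt (lt_of_le_of_lt hax he₁1)) he₂1 (le_of_lt (lt_of_lt_of_le he₂2 hyb))
      exact ⟨d, hdD, lt_trans he₁1 hd1, lt_trans hd2 he₂2⟩
    by_cases hstab : ∀ u v, P u → P v → u < v → ∀ i ∈ S, ∃ x y,
        P x ∧ P y ∧ u < x ∧ x < y ∧ y < v ∧ f x y = i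
    swap
    · -- some colour is missing in some subinterval: recurse
      push_neg at hstab
      obtain ⟨u, v, hu, hv, huv, i, hiS, hmiss⟩ := hstab
      set Q : C → Prop := fun x => P x ∧ u < x ∧ x < v with hQdef
      have hQsub : ∀ x, Q x → P x ∧ u < x ∧ x < v := fun x hx => hx
      have hQdens : ∀ x y, P x → P y → u ≤ x → x < y → y ≤ v →
          ∃ q, Q q ∧ x < q ∧ q < y := by
        intro x y hx hy hux hxy hyv
        obtain ⟨z, hz, h1, h2⟩ := hP x y hx hy hxy
        exact ⟨z, ⟨hz, lt_of_le_of_lt hux h1, lt_of_lt_of_le h2 hyv⟩, h1, h2⟩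
      have hssub : {j | ∃ x y, Q x ∧ Q y ∧ x < y ∧ f x y = j} ⊂ S := by
        constructor
        · rintro j ⟨x, y, hx, hy, hxy, hj⟩
          exact ⟨x, y, hx.1, hy.1, hxy, hj⟩
        · intro hcon
          obtain ⟨x, y, hx, hy, hxy, hj⟩ := hcon hiS
          exact hmiss x y hx.1 hy.1 hx.2.1 hxy hy.2.2 hj
      exact lift Q u v hu hv huv hQsub hQdens
        (Nat.lt_succ_iff.mp (lt_of_lt_of_le (Set.ncard_lt_ncard hssub hSfin) hcard))
    -- stable case: every colour in S is realized in every subinterval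
    have _inst : Fintype I := Fintype.ofFinite I
    obtain ⟨a, b, ha, hb, hab⟩ := hnt
    -- first pigeonhole: colours f a x for x ∈ (a,b)
    obtain ⟨m, -, c₁, d₁, hc₁, hd₁, hac₁, hc₁d₁, hd₁b, dens₁⟩ :=
      shelah_pigeon (Finset.univ : Finset I)
        (fun i => {x | P x ∧ a < x ∧ x < b ∧ f a x = i})
        {x | P x ∧ a < x ∧ x < b} a b ha hb hab
        (fun x y hx hy hax hxy hyb => by
          obtain ⟨z, hz, h1, h2⟩ := hP x y hx hy hxy
          exact ⟨z, ⟨hz, lt_of_le_of_lt hax h1, lt_of_lt_of_le h2 hyb⟩, h1, h2⟩)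
        (fun x hx h1 h2 => ⟨f a x, Finset.mem_univ _, hx.1, hx.2.1, hx.2.2, rfl⟩)
    set Q₁ : C → Prop := fun x => (P x ∧ a < x ∧ x < b ∧ f a x = m) ∧ c₁ < x ∧ x < d₁
      with hQ₁def
    have densQ₁ : ∀ x y, P x → P y → c₁ ≤ x → x < y → y ≤ d₁ →
        ∃ q, Q₁ q ∧ x < q ∧ q < y := by
      intro x y hx hy hcx hxy hyd
      obtain ⟨q, hqA, h1, h2⟩ := dens₁ x y hx hy hcx hxy hyd
      exact ⟨q, ⟨hqA, lt_of_le_of_lt hcx h1, lt_of_lt_of_le h2 hyd⟩, h1, h2⟩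
    by_cases hss₁ : S ⊆ {j | ∃ x y, Q₁ x ∧ Q₁ y ∧ x < y ∧ f x y = j}
    swap
    · -- fewer colours realized on Q₁: recurse
      have hsub : {j | ∃ x y, Q₁ x ∧ Q₁ y ∧ x < y ∧ f x y = j} ⊂ S := by
        refine lt_of_le_not_ge ?_ hss₁
        rintro j ⟨x, y, hx, hy, hxy, hj⟩
        exact ⟨x, y, hx.1.1, hy.1.1, hxy, hj⟩
      exact lift Q₁ c₁ d₁ hc₁ hd₁ hc₁d₁ (fun x hx => ⟨hx.1.1, hx.2.1, hx.2.2⟩) densQ₁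
        (Nat.lt_succ_iff.mp (lt_of_lt_of_le (Set.ncard_lt_ncard hsub hSfin) hcard))
    have hZL : ∀ r ∈ S, ∃ p q s : C, p < q ∧ q < s ∧ f p q = m ∧ f q s = r ∧ f p s = m := by
      intro r hr
      obtain ⟨x, y, hx, hy, hxy, hfr⟩ := hss₁ hr
      exact ⟨a, x, y, hx.1.2.1, hxy, hx.1.2.2.2, hfr, hy.1.2.2.2⟩
    -- pick a point y₀ of Q₁ with Q₁ dense below it
    obtain ⟨q₀, hq₀, hq₀1, hq₀2⟩ := densQ₁ c₁ d₁ hc₁ hd₁ le_rfl hc₁d₁ le_rfl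
    obtain ⟨y₀, hy₀Q, hy₀1, hy₀2⟩ := densQ₁ q₀ d₁ hq₀.1.1 hd₁ hq₀.2.1.le hq₀2 le_rfl
    have hPy₀ : P y₀ := hy₀Q.1.1
    have hc₁y₀ : c₁ < y₀ := lt_trans hq₀.2.1 hy₀1
    -- second pigeonhole: colours f x y₀ for x ∈ Q₁ below y₀
    obtain ⟨mb, -, c₂, d₂, hc₂, hd₂, hc₁c₂, hc₂d₂, hd₂y₀, dens₂⟩ :=
      shelah_pigeon (Finset.univ : Finset I)
        (fun i => {x | Q₁ x ∧ x < y₀ ∧ f x y₀ = i})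
        {x | Q₁ x ∧ x < y₀} c₁ y₀ hc₁ hPy₀ hc₁y₀
        (fun x y hx hy hcx hxy hyy => by
          obtain ⟨q, hqQ, h1, h2⟩ := densQ₁ x y hx hy hcx hxy (le_trans hyy hy₀2.le)
          exact ⟨q, ⟨hqQ, lt_of_lt_of_le h2 hyy⟩, h1, h2⟩)
        (fun x hx h1 h2 => ⟨f x y₀, Finset.mem_univ _, hx.1, hx.2, rfl⟩)
    set Q₂ : C → Prop := fun x => (Q₁ x ∧ x < y₀ ∧ f x y₀ = mb) ∧ c₂ < x ∧ x < d₂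
      with hQ₂def
    have densQ₂ : ∀ x y, P x → P y → c₂ ≤ x → x < y → y ≤ d₂ →
        ∃ q, Q₂ q ∧ x < q ∧ q < y := by
      intro x y hx hy hcx hxy hyd
      obtain ⟨q, hqA, h1, h2⟩ := dens₂ x y hx hy hcx hxy hyd
      exact ⟨q, ⟨hqA, lt_of_le_of_lt hcx h1, lt_of_lt_of_le h2 hyd⟩, h1, h2⟩
    by_cases hss₂ : S ⊆ {j | ∃ x y, Q₂ x ∧ Q₂ y ∧ x < y ∧ f x y = j}
    swap
    · have hsub : {j | ∃ x y, Q₂ x ∧ Q₂ y ∧ x < y ∧ f x y = j} ⊂ S := by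
        refine lt_of_le_not_ge ?_ hss₂
        rintro j ⟨x, y, hx, hy, hxy, hj⟩
        exact ⟨x, y, hx.1.1.1.1, hy.1.1.1.1, hxy, hj⟩
      exact lift Q₂ c₂ d₂ hc₂ hd₂ hc₂d₂
        (fun x hx => ⟨hx.1.1.1.1, hx.2.1, hx.2.2⟩) densQ₂
        (Nat.lt_succ_iff.mp (lt_of_lt_of_le (Set.ncard_lt_ncard hsub hSfin) hcard))
    have hZR : ∀ r ∈ S, ∃ p q s : C, p < q ∧ q < s ∧ f p q = r ∧ f q s = mb ∧ f p s = mb := by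
      intro r hr
      obtain ⟨x, y, hx, hy, hxy, hfr⟩ := hss₂ hr
      exact ⟨x, y, y₀, hxy, hy.1.2.1, hfr, hy.1.2.2, hx.1.2.2⟩
    -- a witness point in Q₂, to show m = mb
    obtain ⟨q', hq'Q₂, -, -⟩ := densQ₂ c₂ d₂ hc₂ hd₂ le_rfl hc₂d₂ le_rfl
    have hq'Q₁ : Q₁ q' := hq'Q₂.1.1
    have haq' : a < q' := hq'Q₁.1.2.1
    have hfaq' : f a q' = m := hq'Q₁.1.2.2.2
    have hq'y₀ : q' < y₀ := hq'Q₂.1.2.1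
    have hfq'y₀ : f q' y₀ = mb := hq'Q₂.1.2.2
    have hmS : m ∈ S := ⟨a, q', ha, hq'Q₁.1.1, haq', hfaq'⟩
    have hmbS : mb ∈ S := ⟨q', y₀, hq'Q₁.1.1, hPy₀, hq'y₀, hfq'y₀⟩
    have hzz : m = mb := by
      obtain ⟨p, q, s, hpq, hqs, e1, e2, e3⟩ := hZL mb hmbS
      have h1 : f a y₀ = m := by
        have := hf a q' y₀ p q s haq' hq'y₀ hpq hqs (hfaq'.trans e1.symm)
          (hfq'y₀.trans e2.symm)
        rw [this, e3]
      obtain ⟨p', q'', s', hpq', hqs', e1', e2', e3'⟩ := hZR m hmS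
      have h2 : f a y₀ = mb := by
        have := hf a q' y₀ p' q'' s' haq' hq'y₀ hpq' hqs' (hfaq'.trans e1'.symm)
          (hfq'y₀.trans e2'.symm)
        rw [this, e3']
      exact h1.symm.trans h2
    -- m is a two-sided zero with dense pairs, so f is constant on P-pairs
    have hconst : ∀ x y, P x → P y → x < y → f x y = m := by
      intro x y hx hy hxy
      obtain ⟨α, β, hα, hβ, h1', h2', h3', h4'⟩ := hstab x y hx hy hxy m hmS
      have hr₁ : f x α ∈ S := ⟨x, α, hx, hα, h1', rfl⟩
      obtain ⟨p, q, s, hpq, hqs, g1, g2, g3⟩ := hZR (f x α) hr₁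
      have hxβ : f x β = mb := by
        have := hf x α β p q s h1' h2' hpq hqs g1.symm (h4'.trans (hzz.trans g2.symm))
        rw [this, g3]
      have hr₂ : f β y ∈ S := ⟨β, y, hβ, hy, h3', rfl⟩
      obtain ⟨p2, q2, s2, hpq2, hqs2, g1', g2', g3'⟩ := hZL (f β y) hr₂
      have hfin : f x y = f p2 s2 := hf x β y p2 q2 s2 (lt_trans h1' h2') h3' hpq2 hqs2
        (hxβ.trans (hzz.symm.trans g1'.symm)) g2'.symm
      rw [hfin, g3']
    refine ⟨a, b, ha, hb, hab, {x | P x ∧ a < x ∧ x < b},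
      fun x hx => ⟨hx.2.1, hx.2.2⟩,
      ⟨m, fun x hx y hy hxy => hconst x y hx.1 hy.1 hxy⟩, ?_⟩
    intro x y hx hy hax hxy hyb
    obtain ⟨z, hz, h1, h2⟩ := hP x y hx hy hxy
    exact ⟨z, ⟨hz, lt_of_le_of_lt hax h1, lt_of_lt_of_le h2 hyb⟩, h1, h2⟩

/-- Shelah's additive Ramsey theorem for dense chains: an additive colouring of a dense
linear order by finitely many colours has an interval with a dense homogeneous subset. -/
theorem dense_additive_ramsey {C I : Type*} [LinearOrder C] [DenselyOrdered C]
    [Nontrivial C] [Finite I] (f : C → C → I) (hf : IsAdditiveColouring f) :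
    ∃ a b : C, a < b ∧ ∃ D : Set C, D ⊆ Set.Ioo a b ∧
      (∃ i₀ : I, ∀ x ∈ D, ∀ y ∈ D, x < y → f x y = i₀) ∧
      (∀ x y : C, a ≤ x → x < y → y ≤ b → ∃ d ∈ D, x < d ∧ d < y) := by
  classical
  obtain ⟨x, y, hxy⟩ := exists_pair_ne C
  have hnt : ∃ x y : C, x < y := by
    rcases lt_or_gt_of_ne hxy with h | h
    · exact ⟨x, y, h⟩
    · exact ⟨y, x, h⟩
  obtain ⟨x₀, y₀, hxy₀⟩ := hnt
  have hcard : {i | ∃ x y : C, True ∧ True ∧ x < y ∧ f x y = i}.ncard ≤ Nat.card I :=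
    le_trans (Set.ncard_le_ncard (Set.subset_univ _) Set.finite_univ)
      (le_of_eq (Set.ncard_univ I))
  obtain ⟨a, b, -, -, hab, D, hD, hhom, hdens⟩ :=
    shelah_aux f hf (Nat.card I) (fun _ => True)
      (fun x y _ _ h => by
        obtain ⟨z, h1, h2⟩ := exists_between h
        exact ⟨z, trivial, h1, h2⟩)
      ⟨x₀, y₀, trivial, trivial, hxy₀⟩ hcard
  exact ⟨a, b, hab, D, hD, hhom,
    fun x y hax hxy hyb => hdens x y trivial trivial hax hxy hyb⟩
end

section
/- Let C be a densely ordered linear order with at least two elements, let I be a finite set, and let f be an additive colouring of C by I. Then there exist i₀ ∈ I and a strictly monotone map g : ℤ → C such that f(g i, g j) = i₀ for all integers i < j; that is, C contains a homogeneous subset of order type ℤ. -/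
section Aux

open Set Classical

variable {C I : Type*} [LinearOrder C]

/-- A subset of a linear order which is densely ordered in itself (and nontrivial). -/
def Dii (S : Set C) : Prop :=
  (∃ x ∈ S, ∃ y ∈ S, x < y) ∧
    ∀ x ∈ S, ∀ y ∈ S, x < y → ∃ z ∈ S, x < z ∧ z < y

lemma Dii.nonempty {S : Set C} (h : Dii S) : S.Nonempty := by
  obtain ⟨x, hx, -⟩ := h.1
  exact ⟨x, hx⟩

lemma dii_univ [DenselyOrdered C] [Nontrivial C] : Dii (univ : Set C) := by
  constructor
  · obtain ⟨x, y, hxy⟩ := exists_pair_ne C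
    rcases hxy.lt_or_gt with h | h
    · exact ⟨x, trivial, y, trivial, h⟩
    · exact ⟨y, trivial, x, trivial, h⟩
  · intro x _ y _ hxy
    obtain ⟨z, hz⟩ := exists_between hxy
    exact ⟨z, trivial, hz⟩

lemma dii_inter_Ioo {S : Set C} (hS : Dii S) {x y : C} (hx : x ∈ S) (hy : y ∈ S)
    (hxy : x < y) : Dii (S ∩ Ioo x y) := by
  obtain ⟨z, hz, hz1, hz2⟩ := hS.2 x hx y hy hxy
  obtain ⟨w, hw, hw1, hw2⟩ := hS.2 x hx z hz hz1
  refine ⟨⟨w, ⟨hw, hw1, hw2.trans hz2⟩, z, ⟨hz, hz1, hz2⟩, hw2⟩, ?_⟩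
  rintro u ⟨hu, hu1, hu2⟩ v ⟨hv, hv1, hv2⟩ huv
  obtain ⟨t, ht, ht1, ht2⟩ := hS.2 u hu v hv huv
  exact ⟨t, ⟨ht, hu1.trans ht1, ht2.trans hv2⟩, ht1, ht2⟩

/-- Dichotomy: either `B` contains a dense-in-itself subset of `S`, or removing `B`
from `S` leaves a dense-in-itself set. -/
lemma dii_dichotomy {S : Set C} (hS : Dii S) (B : Set C) :
    (∃ T, T ⊆ S ∩ B ∧ Dii T) ∨ Dii (S \ B) := by
  by_cases h : ∃ T, T ⊆ S ∩ B ∧ Dii T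
  · exact Or.inl h
  right
  push_neg at h
  have key : ∀ x ∈ S, ∀ y ∈ S, x < y → ∃ z, (z ∈ S ∧ z ∉ B) ∧ x < z ∧ z < y := by
    intro x hx y hy hxy
    by_contra hc
    push_neg at hc
    refine h (S ∩ Ioo x y) ?_ (dii_inter_Ioo hS hx hy hxy)
    rintro z ⟨hzS, hz1, hz2⟩
    refine ⟨hzS, ?_⟩
    by_contra hzB
    exact absurd hz2 (not_lt.mpr (hc z ⟨hzS, hzB⟩ hz1))
  constructor
  · obtain ⟨x, hx, y, hy, hxy⟩ := hS.1
    obtain ⟨z, hz, hz1, hz2⟩ := key x hx y hy hxy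
    obtain ⟨w, hw, hw1, hw2⟩ := key x hx z hz.1 hz1
    exact ⟨w, hw, z, hz, hw2⟩
  · rintro u ⟨hu, -⟩ v ⟨hv, -⟩ huv
    obtain ⟨z, hz, hz1, hz2⟩ := key u hu v hv huv
    exact ⟨z, hz, hz1, hz2⟩

/-- Partition lemma: a dense-in-itself set partitioned by finitely many colours has
a dense-in-itself subset on which the colour is constant. -/
lemma dii_partition {J : Type*} [Finite J] (g : C → J) {S : Set C} (hS : Dii S) :
    ∃ (j : J) (T : Set C), T ⊆ S ∧ Dii T ∧ ∀ t ∈ T, g t = j := by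
  have : Fintype J := Fintype.ofFinite J
  suffices H : ∀ (s : Finset J) (S' : Set C), Dii S' → S' ⊆ S → (∀ x ∈ S', g x ∈ s) →
      ∃ (j : J) (T : Set C), T ⊆ S ∧ Dii T ∧ ∀ t ∈ T, g t = j by
    exact H Finset.univ S hS subset_rfl (fun x _ => Finset.mem_univ _)
  intro s
  induction s using Finset.induction_on with
  | empty =>
    intro S' hS' _ hmem
    obtain ⟨x, hx⟩ := hS'.nonempty
    exact absurd (hmem x hx) (by simp)
  | @insert j s hj IH =>
    intro S' hS' hsub hmem
    rcases dii_dichotomy hS' (g ⁻¹' {j}) with ⟨T, hT, hTd⟩ | hd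
    · refine ⟨j, T, fun t ht => hsub (hT ht).1, hTd, fun t ht => (hT ht).2⟩
    · refine IH (S' \ g ⁻¹' {j}) hd (fun x hx => hsub hx.1) ?_
      rintro x ⟨hx1, hx2⟩
      have := hmem x hx1
      simp only [Finset.mem_insert] at this
      rcases this with h | h
      · exact absurd h hx2
      · exact h

variable (f : C → C → I)

/-- Set of colours realized by pairs in `A`. -/
def sigmaSet (A : Set C) : Set I :=
  {c : I | ∃ x ∈ A, ∃ y ∈ A, x < y ∧ f x y = c}

/-- A node: a point `m ∈ A` with a dense-in-itself set of points below it all coloured `l`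
into `m`, and a dense-in-itself set of points above it all coloured `r` from `m`. -/
def IsNode (A : Set C) (m : C) (l r : I) : Prop :=
  m ∈ A ∧
    (∃ V, V ⊆ A ∧ Dii V ∧ ∀ w ∈ V, w < m ∧ f w m = l) ∧
    (∃ V, V ⊆ A ∧ Dii V ∧ ∀ w ∈ V, m < w ∧ f m w = r)

/-- Values of nodes realizable inside `A`. -/
def nodeSet (A : Set C) : Set (I × I) :=
  {p : I × I | ∃ m, IsNode f A m p.1 p.2}

lemma sigmaSet_mono {A B : Set C} (h : B ⊆ A) : sigmaSet f B ⊆ sigmaSet f A := by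
  rintro c ⟨x, hx, y, hy, hxy, hc⟩
  exact ⟨x, h hx, y, h hy, hxy, hc⟩

lemma nodeSet_mono {A B : Set C} (h : B ⊆ A) : nodeSet f B ⊆ nodeSet f A := by
  rintro ⟨l, r⟩ ⟨m, hm, ⟨V, hV, hVd, hVp⟩, ⟨V', hV', hV'd, hV'p⟩⟩
  exact ⟨m, h hm, ⟨V, hV.trans h, hVd, hVp⟩, ⟨V', hV'.trans h, hV'd, hV'p⟩⟩

/-- In any dense-in-itself set there is a node. -/
lemma exists_node [Finite I] {A : Set C} (hA : Dii A) :
    ∃ (m : C) (l r : I), IsNode f A m l r := by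
  obtain ⟨x, hx, y, hy, hxy⟩ := hA.1
  obtain ⟨q, hq, hq1, hq2⟩ := hA.2 x hx y hy hxy
  have h1 : Dii (A ∩ Ioo x q) := dii_inter_Ioo hA hx hq hq1
  have h2 : Dii (A ∩ Ioo q y) := dii_inter_Ioo hA hq hy hq2
  obtain ⟨l, T, hT, hTd, hTc⟩ := dii_partition (fun w => f w q) h1
  obtain ⟨r, T', hT', hT'd, hT'c⟩ := dii_partition (fun w => f q w) h2
  refine ⟨q, l, r, hq, ⟨T, fun t ht => (hT ht).1, hTd, fun w hw => ⟨(hT hw).2.2, hTc w hw⟩⟩,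
    ⟨T', fun t ht => (hT' ht).1, hT'd, fun w hw => ⟨(hT' hw).2.1, hT'c w hw⟩⟩⟩

/-- There is a dense-in-itself set `A₀` on which the realized colours and realizable node
values are stable under passing to dense-in-itself subsets. -/
lemma exists_minimal [Finite I] [DenselyOrdered C] [Nontrivial C] :
    ∃ A₀ : Set C, Dii A₀ ∧
      ∀ B, B ⊆ A₀ → Dii B → sigmaSet f B = sigmaSet f A₀ ∧ nodeSet f B = nodeSet f A₀ := by
  set μ : Set C → ℕ := fun A => (sigmaSet f A).ncard + (nodeSet f A).ncard with hμ
  set Ns : Set ℕ := {n | ∃ A, Dii A ∧ μ A = n} with hNs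
  have hne : Ns.Nonempty := ⟨μ univ, univ, dii_univ, rfl⟩
  obtain ⟨A₀, hA₀, hA₀μ⟩ := Nat.sInf_mem hne
  refine ⟨A₀, hA₀, ?_⟩
  intro B hBA hB
  have h1 : sigmaSet f B ⊆ sigmaSet f A₀ := sigmaSet_mono f hBA
  have h2 : nodeSet f B ⊆ nodeSet f A₀ := nodeSet_mono f hBA
  have hle : sInf Ns ≤ μ B := Nat.sInf_le ⟨B, hB, rfl⟩
  rw [← hA₀μ] at hle
  have f1 : (sigmaSet f B).ncard ≤ (sigmaSet f A₀).ncard :=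
    Set.ncard_le_ncard h1 (Set.toFinite _)
  have f2 : (nodeSet f B).ncard ≤ (nodeSet f A₀).ncard :=
    Set.ncard_le_ncard h2 (Set.toFinite _)
  simp only [hμ] at hle
  constructor
  · exact Set.eq_of_subset_of_ncard_le h1 (by omega) (Set.toFinite _)
  · exact Set.eq_of_subset_of_ncard_le h2 (by omega) (Set.toFinite _)

/-- Key construction: inside any dense-in-itself `W ⊆ A₀`, where the colour `e` is realized
in every dense-in-itself subset of `A₀`, there are a strictly descending and a strictly
ascending chain which are pairwise coloured `e`. -/
lemma lemmaM [Finite I] (hf : IsAdditiveColouring f) (A₀ : Set C) (e : I)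
    (hesig : ∀ B, B ⊆ A₀ → Dii B → ∃ x ∈ B, ∃ y ∈ B, x < y ∧ f x y = e)
    (W : Set C) (hW : Dii W) (hWA : W ⊆ A₀) :
    (∃ d : ℕ → C, StrictAnti d ∧ (∀ n, d n ∈ W) ∧ ∀ i j, i < j → f (d j) (d i) = e) ∧
    (∃ a : ℕ → C, StrictMono a ∧ (∀ n, a n ∈ W) ∧ ∀ i j, i < j → f (a i) (a j) = e) := by
  classical
  -- the one-step construction
  have step : ∀ B : {B : Set C // Dii B ∧ B ⊆ A₀},
      ∃ p : C × C × I × I × {B : Set C // Dii B ∧ B ⊆ A₀},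
        p.1 ∈ B.1 ∧ p.2.1 ∈ B.1 ∧ p.1 < p.2.1 ∧ f p.1 p.2.1 = e ∧
        p.2.2.2.2.1 ⊆ B.1 ∧
        ∀ w ∈ p.2.2.2.2.1, p.1 < w ∧ w < p.2.1 ∧ f p.1 w = p.2.2.1 ∧ f w p.2.1 = p.2.2.2.1 := by
    rintro ⟨B, hBd, hBA⟩
    obtain ⟨u, hu, v, hv, huv, huve⟩ := hesig B hBA hBd
    have hZ : Dii (B ∩ Ioo u v) := dii_inter_Ioo hBd hu hv huv
    obtain ⟨ab, T, hT, hTd, hTc⟩ :=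
      dii_partition (fun w => ((f u w, f w v) : I × I)) hZ
    refine ⟨(u, v, ab.1, ab.2, ⟨T, hTd, fun t ht => hBA (hT ht).1⟩), hu, hv, huv, huve,
      fun t ht => (hT ht).1, ?_⟩
    intro w hw
    have h1 := hT hw
    have h2 := hTc w hw
    refine ⟨h1.2.1, h1.2.2, ?_, ?_⟩
    · exact congrArg Prod.fst h2
    · exact congrArg Prod.snd h2
  choose st hst using step
  -- the recursion
  let seq : ℕ → {B : Set C // Dii B ∧ B ⊆ A₀} := fun n =>
    Nat.rec ⟨W, hW, hWA⟩ (fun _ p => (st p).2.2.2.2) n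
  let uu : ℕ → C := fun n => (st (seq n)).1
  let vv : ℕ → C := fun n => (st (seq n)).2.1
  let aa : ℕ → I := fun n => (st (seq n)).2.2.1
  let bb : ℕ → I := fun n => (st (seq n)).2.2.2.1
  have hseq : ∀ n, seq (n + 1) = (st (seq n)).2.2.2.2 := fun n => rfl
  have hu_mem : ∀ n, uu n ∈ (seq n).1 := fun n => (hst (seq n)).1
  have hv_mem : ∀ n, vv n ∈ (seq n).1 := fun n => (hst (seq n)).2.1
  have huv : ∀ n, uu n < vv n := fun n => (hst (seq n)).2.2.1
  have huve : ∀ n, f (uu n) (vv n) = e := fun n => (hst (seq n)).2.2.2.1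
  have hsub : ∀ n, (seq (n + 1)).1 ⊆ (seq n).1 := fun n => (hst (seq n)).2.2.2.2.1
  have hframe : ∀ n, ∀ w ∈ (seq (n + 1)).1,
      uu n < w ∧ w < vv n ∧ f (uu n) w = aa n ∧ f w (vv n) = bb n :=
    fun n => (hst (seq n)).2.2.2.2.2
  have hmono : ∀ k l, k ≤ l → (seq l).1 ⊆ (seq k).1 := by
    intro k l hkl
    induction l, hkl using Nat.le_induction with
    | base => exact subset_rfl
    | succ n hn ih => exact (hsub n).trans ih
  have hmem_step : ∀ p q, p < q → uu q ∈ (seq (p + 1)).1 ∧ vv q ∈ (seq (p + 1)).1 := by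
    intro p q hpq
    exact ⟨hmono (p + 1) q hpq (hu_mem q), hmono (p + 1) q hpq (hv_mem q)⟩
  -- pigeonhole on the frame colours
  obtain ⟨y, hy⟩ := Finite.exists_infinite_fiber (fun n => ((aa n, bb n) : I × I))
  have hKinf : {n | (aa n, bb n) = y}.Infinite := by
    have := Set.infinite_coe_iff.mp hy
    convert this using 2
    rfl
  have hKgt : ∀ a : ℕ, ∃ b ∈ {n | (aa n, bb n) = y}, a < b := by
    intro a
    by_contra hc
    push_neg at hc
    exact hKinf (Set.Finite.subset (Set.finite_Iic a) (fun n hn => le_of_not_gt fun h =>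
      absurd hn (by simpa using fun hy' => absurd h (not_lt.mpr (hc n hy')))))
  -- a strictly monotone enumeration of the fiber
  let φ : ℕ → ℕ := fun n => Nat.rec (choose (hKgt 0)) (fun _ p => choose (hKgt p)) n
  have hφ0 : φ 0 ∈ {n | (aa n, bb n) = y} := (choose_spec (hKgt 0)).1
  have hφsucc : ∀ n, φ (n + 1) ∈ {n | (aa n, bb n) = y} ∧ φ n < φ (n + 1) := by
    intro n
    exact ⟨(choose_spec (hKgt (φ n))).1, (choose_spec (hKgt (φ n))).2⟩
  have hφmem : ∀ n, (aa (φ n), bb (φ n)) = y := by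
    intro n
    cases n with
    | zero => exact hφ0
    | succ m => exact (hφsucc m).1
  have hφmono : StrictMono φ := strictMono_nat_of_lt_succ fun n => (hφsucc n).2
  set a₀ : I := y.1
  set b₀ : I := y.2
  have haφ : ∀ n, aa (φ n) = a₀ := fun n => congrArg Prod.fst (hφmem n)
  have hbφ : ∀ n, bb (φ n) = b₀ := fun n => congrArg Prod.snd (hφmem n)
  set U : ℕ → C := fun n => uu (φ n)
  set V : ℕ → C := fun n => vv (φ n)
  -- ordering and colour facts
  have hUV : ∀ n, U n < V n := fun n => huv (φ n)
  have hUVe : ∀ n, f (U n) (V n) = e := fun n => huve (φ n)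
  have hfr : ∀ p q, p < q →
      (U p < U q ∧ U q < V p ∧ f (U p) (U q) = a₀ ∧ f (U q) (V p) = b₀) ∧
      (U p < V q ∧ V q < V p ∧ f (U p) (V q) = a₀ ∧ f (V q) (V p) = b₀) := by
    intro p q hpq
    have hφpq : φ p < φ q := hφmono hpq
    obtain ⟨hUm, hVm⟩ := hmem_step (φ p) (φ q) hφpq
    have h1 := hframe (φ p) _ hUm
    have h2 := hframe (φ p) _ hVm
    refine ⟨⟨h1.1, h1.2.1, ?_, ?_⟩, ⟨h2.1, h2.2.1, ?_, ?_⟩⟩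
    · rw [h1.2.2.1, haφ]
    · rw [h1.2.2.2, hbφ]
    · rw [h2.2.2.1, haφ]
    · rw [h2.2.2.2, hbφ]
  have hUmono : StrictMono U := by
    intro p q hpq
    exact ((hfr p q hpq).1).1
  have hVanti : StrictAnti V := by
    intro p q hpq
    exact ((hfr p q hpq).2).2.1
  -- a witness point inside the first frame
  obtain ⟨w₀, hw₀⟩ := (seq (φ 0 + 1)).2.1.nonempty
  have hw := hframe (φ 0) w₀ hw₀
  have hw_a : f (U 0) w₀ = a₀ := by rw [hw.2.2.1, haφ]
  have hw_b : f w₀ (V 0) = b₀ := by rw [hw.2.2.2, hbφ]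
  -- derive e = a₀ using the two triples (U0, w₀, V0) and (U0, V2, V1)
  have hea : e = a₀ := by
    have t2a : f (U 0) (V 2) = a₀ := ((hfr 0 2 (by omega)).2).2.2.1
    have t2b : f (V 2) (V 1) = b₀ := by
      have := ((hfr 1 2 (by omega)).2).2.2.2
      exact this
    have t2c : f (U 0) (V 1) = a₀ := ((hfr 0 1 (by omega)).2).2.2.1
    have horder : U 0 < V 2 := ((hfr 0 2 (by omega)).2).1
    have horder2 : V 2 < V 1 := hVanti (by omega : (1:ℕ) < 2)
    have := hf (U 0) w₀ (V 0) (U 0) (V 2) (V 1) hw.1 hw.2.1 horder horder2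
      (hw_a.trans t2a.symm) (hw_b.trans t2b.symm)
    rw [hUVe 0, t2c] at this
    exact this
  -- derive e = b₀ using the triples (U0, w₀, V0) and (U1, U2, V0)
  have heb : e = b₀ := by
    have t3a : f (U 1) (U 2) = a₀ := ((hfr 1 2 (by omega)).1).2.2.1
    have t3b : f (U 2) (V 0) = b₀ := ((hfr 0 2 (by omega)).1).2.2.2
    have t3c : f (U 1) (V 0) = b₀ := ((hfr 0 1 (by omega)).1).2.2.2
    have horder : U 1 < U 2 := hUmono (by omega : (1:ℕ) < 2)
    have horder2 : U 2 < V 0 := ((hfr 0 2 (by omega)).1).2.1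
    have := hf (U 0) w₀ (V 0) (U 1) (U 2) (V 0) hw.1 hw.2.1 horder horder2
      (hw_a.trans t3a.symm) (hw_b.trans t3b.symm)
    rw [hUVe 0, t3c] at this
    exact this
  -- membership in W
  have hUW : ∀ n, U n ∈ W := by
    intro n
    have : (seq (φ n)).1 ⊆ (seq 0).1 := hmono 0 (φ n) (Nat.zero_le _)
    exact this (hu_mem (φ n))
  have hVW : ∀ n, V n ∈ W := by
    intro n
    have : (seq (φ n)).1 ⊆ (seq 0).1 := hmono 0 (φ n) (Nat.zero_le _)
    exact this (hv_mem (φ n))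
  refine ⟨⟨V, hVanti, hVW, ?_⟩, ⟨U, hUmono, hUW, ?_⟩⟩
  · intro i j hij
    rw [heb]
    exact ((hfr i j hij).2).2.2.2
  · intro i j hij
    rw [hea]
    exact ((hfr i j hij).1).2.2.1

end Aux

/-- A dense linear order with an additive colouring by finitely many colours contains a
homogeneous subset of order type ℤ. -/
theorem dense_homogeneous_int {C I : Type*} [LinearOrder C] [DenselyOrdered C]
    [Nontrivial C] [Finite I] (f : C → C → I) (hf : IsAdditiveColouring f) :
    ∃ i₀ : I, ∃ g : ℤ → C, StrictMono g ∧ ∀ i j : ℤ, i < j → f (g i) (g j) = i₀ := by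
  classical
  obtain ⟨A₀, hA₀, hmin⟩ := exists_minimal f
  obtain ⟨m, l, r, hN⟩ := exists_node f hA₀
  obtain ⟨hmA, ⟨Vm, hVmA, hVmD, hVm⟩, ⟨Vp, hVpA, hVpD, hVp⟩⟩ := hN
  have hlrA₀ : (l, r) ∈ nodeSet f A₀ :=
    ⟨m, hmA, ⟨Vm, hVmA, hVmD, hVm⟩, ⟨Vp, hVpA, hVpD, hVp⟩⟩
  -- a node with the same value inside the left witness
  have hlrVm : (l, r) ∈ nodeSet f Vm := by
    rw [(hmin Vm hVmA hVmD).2]; exact hlrA₀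
  have hlrVp : (l, r) ∈ nodeSet f Vp := by
    rw [(hmin Vp hVpA hVpD).2]; exact hlrA₀
  obtain ⟨m', hm'Vm, ⟨Vm', hVm'sub, hVm'D, hVm'⟩, ⟨Vp', hVp'sub, hVp'D, hVp'⟩⟩ := hlrVm
  obtain ⟨m'', hm''Vp, ⟨Vm'', hVm''sub, hVm''D, hVm''⟩, -⟩ := hlrVp
  obtain ⟨z', hz'⟩ := hVp'D.nonempty
  obtain ⟨z'', hz''⟩ := hVm''D.nonempty
  -- derive l = r using additivity on the two triples (m', z', m) and (m, z'', m'')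
  have hlr_eq : l = r := by
    have h1 := hVp' z' hz'                  -- m' < z', f m' z' = r
    have h2 := hVm z' (hVp'sub hz')          -- z' < m, f z' m = l
    have h3 := hVm m' hm'Vm                  -- m' < m, f m' m = l
    have h4 := hVm'' z'' hz''                -- z'' < m'', f z'' m'' = l
    have h5 := hVp z'' (hVm''sub hz'')       -- m < z'', f m z'' = r
    have h6 := hVp m'' hm''Vp                -- m < m'', f m m'' = r
    have := hf m' z' m m z'' m'' h1.1 h2.1 h5.1 h4.1
      (h1.2.trans h5.2.symm) (h2.2.trans h4.2.symm)
    rw [h3.2, h6.2] at this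
    exact this
  set e : I := l with he
  -- e is realized in every dense-in-itself subset of A₀
  have heA₀ : e ∈ sigmaSet f A₀ := by
    obtain ⟨w, hw⟩ := hVmD.nonempty
    exact ⟨w, hVmA hw, m, hmA, (hVm w hw).1, (hVm w hw).2⟩
  have hesig : ∀ B, B ⊆ A₀ → Dii B → ∃ x ∈ B, ∃ y ∈ B, x < y ∧ f x y = e := by
    intro B hBA hB
    have : e ∈ sigmaSet f B := by rw [(hmin B hBA hB).1]; exact heA₀
    exact this
  -- descending chain inside Vm, ascending chain inside Vp
  obtain ⟨⟨dch, hdanti, hdmem, hdpair⟩, -⟩ := lemmaM f hf A₀ e hesig Vm hVmD hVmA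
  obtain ⟨-, ach, hamono, hamem, hapair⟩ := lemmaM f hf A₀ e hesig Vp hVpD hVpA
  -- basic colour facts
  have hdm : ∀ n, dch n < m ∧ f (dch n) m = e := fun n => hVm _ (hdmem n)
  have hma : ∀ n, m < ach n ∧ f m (ach n) = e := by
    intro n
    have := hVp _ (hamem n)
    exact ⟨this.1, by rw [this.2, ← hlr_eq]⟩
  have hcross : ∀ a b, f (dch a) (ach b) = e := by
    intro a b
    have t1 : f (ach 0) (ach 1) = e := hapair 0 1 (by omega)
    have t2 : f (ach 1) (ach 2) = e := hapair 1 2 (by omega)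
    have t3 : f (ach 0) (ach 2) = e := hapair 0 2 (by omega)
    have := hf (dch a) m (ach b) (ach 0) (ach 1) (ach 2)
      (hdm a).1 (hma b).1 (hamono (by omega : (0:ℕ) < 1)) (hamono (by omega : (1:ℕ) < 2))
      ((hdm a).2.trans t1.symm) ((hma b).2.trans t2.symm)
    rw [t3] at this
    exact this
  -- the ℤ-indexed chain
  refine ⟨e, fun n => if n < 0 then dch (-(n+1)).toNat else if n = 0 then m
    else ach (n-1).toNat, ?_, ?_⟩
  · intro i j hij
    by_cases hi : i < 0
    · by_cases hj : j < 0
      · simp only [if_pos hi, if_pos hj]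
        exact hdanti (by omega)
      · by_cases hj0 : j = 0
        · simp only [if_pos hi, if_neg hj, if_pos hj0]
          exact (hdm _).1
        · simp only [if_pos hi, if_neg hj, if_neg hj0]
          exact ((hdm _).1).trans (hma _).1
    · have hi0 : 0 ≤ i := by omega
      by_cases hieq : i = 0
      · have hj : ¬ j < 0 := by omega
        have hj0 : ¬ j = 0 := by omega
        simp only [if_neg (by omega : ¬ i < 0), if_pos hieq, if_neg hj, if_neg hj0]
        exact (hma _).1
      · have hj : ¬ j < 0 := by omega
        have hj0 : ¬ j = 0 := by omega
        simp only [if_neg (by omega : ¬ i < 0), if_neg hieq, if_neg hj, if_neg hj0]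
        exact hamono (by omega)
  · intro i j hij
    by_cases hi : i < 0
    · by_cases hj : j < 0
      · simp only [if_pos hi, if_pos hj]
        exact hdpair _ _ (by omega)
      · by_cases hj0 : j = 0
        · simp only [if_pos hi, if_neg hj, if_pos hj0]
          exact (hdm _).2
        · simp only [if_pos hi, if_neg hj, if_neg hj0]
          exact hcross _ _
    · by_cases hieq : i = 0
      · have hj : ¬ j < 0 := by omega
        have hj0 : ¬ j = 0 := by omega
        simp only [if_neg (by omega : ¬ i < 0), if_pos hieq, if_neg hj, if_neg hj0]
        exact (hma _).2
      · have hj : ¬ j < 0 := by omega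
        have hj0 : ¬ j = 0 := by omega
        simp only [if_neg (by omega : ¬ i < 0), if_neg hieq, if_neg hj, if_neg hj0]
        exact hapair _ _ (by omega)
end

section
/- Let A be an infinite set, let l be a natural number, let P : Fin l → Set A, and let c be a function assigning to every nonempty subset S of A an element c(S) ∈ S. Then there exist a bijection e : A ≃ A such that for every i and every x ∈ A, x ∈ P i ↔ e x ∈ P i, and a nonempty subset S of A such that c(e '' S) ≠ e(c(S)). In other words, no choice function on the nonempty subsets of an infinite set is invariant under all permutations preserving finitely many given unary predicates. -/
/-!
By pigeonhole, the infinitely many points of `A` cannot all have distinct membership patterns in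
the finitely many sets `P i`, so two distinct points `a ≠ b` share one and their transposition
preserves every `P i`. It maps the pair `{a, b}` onto itself but moves both of its points, so it
moves the point chosen from `{a, b}`.
-/

open Equiv Set

theorem Equiv.swap_image_pair {α : Type*} [DecidableEq α] (a b : α) :
    swap a b '' {a, b} = {a, b} := by
  rw [image_pair, swap_apply_left, swap_apply_right, pair_comm]

theorem Equiv.exists_ne_swap_mem_iff {A ι : Type*} [DecidableEq A] [Infinite A] [Finite ι]
    (P : ι → Set A) : ∃ a b : A, a ≠ b ∧ ∀ (i : ι) (x : A), x ∈ P i ↔ swap a b x ∈ P i := by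
  let pattern (x : A) (i : ι) : Prop := x ∈ P i
  obtain ⟨a, b, hab, hpattern⟩ := Finite.exists_ne_map_eq_of_infinite pattern
  exact ⟨a, b, hab, fun i x => (eq_iff_iff.mp (congrFun (apply_swap_eq_self hpattern x) i)).symm⟩

theorem Equiv.swap_apply_ne_choice_pair {α : Type*} [DecidableEq α] {a b : α} (hab : a ≠ b)
    {c : Set α → α} (hc : c {a, b} ∈ ({a, b} : Set α)) :
    c (swap a b '' {a, b}) ≠ swap a b (c {a, b}) := by
  rw [swap_image_pair]
  exact (swap_apply_ne_self_iff.mpr ⟨hab, hc⟩).symm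

/-- No choice function on the nonempty subsets of an infinite set is invariant under all
permutations preserving finitely many given unary predicates. -/
theorem no_invariant_choice_of_infinite {A : Type*} [Infinite A] (l : ℕ)
    (P : Fin l → Set A) (c : Set A → A) (hc : ∀ S : Set A, S.Nonempty → c S ∈ S) :
    ∃ e : A ≃ A, (∀ (i : Fin l) (x : A), x ∈ P i ↔ e x ∈ P i) ∧
      ∃ S : Set A, S.Nonempty ∧ c (e '' S) ≠ e (c S) := by
  classical
  obtain ⟨a, b, hab, hswap⟩ := exists_ne_swap_mem_iff P
  exact ⟨swap a b, hswap, {a, b}, insert_nonempty a {b},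
    swap_apply_ne_choice_pair hab (hc _ (insert_nonempty a {b}))⟩
end

section
/- Let l be a natural number, let A be a set whose cardinality is strictly greater than 2^l, let P : Fin l → Set A, and let c be a function assigning to every nonempty subset S of A an element c(S) ∈ S. Then there exist a bijection e : A ≃ A such that for every i and every x ∈ A, x ∈ P i ↔ e x ∈ P i, and a nonempty subset S of A such that c(e '' S) ≠ e(c(S)). -/
/-!
Proof idea: the membership pattern `x ↦ {i | x ∈ P i}` takes at most `2 ^ l` values, so two
distinct points `a ≠ b` share it. The transposition of `a` and `b` then preserves every `P i`
and fixes the set `{a, b}`, but moves whichever of `a`, `b` is chosen from it.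
-/

open Cardinal Equiv

universe u v

theorem Cardinal.exists_ne_map_eq_of_lift_mk_lt {α : Type u} {β : Type v} (f : α → β)
    (h : lift.{u} #β < lift.{v} #α) : ∃ x y, x ≠ y ∧ f x = f y := by
  by_contra! hf
  exact (lift_mk_le_lift_mk_of_injective fun x y hxy ↦ by_contra (hf x y · hxy)).not_gt h

theorem exists_ne_forall_mem_iff_of_two_pow_lt {ι : Type v} {A : Type u} (P : ι → Set A)
    (h : lift.{u} (2 ^ #ι) < lift.{v} #A) : ∃ a b, a ≠ b ∧ ∀ i, a ∈ P i ↔ b ∈ P i := by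
  obtain ⟨a, b, hne, hab⟩ :=
    exists_ne_map_eq_of_lift_mk_lt (fun x ↦ {i | x ∈ P i}) (by rwa [mk_set])
  exact ⟨a, b, hne, fun i ↦ Set.ext_iff.mp hab i⟩

section Swap

variable {α : Type*} [DecidableEq α] {a b : α}

theorem Equiv.swap_apply_mem_iff {s : Set α} (hs : a ∈ s ↔ b ∈ s) (x : α) :
    swap a b x ∈ s ↔ x ∈ s :=
  Iff.of_eq (apply_swap_eq_self (v := (· ∈ s)) (propext hs) x)

theorem Equiv.image_swap_pair : swap a b '' {a, b} = {a, b} :=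
  (swap_bijOn_self (by simp)).image_eq

end Swap

/-- If `|A| > 2 ^ l` then no choice function on the nonempty subsets of `A` is invariant
under all permutations preserving `l` given unary predicates. -/
theorem no_invariant_choice_of_large {A : Type*} (l : ℕ)
    (hA : 2 ^ (l : Cardinal) < Cardinal.mk A)
    (P : Fin l → Set A) (c : Set A → A) (hc : ∀ S : Set A, S.Nonempty → c S ∈ S) :
    ∃ e : A ≃ A, (∀ (i : Fin l) (x : A), x ∈ P i ↔ e x ∈ P i) ∧
      ∃ S : Set A, S.Nonempty ∧ c (e '' S) ≠ e (c S) := by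
  classical
  obtain ⟨a, b, hne, hab⟩ := exists_ne_forall_mem_iff_of_two_pow_lt P
    (by rwa [mk_fin, lift_power, lift_two, lift_natCast, lift_uzero])
  have hpair : ({a, b} : Set A).Nonempty := Set.insert_nonempty a {b}
  refine ⟨swap a b, fun i x ↦ (swap_apply_mem_iff (hab i) x).symm, {a, b}, hpair, ?_⟩
  rw [image_swap_pair]
  exact (swap_apply_ne_self_iff.mpr ⟨hne, hc _ hpair⟩).symm
end

section
/- Let α be a linear order in which < is well-founded. Let S be a set of finite lists over α that is closed under prefixes (if l ∈ S and l' is a prefix of l then l' ∈ S), and suppose there is no sequence b : ℕ → S such that b n is a proper prefix of b (n+1) for every n (S has no infinite branch). Then the strict lexicographic order on S — where l is below l' if either l is a proper prefix of l', or at the first position where l and l' differ the entry of l is smaller — is well-founded on S. -/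
/-- `l` is strictly below `l'` in the lexicographic order on lists: either `l` is a proper
prefix of `l'`, or at the first position where they differ the entry of `l` is smaller. -/
def LexBelow {α : Type*} [LinearOrder α] (l l' : List α) : Prop :=
  (l <+: l' ∧ l ≠ l') ∨
    ∃ (p : List α) (a b : α), a < b ∧ (p ++ [a]) <+: l ∧ (p ++ [b]) <+: l'

section Aux

variable {α : Type*} [LinearOrder α]

/-- Entry read off from a prefix ending in `a`. -/
lemma getElem?_of_snoc_prefix {p : List α} {a : α} {l : List α} (h : (p ++ [a]) <+: l) :
    l[p.length]? = some a := by
  obtain ⟨t, rfl⟩ := h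
  rw [List.append_assoc, List.getElem?_append]
  simp

lemma getElem?_of_prefix {l l' : List α} (h : l <+: l') {k : ℕ} (hk : k < l.length) :
    l'[k]? = l[k]? := by
  obtain ⟨t, rfl⟩ := h
  rw [List.getElem?_append, if_pos hk]

lemma lexBelow_irrefl (l : List α) : ¬ LexBelow l l := by
  rintro (⟨-, h⟩ | ⟨p, a, b, hab, h1, h2⟩)
  · exact h rfl
  · have := (getElem?_of_snoc_prefix h1).symm.trans (getElem?_of_snoc_prefix h2)
    rw [Option.some_inj] at this
    exact absurd hab (by simp [this])

/-- Map a list entry into `WithBot α`. -/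
noncomputable def entry (l : List α) (k : ℕ) : WithBot α :=
  (l[k]?).elim ⊥ (fun a => (a : WithBot α))

lemma entry_le_of_lexBelow {l l' : List α} (h : LexBelow l l') {k : ℕ}
    (htake : l.take k = l'.take k) : entry l k ≤ entry l' k := by
  rcases h with ⟨hp, -⟩ | ⟨p, a, b, hab, h1, h2⟩
  · by_cases hk : k < l.length
    · rw [entry, entry, getElem?_of_prefix hp hk]
    · rw [entry, List.getElem?_eq_none (by omega)]
      exact bot_le
  · have ha := getElem?_of_snoc_prefix h1
    have hb := getElem?_of_snoc_prefix h2
    rcases lt_trichotomy p.length k with hlt | rfl | hgt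
    · exfalso
      have e1 : (l.take k)[p.length]? = l[p.length]? := List.getElem?_take_of_lt hlt
      have e2 : (l'.take k)[p.length]? = l'[p.length]? := List.getElem?_take_of_lt hlt
      rw [htake, e2, ha, hb, Option.some_inj] at e1
      exact absurd hab (by simp [e1])
    · rw [entry, entry, ha, hb]
      show (a : WithBot α) ≤ (b : WithBot α)
      exact_mod_cast hab.le
    · have hp : p <+: l := ((p.prefix_append [a]).trans h1)
      have hp' : p <+: l' := ((p.prefix_append [b]).trans h2)
      rw [entry, entry, getElem?_of_prefix hp hgt, getElem?_of_prefix hp' hgt]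

lemma take_succ_eq_of (l l' : List α) (k : ℕ) (htake : l.take k = l'.take k)
    (hget : l[k]? = l'[k]?) : l.take (k+1) = l'.take (k+1) := by
  rw [List.take_succ, List.take_succ, htake, hget]

end Aux

/-- The lexicographic ordering of a prefix-closed, well-founded tree of lists over a
well-founded linear order, with no infinite branch, is well-founded. -/
theorem lex_wellFoundedOn_of_no_infinite_branch {α : Type*} [LinearOrder α]
    [WellFoundedLT α] (S : Set (List α))
    (hpref : ∀ l ∈ S, ∀ l' : List α, l' <+: l → l' ∈ S)
    (hbranch : ¬ ∃ b : ℕ → List α, (∀ n, b n ∈ S) ∧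
        ∀ n, b n <+: b (n + 1) ∧ b n ≠ b (n + 1)) :
    S.WellFoundedOn LexBelow := by
  rw [Set.WellFoundedOn]
  by_contra hwf
  have hex : ∃ x : S, ¬ Acc (fun a b : S => LexBelow a.1 b.1) x := by
    by_contra h
    push_neg at h
    exact hwf ⟨h⟩
  obtain ⟨x0, hx0⟩ := hex
  have next : ∀ x : {a : S // ¬ Acc (fun a b : S => LexBelow a.1 b.1) a},
      ∃ y : {a : S // ¬ Acc (fun a b : S => LexBelow a.1 b.1) a}, LexBelow y.1.1 x.1.1 := by
    rintro ⟨x, hx⟩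
    obtain ⟨y, hy, hr⟩ := exists_not_acc_lt_of_not_acc hx
    exact ⟨⟨y, hy⟩, hr⟩
  choose F hF using next
  set f : ℕ → List α := fun n => ((F^[n] ⟨x0, hx0⟩).1 : List α) with hf
  have hfS : ∀ n, f n ∈ S := fun n => (F^[n] ⟨x0, hx0⟩).1.2
  have hdesc : ∀ n, LexBelow (f (n+1)) (f n) := by
    intro n
    simp only [hf, Function.iterate_succ_apply']
    exact hF _
  -- stabilization of `take k`
  have hstab : ∀ k, ∃ N, ∀ n, N ≤ n → (f n).take k = (f N).take k := by
    intro k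
    induction k with
    | zero => exact ⟨0, by simp⟩
    | succ k ih =>
      obtain ⟨N, hN⟩ := ih
      -- the k-th entries are antitone from N on
      have step : ∀ n, N ≤ n → entry (f (n+1)) k ≤ entry (f n) k := by
        intro n hn
        exact entry_le_of_lexBelow (hdesc n)
          (((hN (n+1)) (by omega)).trans ((hN n hn).symm))
      have chain : ∀ d n, N ≤ n → entry (f (n + d)) k ≤ entry (f n) k := by
        intro d
        induction d with
        | zero => intro n _; exact le_rfl
        | succ d ih =>
          intro n hn
          have h1 : entry (f (n + d + 1)) k ≤ entry (f (n + d)) k := step (n + d) (by omega)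
          rw [show n + (d + 1) = n + d + 1 by omega]
          exact h1.trans (ih n hn)
      obtain ⟨x, ⟨M, hMN, rfl⟩, hmin⟩ :=
        (wellFounded_lt (α := WithBot α)).has_min
          {x | ∃ m, N ≤ m ∧ entry (f m) k = x} ⟨entry (f N) k, N, le_rfl, rfl⟩
      refine ⟨M, fun n hn => ?_⟩
      have h1 : entry (f n) k = entry (f M) k := by
        have hle : entry (f n) k ≤ entry (f M) k := by
          obtain ⟨d, rfl⟩ := Nat.exists_eq_add_of_le hn
          exact chain d M hMN
        have hnm := hmin (entry (f n) k) ⟨n, by omega, rfl⟩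
        exact le_antisymm hle (not_lt.1 hnm)
      have h2 : (f n)[k]? = (f M)[k]? := by
        have hn' := (hN n (by omega))
        rcases h : (f n)[k]? with _ | a <;> rcases h' : (f M)[k]? with _ | b
        · rfl
        · exfalso
          rw [entry, entry, h, h'] at h1
          exact WithBot.bot_ne_coe (α := α) h1
        · exfalso
          rw [entry, entry, h, h'] at h1
          exact WithBot.coe_ne_bot (α := α) h1
        · rw [entry, entry, h, h'] at h1
          have hab : (a : WithBot α) = (b : WithBot α) := h1
          rw [WithBot.coe_injective hab]
      exact take_succ_eq_of _ _ k (((hN n (by omega))).trans ((hN M hMN).symm)) h2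
  choose N hNs using hstab
  set g : ℕ → List α := fun k => (f (N k)).take k with hg
  have key : ∀ k n, N k ≤ n → (f n).take k = g k := by
    intro k n hn; exact hNs k n hn
  apply hbranch
  refine ⟨g, fun k => hpref (f (N k)) (hfS (N k)) _ (List.take_prefix _ _), fun k => ?_⟩
  set n := max (N k) (N (k+1)) with hn
  have e1 : g k = (f n).take k := (key k n (le_max_left _ _)).symm
  have e2 : g (k+1) = (f n).take (k+1) := (key (k+1) n (le_max_right _ _)).symm
  constructor
  · rw [e1, e2]
    have := List.take_prefix k ((f n).take (k+1))
    rwa [List.take_take, min_eq_left (by omega)] at this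
  · intro heq
    -- then f is eventually constant, contradicting strict descent
    have hlen : ∀ m, n ≤ m → f m = g k := by
      intro m hm
      have a1 : (f m).take k = (f m).take (k+1) := by
        rw [key k m (le_trans (le_max_left _ _) hm),
          key (k+1) m (le_trans (le_max_right _ _) hm), ← heq]
      have : (f m)[k]?.toList = [] :=
        List.append_right_eq_self.mp (a1.trans List.take_succ).symm
      have hnone : (f m)[k]? = none := by
        rcases h : (f m)[k]? with _ | a
        · rfl
        · rw [h] at this; simp at this
      have hlen : (f m).length ≤ k := by
        by_contra hlt
        rw [List.getElem?_eq_getElem (by omega)] at hnone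
        simp at hnone
      rw [← key k m (le_trans (le_max_left _ _) hm), List.take_of_length_le hlen]
    have := hdesc n
    rw [hlen n le_rfl, hlen (n+1) (by omega)] at this
    exact lexBelow_irrefl _ this
end

section
/- Let n ≥ 1, let I be a finite set with |I| < n, let C be a linear order admitting an order embedding of L_n, and let f be an additive colouring of C by I. Then there exist i₀ ∈ I and a strictly monotone map g : ℤ → C such that f(g i, g j) = i₀ for all integers i < j; that is, C contains a homogeneous subset of order type ℤ. -/
/-- The alternating lexicographic order on `Fin n → ℕ` (the order of the leaves of the
model `M^n`): `x < y` iff at the least coordinate `k` where they differ, `x k < y k`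
when `k` is even and `y k < x k` when `k` is odd. -/
def AltLexLt {n : ℕ} (x y : Fin n → ℕ) : Prop :=
  ∃ k : Fin n, (∀ j : Fin n, j < k → x j = y j) ∧
    (if Even (k : ℕ) then x k < y k else y k < x k)

namespace AltAux

/-- Least-differing-coordinate witness. -/
def LD {n : ℕ} (x y : Fin n → ℕ) (k : Fin n) : Prop :=
  (∀ j : Fin n, j < k → x j = y j) ∧ x k ≠ y k

theorem LD.symm {n : ℕ} {x y : Fin n → ℕ} {k : Fin n} (h : LD x y k) : LD y x k :=
  ⟨fun j hj => (h.1 j hj).symm, fun e => h.2 e.symm⟩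

theorem altLex_of_LD_even {n : ℕ} {x y : Fin n → ℕ} {k : Fin n}
    (h : LD x y k) (hk : Even (k : ℕ)) (hlt : x k < y k) : AltLexLt x y :=
  ⟨k, h.1, by simp [hk, hlt]⟩

theorem altLex_of_LD_odd {n : ℕ} {x y : Fin n → ℕ} {k : Fin n}
    (h : LD x y k) (hk : ¬ Even (k : ℕ)) (hlt : y k < x k) : AltLexLt x y :=
  ⟨k, h.1, by simp [hk, hlt]⟩

theorem exists_LD {n : ℕ} {x y : Fin n → ℕ} (h : AltLexLt x y) :
    ∃ k : Fin n, LD x y k ∧ (if Even (k : ℕ) then x k < y k else y k < x k) := by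
  obtain ⟨k, hb, hc⟩ := h
  refine ⟨k, ⟨hb, ?_⟩, hc⟩
  by_cases he : Even (k : ℕ) <;> simp [he] at hc <;> omega

theorem LD_unique {n : ℕ} {x y : Fin n → ℕ} {k k' : Fin n}
    (h : LD x y k) (h' : LD x y k') : k = k' := by
  rcases lt_trichotomy k k' with hlt | he | hgt
  · exact absurd (h'.1 k hlt) h.2
  · exact he
  · exact absurd (h.1 k' hgt) h'.2

/-- The witness in an `AltLexLt` proof is the least differing coordinate. -/
theorem altLex_LD_elim {n : ℕ} {x y : Fin n → ℕ} {k : Fin n}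
    (h : AltLexLt x y) (hld : LD x y k) :
    if Even (k : ℕ) then x k < y k else y k < x k := by
  obtain ⟨k', hld', hc⟩ := exists_LD h
  rwa [LD_unique hld hld']

theorem altLex_irrefl {n : ℕ} (x : Fin n → ℕ) : ¬ AltLexLt x x := by
  rintro ⟨k, -, hc⟩
  by_cases he : Even (k : ℕ) <;> simp [he] at hc

theorem altLex_asymm {n : ℕ} {x y : Fin n → ℕ} (h : AltLexLt x y) (h' : AltLexLt y x) : False := by
  obtain ⟨k, hld, hc⟩ := exists_LD h
  have := altLex_LD_elim h' hld.symm
  by_cases he : Even (k : ℕ) <;> simp [he] at hc this <;> omega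

/-- Recursion structure of the alternating order: branches by the head (ascending),
ties broken by the *reversed* alternating order on tails. -/
theorem altLex_cons_iff {n : ℕ} {c d : ℕ} {u v : Fin n → ℕ} :
    AltLexLt (Fin.cons c u) (Fin.cons d v) ↔ c < d ∨ (c = d ∧ AltLexLt v u) := by
  constructor
  · rintro ⟨k, hb, hc⟩
    induction k using Fin.cases with
    | zero => simp at hc; exact Or.inl hc
    | succ j =>
      have hcd : c = d := hb 0 (Fin.succ_pos j)
      refine Or.inr ⟨hcd, ⟨j, fun j' hj' => (hb j'.succ (by simpa [Fin.succ_lt_succ_iff] using hj')).symm, ?_⟩⟩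
      have hval : ((j.succ : Fin (n+1)) : ℕ) = (j : ℕ) + 1 := Fin.val_succ j
      by_cases he : Even (j : ℕ)
      · have : ¬ Even ((j.succ : Fin (n+1)) : ℕ) := by simp [hval, Nat.even_add_one, he]
        simp only [this, if_false] at hc
        simpa [he] using hc
      · have : Even ((j.succ : Fin (n+1)) : ℕ) := by simp [hval, Nat.even_add_one, he]
        simp only [this, if_true] at hc
        simpa [he] using hc
  · rintro (hcd | ⟨hcd, k, hb, hc⟩)
    · exact ⟨0, by simp [Fin.pos_iff_ne_zero], by simpa using hcd⟩
    · refine ⟨k.succ, ?_, ?_⟩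
      · intro j hj
        induction j using Fin.cases with
        | zero => simpa using hcd
        | succ j' => simpa using (hb j' (by simpa [Fin.succ_lt_succ_iff] using hj)).symm
      · have hval : ((k.succ : Fin (n+1)) : ℕ) = (k : ℕ) + 1 := Fin.val_succ k
        by_cases he : Even (k : ℕ)
        · have h2 : ¬ Even ((k.succ : Fin (n+1)) : ℕ) := by simp [hval, Nat.even_add_one, he]
          simp only [h2, if_false]
          simpa [he] using hc
        · have h2 : Even ((k.succ : Fin (n+1)) : ℕ) := by simp [hval, Nat.even_add_one, he]
          simp only [h2, if_true]
          simpa [he] using hc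

theorem LD_cons_succ {n : ℕ} {c : ℕ} {u v : Fin n → ℕ} {k : Fin n}
    (h : LD u v k) : LD (Fin.cons c u) (Fin.cons c v) k.succ := by
  constructor
  · intro j hj
    induction j using Fin.cases with
    | zero => simp
    | succ j' => simpa using h.1 j' (by simpa [Fin.succ_lt_succ_iff] using hj)
  · simpa using h.2

theorem LD_cons_zero {n : ℕ} {c d : ℕ} {u v : Fin n → ℕ} (h : c ≠ d) :
    LD (Fin.cons c u) (Fin.cons d v) 0 := by
  refine ⟨fun j hj => absurd hj (by simp [Fin.pos_iff_ne_zero, Fin.le_zero_iff]), by simpa using h⟩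

/-- Decompose an `LD` fact over `Fin (n+1)`. -/
theorem LD_elim_cons {n : ℕ} {x y : Fin (n+1) → ℕ} {k : Fin n}
    (h : LD x y k.succ) : x 0 = y 0 ∧ LD (Fin.tail x) (Fin.tail y) k := by
  refine ⟨h.1 0 (Fin.succ_pos k), ⟨fun j hj => h.1 j.succ (by simpa [Fin.succ_lt_succ_iff] using hj), h.2⟩⟩

end AltAux
namespace AltAux2

/-- Pigeonhole: any sequence into a finite type has a constant subsequence. -/
theorem exists_const_subseq {I : Type*} [Finite I] (g : ℕ → I) :
    ∃ (φ : ℕ → ℕ) (v : I), StrictMono φ ∧ ∀ k, g (φ k) = v := by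
  obtain ⟨v, hv⟩ := Finite.exists_infinite_fiber g
  have hinf : {m : ℕ | g m = v}.Infinite := by
    rw [← Set.infinite_coe_iff]
    convert hv using 2
    rfl
  exact ⟨Nat.nth (fun m => g m = v), v, Nat.nth_strictMono hinf,
    fun k => Nat.nth_mem_of_infinite hinf k⟩

/-- Auxiliary nested subsequence scheme for Ramsey. -/
def ramSeq (φf : (ℕ → ℕ) → ℕ → ℕ) : ℕ → (ℕ → ℕ)
  | 0 => id
  | (k+1) => fun m => ramSeq φf k (φf (ramSeq φf k) m + 1)

/-- Infinite Ramsey theorem for pairs, sequence form. -/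
theorem ramsey_pairs {I : Type*} [Finite I] (W : ℕ → ℕ → I) (_hI : Nonempty I) :
    ∃ (ψ : ℕ → ℕ) (i₀ : I), StrictMono ψ ∧ ∀ i j, i < j → W (ψ i) (ψ j) = i₀ := by
  classical
  -- sequence of nested strictly monotone maps
  choose φf vf hφf hvf using fun (h : ℕ → ℕ) => exists_const_subseq (fun m => W (h 0) (h (m+1)))
  set S : ℕ → (ℕ → ℕ) := ramSeq φf with hS
  have hSmono : ∀ k, StrictMono (S k) := by
    intro k
    induction k with
    | zero => exact strictMono_id
    | succ k ih =>
      intro a b hab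
      have h1 : φf (S k) a < φf (S k) b := (hφf (S k)) hab
      show S k (φf (S k) a + 1) < S k (φf (S k) b + 1)
      exact ih (by omega)
  -- every value of `S (k+d)` for `d ≥ 1` is a value of `S (k+1)`
  have hSub : ∀ k d m, ∃ m', S (k + 1 + d) m = S (k+1) m' := by
    intro k d
    induction d with
    | zero => exact fun m => ⟨m, rfl⟩
    | succ d ih =>
      intro m
      exact ih (φf (S (k+1+d)) m + 1)
  set b : ℕ → ℕ := fun k => S k 0 with hb
  have hbmono : StrictMono b := by
    apply strictMono_nat_of_lt_succ
    intro k
    show S k 0 < S k (φf (S k) 0 + 1)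
    exact hSmono k (by omega)
  have hbcol : ∀ k j, k < j → W (b k) (b j) = vf (S k) := by
    intro k j hkj
    obtain ⟨d, hd⟩ : ∃ d, j = k + 1 + d := ⟨j - (k+1), by omega⟩
    subst hd
    obtain ⟨m', hm'⟩ := hSub k d 0
    show W (S k 0) (S (k+1+d) 0) = vf (S k)
    rw [hm']
    show W (S k 0) (S k (φf (S k) m' + 1)) = vf (S k)
    exact hvf (S k) m'
  obtain ⟨φ', i₀, hφ', hc⟩ := exists_const_subseq (fun k => vf (S k))
  refine ⟨b ∘ φ', i₀, hbmono.comp hφ', fun i j hij => ?_⟩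
  have := hbcol (φ' i) (φ' j) (hφ' hij)
  simp only [Function.comp] at *
  rw [this, hc]

end AltAux2

namespace AltAux3
open AltAux AltAux2

/-- Point Ramsey: any finite colouring of the points of `L_n` is constant on a
sub-copy (an order- and scale-preserving self-embedding). -/
theorem point_ramsey {I : Type*} [Finite I] [Nonempty I] :
    ∀ (n : ℕ) (κ : (Fin n → ℕ) → I),
    ∃ (e : (Fin n → ℕ) → (Fin n → ℕ)) (v : I),
      (∀ u u', AltLexLt u u' → AltLexLt (e u) (e u')) ∧
      (∀ u u' k, LD u u' k → LD (e u) (e u') k) ∧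
      (∀ u, κ (e u) = v) := by
  intro n
  induction n with
  | zero =>
    intro κ
    refine ⟨id, κ default, fun u u' h => h, fun u u' k h => h, fun u => ?_⟩
    congr 1
    exact funext fun i => i.elim0
  | succ n IH =>
    intro κ
    choose e ev he hLD hv using fun c : ℕ => IH (fun u => κ (Fin.cons c u))
    obtain ⟨φ, v, hφ, hvv⟩ := exists_const_subseq ev
    refine ⟨fun x => Fin.cons (φ (x 0)) (e (φ (x 0)) (Fin.tail x)), v, ?_, ?_, ?_⟩
    · intro u u' h
      rw [← Fin.cons_self_tail u, ← Fin.cons_self_tail u'] at h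
      rcases altLex_cons_iff.1 h with hlt | ⟨heq, htail⟩
      · exact altLex_cons_iff.2 (Or.inl (hφ hlt))
      · show AltLexLt (Fin.cons (φ (u 0)) (e (φ (u 0)) (Fin.tail u)))
          (Fin.cons (φ (u' 0)) (e (φ (u' 0)) (Fin.tail u')))
        rw [← heq]
        exact altLex_cons_iff.2 (Or.inr ⟨rfl, he _ _ _ htail⟩)
    · intro u u' k h
      induction k using Fin.cases with
      | zero =>
        have hne : u 0 ≠ u' 0 := h.2
        exact LD_cons_zero (fun hc => hne (hφ.injective hc))
      | succ k' =>
        have h0 : u 0 = u' 0 := h.1 0 (Fin.succ_pos k')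
        have htail : LD (Fin.tail u) (Fin.tail u') k' :=
          ⟨fun j hj => h.1 j.succ (by simpa [Fin.succ_lt_succ_iff] using hj), h.2⟩
        show LD (Fin.cons (φ (u 0)) (e (φ (u 0)) (Fin.tail u)))
          (Fin.cons (φ (u' 0)) (e (φ (u' 0)) (Fin.tail u'))) k'.succ
        rw [← h0]
        exact LD_cons_succ (hLD _ _ _ _ htail)
    · intro u
      rw [hv, hvv]

end AltAux3

namespace AltMain
open AltAux AltAux2 AltAux3

universe u

variable {I : Type*}

/-- `P` maps the alternating order strictly monotonically into `C`. -/
def AltMono {n : ℕ} {C : Type u} [Preorder C] (P : (Fin n → ℕ) → C) : Prop :=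
  ∀ x y, AltLexLt x y → P x < P y

/-- The colouring of pairs of the copy depends only on the least differing coordinate. -/
def Unif {n : ℕ} {C : Type u} (f : C → C → I) (P : (Fin n → ℕ) → C) (γ : Fin n → I) : Prop :=
  ∀ x y k, AltLexLt x y → LD x y k → f (P x) (P y) = γ k

theorem dual_additive {C : Type u} [LinearOrder C] {f : C → C → I}
    (hf : IsAdditiveColouring f) :
    IsAdditiveColouring (C := Cᵒᵈ) (fun a b => f (OrderDual.ofDual b) (OrderDual.ofDual a)) := by
  intro x₁ y₁ z₁ x₂ y₂ z₂ h₁ h₂ h₃ h₄ e₁ e₂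
  exact hf (OrderDual.ofDual z₁) (OrderDual.ofDual y₁) (OrderDual.ofDual x₁)
    (OrderDual.ofDual z₂) (OrderDual.ofDual y₂) (OrderDual.ofDual x₂) h₂ h₁ h₄ h₃ e₂ e₁

theorem uniformize [Finite I] :
    ∀ (n : ℕ) {C : Type u} [LinearOrder C] (f : C → C → I),
      IsAdditiveColouring f → ∀ (p : (Fin n → ℕ) → C), AltMono p →
      ∃ (P : (Fin n → ℕ) → C) (γ : Fin n → I),
        (∀ x, ∃ u, P x = p u) ∧ AltMono P ∧ Unif f P γ := by
  intro n
  induction n with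
  | zero =>
    intro C _ f _ p hp
    exact ⟨p, fun k => k.elim0, fun x => ⟨x, rfl⟩, hp, fun x y k _ _ => k.elim0⟩
  | succ n IH =>
    intro C instC f hf p hp
    classical
    have hNI : Nonempty I := ⟨f (p default) (p default)⟩
    have hq : ∀ c : ℕ,
        AltMono (C := Cᵒᵈ) (fun u : Fin n → ℕ => OrderDual.toDual (p (Fin.cons c u))) := by
      intro c u v huv
      show OrderDual.toDual (p (Fin.cons c u)) < OrderDual.toDual (p (Fin.cons c v))
      rw [OrderDual.toDual_lt_toDual]
      exact hp _ _ (altLex_cons_iff.2 (Or.inr ⟨rfl, huv⟩))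
    choose Pd γv hrange hmono hunif using fun c : ℕ =>
      IH (C := Cᵒᵈ) (fun a b => f (OrderDual.ofDual b) (OrderDual.ofDual a))
        (dual_additive hf) (fun u => OrderDual.toDual (p (Fin.cons c u))) (hq c)
    obtain ⟨φ₀, γB, hφ₀, hγB⟩ := exists_const_subseq γv
    set B : ℕ → (Fin n → ℕ) → C := fun i u => OrderDual.ofDual (Pd (φ₀ i) u) with hBdef
    have hBrange : ∀ i u, ∃ w, B i u = p (Fin.cons (φ₀ i) w) := by
      intro i u
      obtain ⟨w, hw⟩ := hrange (φ₀ i) u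
      exact ⟨w, congrArg OrderDual.ofDual hw⟩
    have hBanti : ∀ i {a b : Fin n → ℕ}, AltLexLt a b → B i b < B i a := by
      intro i a b h
      exact hmono (φ₀ i) a b h
    have hBunif : ∀ i {a b : Fin n → ℕ} {k}, AltLexLt a b → LD a b k →
        f (B i b) (B i a) = γB k := by
      intro i a b k h hld
      have := hunif (φ₀ i) a b k h hld
      rw [hγB] at this
      exact this
    have hBlt : ∀ {i l}, i < l → ∀ (u v : Fin n → ℕ), B i u < B l v := by
      intro i l hil u v
      obtain ⟨w, hw⟩ := hBrange i u
      obtain ⟨w', hw'⟩ := hBrange l v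
      rw [hw, hw']
      exact hp _ _ (altLex_cons_iff.2 (Or.inl (hφ₀ hil)))
    obtain ⟨B', W, hB'range, hB'anti, hB'unif, hB'cross⟩ :
        ∃ (B' : ℕ → (Fin n → ℕ) → C) (W : ℕ → ℕ → I),
          (∀ i u, ∃ w, B' i u = p (Fin.cons (φ₀ i) w)) ∧
          (∀ i (a b : Fin n → ℕ), AltLexLt a b → B' i b < B' i a) ∧
          (∀ i (a b : Fin n → ℕ) (k : Fin n), AltLexLt a b → LD a b k →
            f (B' i b) (B' i a) = γB k) ∧
          (∀ i l, i < l → ∀ u v, f (B' i u) (B' l v) = W i l) := by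
      rcases Nat.eq_zero_or_pos n with hn | hn
      · subst hn
        refine ⟨B, fun i l => f (B i default) (B l default),
          hBrange, fun i a b h => hBanti i h, fun i a b k h hld => hBunif i h hld, ?_⟩
        intro i l _ u v
        rw [Subsingleton.elim u default, Subsingleton.elim v default]
      · set z : Fin n := ⟨0, hn⟩ with hz
        have hzval : (z : ℕ) = 0 := rfl
        have hnotltz : ∀ m : Fin n, ¬ m < z := by
          intro m hm
          rw [Fin.lt_iff_val_lt_val, hzval] at hm
          omega
        set δ : ℕ → (Fin n → ℕ) := fun j m => if m = z then j else 0 with hδ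
        have hδz : ∀ j, δ j z = j := by intro j; simp [hδ]
        have hδLD : ∀ {j j'}, j ≠ j' → LD (δ j) (δ j') z := by
          intro j j' hjj
          exact ⟨fun m hm => absurd hm (hnotltz m), by rw [hδz, hδz]; exact hjj⟩
        have hδalt : ∀ {j j'}, j < j' → AltLexLt (δ j) (δ j') := by
          intro j j' hjj
          refine altLex_of_LD_even (hδLD (Nat.ne_of_lt hjj)) (by rw [hzval]; exact Even.zero) ?_
          rw [hδz, hδz]; exact hjj
        have hvδ : ∀ (v : Fin n → ℕ) {j}, v z < j → AltLexLt v (δ j) ∧ LD v (δ j) z := by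
          intro v j hj
          have hld : LD v (δ j) z :=
            ⟨fun m hm => absurd hm (hnotltz m), by rw [hδz]; omega⟩
          exact ⟨altLex_of_LD_even hld (by rw [hzval]; exact Even.zero) (by rw [hδz]; omega), hld⟩
        set w : ℕ → ℕ → C := fun l j => B l (δ j) with hwdef
        set g : I := γB z with hgdef
        have hwlt : ∀ l {j j'}, j < j' → w l j' < w l j := by
          intro l j j' h
          exact hBanti l (hδalt h)
        have hwcol : ∀ l {j j'}, j < j' → f (w l j') (w l j) = g := by
          intro l j j' h
          exact hBunif l (hδalt h) (hδLD (Nat.ne_of_lt h))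
        have hwBlt : ∀ {i l}, i < l → ∀ (u : Fin n → ℕ) j, B i u < w l j := by
          intro i l hil u j
          exact hBlt hil u (δ j)
        have hwv : ∀ l (v : Fin n → ℕ) {j}, v z < j →
            (w l j < B l v ∧ f (w l j) (B l v) = g) := by
          intro l v j hj
          obtain ⟨halt, hld⟩ := hvδ v hj
          exact ⟨hBanti l halt, hBunif l halt hld⟩
        set E : ℕ → (Fin n → ℕ) → ℕ → I := fun i u l => f (B i u) (w l 0) with hEdef
        have hEstab : ∀ {i l}, i < l → ∀ (u : Fin n → ℕ) (j : ℕ),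
            f (B i u) (w l j) = E i u l := by
          intro i l hil u j
          rcases Nat.eq_zero_or_pos j with h0 | h0
          · rw [h0]
          · exact hf (B i u) (w l (j+1)) (w l j) (B i u) (w l (j+1)) (w l 0)
              (hwBlt hil u (j+1)) (hwlt l (by omega)) (hwBlt hil u (j+1)) (hwlt l (by omega))
              rfl (by rw [hwcol l (by omega), hwcol l (by omega)])
        have hcross2 : ∀ {i l}, i < l → ∀ {u u' : Fin n → ℕ}, E i u l = E i u' l →
            ∀ (v v' : Fin n → ℕ), f (B i u) (B l v) = f (B i u') (B l v') := by
          intro i l hil u u' hE' v v'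
          refine hf (B i u) (w l (v z + 1)) (B l v) (B i u') (w l (v' z + 1)) (B l v')
            (hwBlt hil u _) (hwv l v (by omega)).1 (hwBlt hil u' _) (hwv l v' (by omega)).1
            ?_ ?_
          · rw [hEstab hil u _, hEstab hil u' _, hE']
          · rw [(hwv l v (by omega)).2, (hwv l v' (by omega)).2]
        have hEtrans : ∀ {i} {u u' : Fin n → ℕ}, E i u (i+1) = E i u' (i+1) →
            ∀ {l}, i < l → E i u l = E i u' l := by
          intro i u u' h l hil
          rcases Nat.lt_or_ge (i+1) l with hl | hl
          · show f (B i u) (w l 0) = f (B i u') (w l 0)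
            refine hf (B i u) (w (i+1) 1) (w l 0) (B i u') (w (i+1) 1) (w l 0)
              (hwBlt (by omega) u 1) (hwBlt hl (δ 1) 0) (hwBlt (by omega) u' 1)
              (hwBlt hl (δ 1) 0) ?_ rfl
            rw [hEstab (by omega) u 1, hEstab (by omega) u' 1, h]
          · have hleq : l = i + 1 := by omega
            rw [hleq]
            exact h
        haveI := hNI
        choose e ecv he hLDe hκ using fun i : ℕ => point_ramsey n (fun u => E i u (i+1))
        refine ⟨fun i u => B i (e i u),
          fun i l => f (B i (e i default)) (B l (e l default)), ?_, ?_, ?_, ?_⟩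
        · intro i u
          exact hBrange i (e i u)
        · intro i a b h
          exact hBanti i (he i a b h)
        · intro i a b k h hld
          exact hBunif i (he i a b h) (hLDe i a b k hld)
        · intro i l hil u v
          have h1 : E i (e i u) (i+1) = E i (e i default) (i+1) := by rw [hκ, hκ]
          exact hcross2 hil (hEtrans h1 hil) (e l v) (e l default)
    obtain ⟨ψ, γ₀, hψ, hγ₀⟩ := ramsey_pairs W hNI
    refine ⟨fun x => B' (ψ (x 0)) (Fin.tail x), Fin.cons γ₀ γB, ?_, ?_, ?_⟩
    · intro x
      obtain ⟨w', hw'⟩ := hB'range (ψ (x 0)) (Fin.tail x)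
      exact ⟨Fin.cons (φ₀ (ψ (x 0))) w', hw'⟩
    · intro x y h
      rw [← Fin.cons_self_tail x, ← Fin.cons_self_tail y] at h
      rcases altLex_cons_iff.1 h with hlt | ⟨heq, htail⟩
      · obtain ⟨wx, hwx⟩ := hB'range (ψ (x 0)) (Fin.tail x)
        obtain ⟨wy, hwy⟩ := hB'range (ψ (y 0)) (Fin.tail y)
        show B' (ψ (x 0)) (Fin.tail x) < B' (ψ (y 0)) (Fin.tail y)
        rw [hwx, hwy]
        exact hp _ _ (altLex_cons_iff.2 (Or.inl (hφ₀ (hψ hlt))))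
      · show B' (ψ (x 0)) (Fin.tail x) < B' (ψ (y 0)) (Fin.tail y)
        rw [← heq]
        exact hB'anti (ψ (x 0)) (Fin.tail y) (Fin.tail x) htail
    · intro x y k h hld
      induction k using Fin.cases with
      | zero =>
        have hne : x 0 ≠ y 0 := hld.2
        have hlt : x 0 < y 0 := by
          rw [← Fin.cons_self_tail x, ← Fin.cons_self_tail y] at h
          rcases altLex_cons_iff.1 h with hlt | ⟨heq, -⟩
          · exact hlt
          · exact absurd heq hne
        beta_reduce
        rw [hB'cross _ _ (hψ hlt) (Fin.tail x) (Fin.tail y), hγ₀ _ _ hlt, Fin.cons_zero]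
      | succ k' =>
        obtain ⟨h0, hldt⟩ := LD_elim_cons hld
        have htail : AltLexLt (Fin.tail y) (Fin.tail x) := by
          rw [← Fin.cons_self_tail x, ← Fin.cons_self_tail y] at h
          rcases altLex_cons_iff.1 h with hlt | ⟨-, htail⟩
          · exact absurd h0 (Nat.ne_of_lt hlt)
          · exact htail
        beta_reduce
        rw [Fin.cons_succ, ← h0]
        exact hB'unif (ψ (x 0)) (Fin.tail y) (Fin.tail x) k' htail hldt.symm

end AltMain

namespace AltCore
open AltAux AltMain

variable {I : Type*}

theorem LD_alt_of_base {n : ℕ} {b : Fin n → ℕ} {k : Fin n} {a c : ℕ}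
    (h : if Even (k : ℕ) then a < c else c < a) :
    AltLexLt (Function.update b k a) (Function.update b k c) ∧
    LD (Function.update b k a) (Function.update b k c) k := by
  have hne : a ≠ c := by
    by_cases he : Even (k : ℕ) <;> simp [he] at h <;> omega
  have hld : LD (Function.update b k a) (Function.update b k c) k := by
    refine ⟨fun j hj => ?_, ?_⟩
    · rw [Function.update_of_ne (Fin.ne_of_lt hj), Function.update_of_ne (Fin.ne_of_lt hj)]
    · rw [Function.update_self, Function.update_self]
      exact hne
  refine ⟨⟨k, hld.1, ?_⟩, hld⟩
  simp only [Function.update_self]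
  exact h

/-- Adjacent scale-colour collision yields a homogeneous copy of ℤ. -/
theorem homog_of_adjacent {n : ℕ} {C : Type*} [LinearOrder C] {f : C → C → I}
    {P : (Fin n → ℕ) → C} {γ : Fin n → I} (hP : AltMono P) (hU : Unif f P γ)
    {s : Fin n} (hs1 : (s : ℕ) + 1 < n)
    (hcol : γ s = γ ⟨(s : ℕ) + 1, hs1⟩) :
    ∃ (i₀ : I) (g : ℤ → C), StrictMono g ∧ ∀ i j : ℤ, i < j → f (g i) (g j) = i₀ := by
  classical
  set s1 : Fin n := ⟨(s : ℕ) + 1, hs1⟩ with hs1def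
  have hss1 : s ≠ s1 := Fin.ne_of_val_ne (by simp [hs1def])
  have hs1s : s1 ≠ s := Ne.symm hss1
  have hslt1 : s < s1 := by rw [Fin.lt_iff_val_lt_val]; simp [hs1def]
  set β : Fin n → ℕ := fun _ => 0 with hβ
  by_cases he : Even (s : ℕ)
  · -- s even, s+1 odd
    have he1 : ¬ Even ((s1 : ℕ)) := by simp [hs1def, Nat.even_add_one, he]
    set x : ℕ → (Fin n → ℕ) := fun v => Function.update (Function.update β s 1) s1 (v+1) with hx
    set u : ℕ → (Fin n → ℕ) := fun m => Function.update β s (m+2) with hu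
    -- x-pairs
    have hxx : ∀ {v v'}, v < v' → AltLexLt (x v') (x v) ∧ LD (x v') (x v) s1 := by
      intro v v' hvv
      exact LD_alt_of_base (by simp [he1]; omega)
    -- u-pairs
    have huu : ∀ {m m'}, m < m' → AltLexLt (u m) (u m') ∧ LD (u m) (u m') s := by
      intro m m' hmm
      exact LD_alt_of_base (by simp [he]; omega)
    -- cross pairs
    have hxu : ∀ v m, AltLexLt (x v) (u m) ∧ LD (x v) (u m) s := by
      intro v m
      have hld : LD (x v) (u m) s := by
        refine ⟨fun j hj => ?_, ?_⟩
        · have hjs : j ≠ s := Fin.ne_of_lt hj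
          have hjs1 : j ≠ s1 := Fin.ne_of_val_ne (by
            have := (Fin.lt_iff_val_lt_val.1 hj); simp [hs1def]; omega)
          simp only [hx, hu]
          rw [Function.update_of_ne hjs1, Function.update_of_ne hjs, Function.update_of_ne hjs]
        · simp only [hx, hu]
          rw [Function.update_of_ne hss1, Function.update_self, Function.update_self]
          omega
      refine ⟨altLex_of_LD_even hld he ?_, hld⟩
      simp only [hx, hu]
      rw [Function.update_of_ne hss1, Function.update_self, Function.update_self]
      omega
    refine ⟨γ s, fun i => if i < 0 then P (x (Int.toNat (-i))) else P (u (Int.toNat i)), ?_, ?_⟩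
    · intro i j hij
      by_cases hi : i < 0 <;> by_cases hj : j < 0 <;> simp only [hi, hj, if_pos, if_neg, if_true, if_false]
      · exact hP _ _ (hxx (by omega)).1
      · exact hP _ _ (hxu _ _).1
      · omega
      · exact hP _ _ (huu (by omega)).1
    · intro i j hij
      by_cases hi : i < 0 <;> by_cases hj : j < 0 <;> simp only [hi, hj, if_pos, if_neg, if_true, if_false]
      · rw [hU _ _ s1 (hxx (by omega)).1 (hxx (by omega)).2, hcol]
      · exact hU _ _ s (hxu _ _).1 (hxu _ _).2
      · omega
      · exact hU _ _ s (huu (by omega)).1 (huu (by omega)).2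
  · -- s odd, s+1 even
    have he1 : Even ((s1 : ℕ)) := by simp [hs1def, Nat.even_add_one, he]
    set x : ℕ → (Fin n → ℕ) := fun v => Function.update β s (v+2) with hx
    set u : ℕ → (Fin n → ℕ) := fun m => Function.update (Function.update β s 1) s1 (m+1) with hu
    have hxx : ∀ {v v'}, v < v' → AltLexLt (x v') (x v) ∧ LD (x v') (x v) s := by
      intro v v' hvv
      exact LD_alt_of_base (by simp [he]; omega)
    have huu : ∀ {m m'}, m < m' → AltLexLt (u m) (u m') ∧ LD (u m) (u m') s1 := by
      intro m m' hmm
      exact LD_alt_of_base (by simp [he1]; omega)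
    have hxu : ∀ v m, AltLexLt (x v) (u m) ∧ LD (x v) (u m) s := by
      intro v m
      have hld : LD (x v) (u m) s := by
        refine ⟨fun j hj => ?_, ?_⟩
        · have hjs : j ≠ s := Fin.ne_of_lt hj
          have hjs1 : j ≠ s1 := Fin.ne_of_val_ne (by
            have := (Fin.lt_iff_val_lt_val.1 hj); simp [hs1def]; omega)
          simp only [hx, hu]
          rw [Function.update_of_ne hjs, Function.update_of_ne hjs1, Function.update_of_ne hjs]
        · simp only [hx, hu]
          rw [Function.update_self, Function.update_of_ne hss1, Function.update_self]
          omega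
      refine ⟨altLex_of_LD_odd hld he ?_, hld⟩
      simp only [hx, hu]
      rw [Function.update_self, Function.update_of_ne hss1, Function.update_self]
      omega
    refine ⟨γ s, fun i => if i < 0 then P (x (Int.toNat (-i))) else P (u (Int.toNat i)), ?_, ?_⟩
    · intro i j hij
      by_cases hi : i < 0 <;> by_cases hj : j < 0 <;> simp only [hi, hj, if_pos, if_neg, if_true, if_false]
      · exact hP _ _ (hxx (by omega)).1
      · exact hP _ _ (hxu _ _).1
      · omega
      · exact hP _ _ (huu (by omega)).1
    · intro i j hij
      by_cases hi : i < 0 <;> by_cases hj : j < 0 <;> simp only [hi, hj, if_pos, if_neg, if_true, if_false]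
      · exact hU _ _ s (hxx (by omega)).1 (hxx (by omega)).2
      · exact hU _ _ s (hxu _ _).1 (hxu _ _).2
      · omega
      · rw [hU _ _ s1 (huu (by omega)).1 (huu (by omega)).2, hcol]

end AltCore

namespace AltCore2
open AltAux AltMain AltCore

variable {I : Type*}

/-- Additivity collapses any scale-colour collision to an adjacent one. -/
theorem collapse {n : ℕ} {C : Type*} [LinearOrder C] {f : C → C → I}
    (hf : IsAdditiveColouring f)
    {P : (Fin n → ℕ) → C} {γ : Fin n → I} (hP : AltMono P) (hU : Unif f P γ)
    {s t : Fin n} (hst : (s : ℕ) + 1 < (t : ℕ)) (hcol : γ s = γ t) :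
    γ s = γ ⟨(s : ℕ) + 1, lt_trans hst t.isLt⟩ := by
  classical
  set s1 : Fin n := ⟨(s : ℕ) + 1, lt_trans hst t.isLt⟩ with hs1def
  have hss1 : s ≠ s1 := Fin.ne_of_val_ne (by simp [hs1def])
  have hs1t : s1 ≠ t := Fin.ne_of_val_ne (by simp [hs1def]; omega)
  have hts1 : t ≠ s1 := Ne.symm hs1t
  have hst' : s ≠ t := Fin.ne_of_val_ne (by omega)
  have hts : t ≠ s := Ne.symm hst'
  have he1iff : ¬ Even ((s1 : ℕ)) ↔ Even (s : ℕ) := by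
    simp [hs1def, Nat.even_add_one]
  set β : Fin n → ℕ := fun _ => 0 with hβ
  set β' : Fin n → ℕ := Function.update β t 1 with hβ'
  set ct : ℕ := if Even (t : ℕ) then 2 else 0 with hct
  have hctne : ct ≠ 1 := by by_cases h : Even (t : ℕ) <;> simp [hct, h]
  -- helper to build the `y z` pair at coordinate t out of any point with value 1 at t
  have hyz_gen : ∀ (y : Fin n → ℕ), y t = 1 →
      AltLexLt y (Function.update y t ct) ∧ LD y (Function.update y t ct) t := by
    intro y hyt
    have hld : LD y (Function.update y t ct) t := by
      refine ⟨fun j hj => ?_, ?_⟩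
      · rw [Function.update_of_ne (Fin.ne_of_lt hj)]
      · rw [Function.update_self, hyt]
        exact fun h => hctne h.symm
    refine ⟨?_, hld⟩
    by_cases het : Even (t : ℕ)
    · refine altLex_of_LD_even hld het ?_
      rw [Function.update_self, hyt]
      simp [hct, het]
    · refine altLex_of_LD_odd hld het ?_
      rw [Function.update_self, hyt]
      simp [hct, het]
  by_cases he : Even (s : ℕ)
  · -- s even, s1 odd
    have he1 : ¬ Even ((s1 : ℕ)) := he1iff.2 he
    set bb : Fin n → ℕ := Function.update β s 1 with hbb
    set x₁ : Fin n → ℕ := Function.update bb s1 2 with hx₁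
    set y₁ : Fin n → ℕ := Function.update bb s1 1 with hy₁
    set z₁ : Fin n → ℕ := Function.update β s 2 with hz₁
    obtain ⟨hxy₁, hxyLD₁⟩ :
        AltLexLt x₁ y₁ ∧ LD x₁ y₁ s1 := LD_alt_of_base (by simp [he1])
    have hyz₁ : AltLexLt y₁ z₁ ∧ LD y₁ z₁ s := by
      have hld : LD y₁ z₁ s := by
        refine ⟨fun j hj => ?_, ?_⟩
        · have hjs : j ≠ s := Fin.ne_of_lt hj
          have hjs1 : j ≠ s1 := Fin.ne_of_val_ne (by
            have := Fin.lt_iff_val_lt_val.1 hj; simp [hs1def]; omega)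
          simp only [hy₁, hz₁, hbb]
          rw [Function.update_of_ne hjs1, Function.update_of_ne hjs, Function.update_of_ne hjs]
        · simp only [hy₁, hz₁, hbb]
          rw [Function.update_of_ne hss1, Function.update_self, Function.update_self]
          omega
      refine ⟨altLex_of_LD_even hld he ?_, hld⟩
      simp only [hy₁, hz₁, hbb]
      rw [Function.update_of_ne hss1, Function.update_self, Function.update_self]
      omega
    have hxz₁ : AltLexLt x₁ z₁ ∧ LD x₁ z₁ s := by
      have hld : LD x₁ z₁ s := by
        refine ⟨fun j hj => ?_, ?_⟩
        · have hjs : j ≠ s := Fin.ne_of_lt hj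
          have hjs1 : j ≠ s1 := Fin.ne_of_val_ne (by
            have := Fin.lt_iff_val_lt_val.1 hj; simp [hs1def]; omega)
          simp only [hx₁, hz₁, hbb]
          rw [Function.update_of_ne hjs1, Function.update_of_ne hjs, Function.update_of_ne hjs]
        · simp only [hx₁, hz₁, hbb]
          rw [Function.update_of_ne hss1, Function.update_self, Function.update_self]
          omega
      refine ⟨altLex_of_LD_even hld he ?_, hld⟩
      simp only [hx₁, hz₁, hbb]
      rw [Function.update_of_ne hss1, Function.update_self, Function.update_self]
      omega
    set bb' : Fin n → ℕ := Function.update β' s 1 with hbb'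
    set x₂ : Fin n → ℕ := Function.update bb' s1 2 with hx₂
    set y₂ : Fin n → ℕ := Function.update bb' s1 1 with hy₂
    obtain ⟨hxy₂, hxyLD₂⟩ :
        AltLexLt x₂ y₂ ∧ LD x₂ y₂ s1 := LD_alt_of_base (by simp [he1])
    have hy₂t : y₂ t = 1 := by
      simp only [hy₂, hbb', hβ']
      rw [Function.update_of_ne hts1, Function.update_of_ne hts, Function.update_self]
    set z₂ : Fin n → ℕ := Function.update y₂ t ct with hz₂
    have hyz₂ : AltLexLt y₂ z₂ ∧ LD y₂ z₂ t := hyz_gen y₂ hy₂t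
    have hxz₂ : AltLexLt x₂ z₂ ∧ LD x₂ z₂ s1 := by
      have hld : LD x₂ z₂ s1 := by
        refine ⟨fun j hj => ?_, ?_⟩
        · have hjs1 : j ≠ s1 := Fin.ne_of_lt hj
          have hjt : j ≠ t := Fin.ne_of_val_ne (by
            have := Fin.lt_iff_val_lt_val.1 hj; simp [hs1def] at this; omega)
          simp only [hx₂, hz₂, hy₂]
          rw [Function.update_of_ne hjt, Function.update_of_ne hjs1, Function.update_of_ne hjs1]
        · simp only [hx₂, hz₂, hy₂]
          rw [Function.update_of_ne hs1t, Function.update_self, Function.update_self]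
          omega
      refine ⟨altLex_of_LD_odd hld he1 ?_, hld⟩
      simp only [hx₂, hz₂, hy₂]
      rw [Function.update_of_ne hs1t, Function.update_self, Function.update_self]
      omega
    have h1 : f (P x₁) (P y₁) = f (P x₂) (P y₂) := by
      rw [hU _ _ s1 hxy₁ hxyLD₁, hU _ _ s1 hxy₂ hxyLD₂]
    have h2 : f (P y₁) (P z₁) = f (P y₂) (P z₂) := by
      rw [hU _ _ s hyz₁.1 hyz₁.2, hU _ _ t hyz₂.1 hyz₂.2]
      exact hcol
    have h3 := hf (P x₁) (P y₁) (P z₁) (P x₂) (P y₂) (P z₂)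
      (hP _ _ hxy₁) (hP _ _ hyz₁.1) (hP _ _ hxy₂) (hP _ _ hyz₂.1) h1 h2
    rw [hU _ _ s hxz₁.1 hxz₁.2, hU _ _ s1 hxz₂.1 hxz₂.2] at h3
    exact h3
  · -- s odd, s1 even
    have he1 : Even ((s1 : ℕ)) := by
      by_contra h
      exact he (he1iff.1 h)
    set x₁ : Fin n → ℕ := Function.update β s 2 with hx₁
    set y₁ : Fin n → ℕ := Function.update (Function.update β s 2) s1 1 with hy₁
    set z₁ : Fin n → ℕ := Function.update β s 1 with hz₁
    have hxy₁ : AltLexLt x₁ y₁ ∧ LD x₁ y₁ s1 := by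
      have hld : LD x₁ y₁ s1 := by
        refine ⟨fun j hj => ?_, ?_⟩
        · have hjs1 : j ≠ s1 := Fin.ne_of_lt hj
          simp only [hx₁, hy₁]
          rw [Function.update_of_ne hjs1]
        · simp only [hx₁, hy₁]
          rw [Function.update_self, Function.update_of_ne hss1.symm, hβ]
          simp
      refine ⟨altLex_of_LD_even hld he1 ?_, hld⟩
      simp only [hx₁, hy₁]
      rw [Function.update_self, Function.update_of_ne hss1.symm, hβ]
      simp
    have hyz₁ : AltLexLt y₁ z₁ ∧ LD y₁ z₁ s := by
      have hld : LD y₁ z₁ s := by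
        refine ⟨fun j hj => ?_, ?_⟩
        · have hjs : j ≠ s := Fin.ne_of_lt hj
          have hjs1 : j ≠ s1 := Fin.ne_of_val_ne (by
            have := Fin.lt_iff_val_lt_val.1 hj; simp [hs1def]; omega)
          simp only [hy₁, hz₁]
          rw [Function.update_of_ne hjs1, Function.update_of_ne hjs, Function.update_of_ne hjs]
        · simp only [hy₁, hz₁]
          rw [Function.update_of_ne hss1, Function.update_self, Function.update_self]
          omega
      refine ⟨altLex_of_LD_odd hld he ?_, hld⟩
      simp only [hy₁, hz₁]
      rw [Function.update_of_ne hss1, Function.update_self, Function.update_self]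
      omega
    have hxz₁ : AltLexLt x₁ z₁ ∧ LD x₁ z₁ s := by
      have hld : LD x₁ z₁ s := by
        refine ⟨fun j hj => ?_, ?_⟩
        · have hjs : j ≠ s := Fin.ne_of_lt hj
          simp only [hx₁, hz₁]
          rw [Function.update_of_ne hjs, Function.update_of_ne hjs]
        · simp only [hx₁, hz₁]
          rw [Function.update_self, Function.update_self]
          omega
      refine ⟨altLex_of_LD_odd hld he ?_, hld⟩
      simp only [hx₁, hz₁]
      rw [Function.update_self, Function.update_self]
      omega
    set x₂ : Fin n → ℕ := Function.update β' s 2 with hx₂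
    set y₂ : Fin n → ℕ := Function.update (Function.update β' s 2) s1 1 with hy₂
    have hxy₂ : AltLexLt x₂ y₂ ∧ LD x₂ y₂ s1 := by
      have hld : LD x₂ y₂ s1 := by
        refine ⟨fun j hj => ?_, ?_⟩
        · have hjs1 : j ≠ s1 := Fin.ne_of_lt hj
          simp only [hx₂, hy₂]
          rw [Function.update_of_ne hjs1]
        · simp only [hx₂, hy₂, hβ']
          rw [Function.update_self, Function.update_of_ne hss1.symm,
            Function.update_of_ne hs1t, hβ]
          simp
      refine ⟨altLex_of_LD_even hld he1 ?_, hld⟩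
      simp only [hx₂, hy₂, hβ']
      rw [Function.update_self, Function.update_of_ne hss1.symm,
        Function.update_of_ne hs1t, hβ]
      simp
    have hy₂t : y₂ t = 1 := by
      simp only [hy₂, hβ']
      rw [Function.update_of_ne hts1, Function.update_of_ne hts, Function.update_self]
    set z₂ : Fin n → ℕ := Function.update y₂ t ct with hz₂
    have hyz₂ : AltLexLt y₂ z₂ ∧ LD y₂ z₂ t := hyz_gen y₂ hy₂t
    have hxz₂ : AltLexLt x₂ z₂ ∧ LD x₂ z₂ s1 := by
      have hld : LD x₂ z₂ s1 := by
        refine ⟨fun j hj => ?_, ?_⟩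
        · have hjs1 : j ≠ s1 := Fin.ne_of_lt hj
          have hjt : j ≠ t := Fin.ne_of_val_ne (by
            have := Fin.lt_iff_val_lt_val.1 hj; simp [hs1def] at this; omega)
          simp only [hx₂, hz₂, hy₂]
          rw [Function.update_of_ne hjt, Function.update_of_ne hjs1]
        · simp only [hx₂, hz₂, hy₂, hβ']
          rw [Function.update_of_ne hs1t, Function.update_self,
            Function.update_of_ne hss1.symm, Function.update_of_ne hs1t, hβ]
          simp
      refine ⟨altLex_of_LD_even hld he1 ?_, hld⟩
      simp only [hx₂, hz₂, hy₂, hβ']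
      rw [Function.update_of_ne hs1t, Function.update_self,
        Function.update_of_ne hss1.symm, Function.update_of_ne hs1t, hβ]
      simp
    have h1 : f (P x₁) (P y₁) = f (P x₂) (P y₂) := by
      rw [hU _ _ s1 hxy₁.1 hxy₁.2, hU _ _ s1 hxy₂.1 hxy₂.2]
    have h2 : f (P y₁) (P z₁) = f (P y₂) (P z₂) := by
      rw [hU _ _ s hyz₁.1 hyz₁.2, hU _ _ t hyz₂.1 hyz₂.2]
      exact hcol
    have h3 := hf (P x₁) (P y₁) (P z₁) (P x₂) (P y₂) (P z₂)
      (hP _ _ hxy₁.1) (hP _ _ hyz₁.1) (hP _ _ hxy₂.1) (hP _ _ hyz₂.1) h1 h2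
    rw [hU _ _ s hxz₁.1 hxz₁.2, hU _ _ s1 hxz₂.1 hxz₂.2] at h3
    exact h3

end AltCore2

namespace AltFinal
open AltAux AltMain AltCore AltCore2

theorem no_homog_injective {I : Type*} {n : ℕ} {C : Type*} [LinearOrder C] {f : C → C → I}
    (hf : IsAdditiveColouring f)
    {P : (Fin n → ℕ) → C} {γ : Fin n → I} (hP : AltMono P) (hU : Unif f P γ)
    (hhom : ¬ ∃ (i₀ : I) (g : ℤ → C), StrictMono g ∧ ∀ i j : ℤ, i < j → f (g i) (g j) = i₀) :
    Function.Injective γ := by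
  have aux : ∀ s t : Fin n, s < t → γ s = γ t → False := by
    intro s t hst hcol
    have hstv : (s : ℕ) < (t : ℕ) := Fin.lt_iff_val_lt_val.1 hst
    rcases Nat.lt_or_ge ((s : ℕ) + 1) (t : ℕ) with h | h
    · have hs1 : (s : ℕ) + 1 < n := lt_trans h t.isLt
      have hadj := collapse hf hP hU h hcol
      exact hhom (homog_of_adjacent hP hU hs1 hadj)
    · have hts : (t : ℕ) = (s : ℕ) + 1 := by omega
      have hs1 : (s : ℕ) + 1 < n := hts ▸ t.isLt
      have hadj : γ s = γ ⟨(s : ℕ) + 1, hs1⟩ := by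
        rw [hcol]
        congr 1
        exact Fin.ext hts
      exact hhom (homog_of_adjacent hP hU hs1 hadj)
  intro s t h
  by_contra hne
  rcases lt_trichotomy s t with hlt | heq | hgt
  · exact aux s t hlt h
  · exact hne heq
  · exact aux t s hgt h.symm

end AltFinal

/-- A linear order embedding `L_n` and additively coloured by fewer than `n` colours
contains a homogeneous subset of order type ℤ (the combinatorial core of Lemma 3.9). -/
theorem homogeneous_int_of_embeds_Ln {C I : Type*} [LinearOrder C] [Finite I]
    {n : ℕ} (hn : 1 ≤ n) (hI : Nat.card I < n)
    (hC : ∃ g : (Fin n → ℕ) → C, ∀ x y : Fin n → ℕ, AltLexLt x y ↔ g x < g y)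
    (f : C → C → I) (hf : IsAdditiveColouring f) :
    ∃ i₀ : I, ∃ g : ℤ → C, StrictMono g ∧ ∀ i j : ℤ, i < j → f (g i) (g j) = i₀ := by
  obtain ⟨g₀, hg₀⟩ := hC
  have hp : AltMain.AltMono g₀ := fun x y h => (hg₀ x y).1 h
  obtain ⟨P, γ, -, hP, hU⟩ := AltMain.uniformize n f hf g₀ hp
  by_contra H
  have hinj := AltFinal.no_homog_injective hf hP hU H
  have hle : Nat.card (Fin n) ≤ Nat.card I := Nat.card_le_card_of_injective γ hinj
  rw [Nat.card_eq_fintype_card, Fintype.card_fin] at hle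
  omega
end

section
/- Let n be a natural number and let C be a linear order having Hausdorff degree ≤ n. Then C is scattered, i.e. there is no order embedding of ℚ into C. -/
/-!
Induct on the degree. A finite order contains no copy of ℚ. In degree `n + 1`, write
`C` as a sum of fibers of a monotone `g : C → I` over a well-ordered or inversely well-ordered
`I`, and take an embedding `f : ℚ ↪o C`. If `g ∘ f` identifies two rationals `q < q'`, it is
constant on `(q, q')`, and that interval, itself a copy of ℚ, lands in a single fiber, which is
impossible by induction. Otherwise `g ∘ f` embeds ℚ into `I`, contradicting well-foundedness.
-/

universe u

/-- The linear order `C` has Hausdorff degree ≤ `n`: degree ≤ 0 means finite, and degree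
≤ n+1 means `C` is a well-ordered or inversely well-ordered sum of orders of degree ≤ n. -/
def HdegLe : ℕ → (C : Type u) → [LinearOrder C] → Prop
  | 0, C, _ => Finite C
  | n + 1, C, _ => ∃ (I : Type u) (_ : LinearOrder I),
      (WellFoundedLT I ∨ WellFoundedGT I) ∧
      ∃ g : C → I, Monotone g ∧ ∀ i : I, HdegLe n {c : C // g c = i}

theorem not_wellFoundedLT_of_noMinOrder {α : Type*} [Preorder α] [Nonempty α] [NoMinOrder α] :
    ¬ WellFoundedLT α := by
  intro h
  obtain ⟨a, -, ha⟩ := h.wf.has_min Set.univ Set.univ_nonempty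
  obtain ⟨b, hb⟩ := exists_lt a
  exact ha b trivial hb

theorem not_wellFoundedGT_of_noMaxOrder {α : Type*} [Preorder α] [Nonempty α] [NoMaxOrder α] :
    ¬ WellFoundedGT α :=
  not_wellFoundedLT_of_noMinOrder (α := αᵒᵈ)

theorem isEmpty_ratEmbedding_of_wellFounded {I : Type*} [LinearOrder I]
    (hI : WellFoundedLT I ∨ WellFoundedGT I) : IsEmpty (ℚ ↪o I) := by
  refine ⟨fun e => ?_⟩
  rcases hI with hI | hI
  · exact not_wellFoundedLT_of_noMinOrder e.wellFoundedLT
  · exact not_wellFoundedGT_of_noMaxOrder e.wellFoundedGT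

namespace Monotone

variable {C I : Type*} [LinearOrder C] [LinearOrder I] {g : C → I}

theorem nonempty_ratEmbedding_fiber_of_eq (hg : Monotone g) (f : ℚ ↪o C) {q q' : ℚ}
    (hqq' : q < q') (heq : g (f q) = g (f q')) :
    Nonempty (ℚ ↪o {c : C // g c = g (f q)}) := by
  have hconst : ∀ x ∈ Set.Ioo q q', g (f x) = g (f q) := fun x hx =>
    le_antisymm (heq ▸ hg (f.monotone hx.2.le)) (hg (f.monotone hx.1.le))
  have : Nonempty (Set.Ioo q q') := (Set.nonempty_Ioo.2 hqq').to_subtype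
  obtain ⟨e⟩ := Order.iso_of_countable_dense ℚ (Set.Ioo q q')
  let toFiber : Set.Ioo q q' ↪o {c : C // g c = g (f q)} :=
    OrderEmbedding.ofStrictMono (fun x => ⟨f x, hconst x x.2⟩)
      fun _ _ hxy => f.strictMono (Subtype.coe_lt_coe.2 hxy)
  exact ⟨e.toOrderEmbedding.trans toFiber⟩

theorem nonempty_ratEmbedding_fiber_or_codomain (hg : Monotone g) (f : ℚ ↪o C) :
    (∃ i, Nonempty (ℚ ↪o {c : C // g c = i})) ∨ Nonempty (ℚ ↪o I) := by
  by_cases h : ∃ q q', q < q' ∧ g (f q) = g (f q')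
  · obtain ⟨q, q', hqq', heq⟩ := h
    exact .inl ⟨_, hg.nonempty_ratEmbedding_fiber_of_eq f hqq' heq⟩
  · push Not at h
    exact .inr ⟨OrderEmbedding.ofStrictMono (g ∘ f) fun q q' hqq' =>
      (hg (f.monotone hqq'.le)).lt_of_ne (h q q' hqq')⟩

end Monotone

/-- A linear order of finite Hausdorff degree is scattered: ℚ does not order-embed in it. -/
theorem scattered_of_hdegLe {C : Type u} [LinearOrder C] {n : ℕ} (hC : HdegLe n C) :
    ¬ Nonempty (ℚ ↪o C) := by
  induction n generalizing C with
  | zero =>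
    rintro ⟨f⟩
    have : Finite C := hC
    exact Infinite.not_finite (Finite.of_injective f f.injective)
  | succ n ih =>
    rintro ⟨f⟩
    obtain ⟨I, _, hwf, g, hg, hfibers⟩ := hC
    rcases hg.nonempty_ratEmbedding_fiber_or_codomain f with ⟨i, hi⟩ | ⟨⟨e⟩⟩
    · exact ih (hfibers i) hi
    · exact (isEmpty_ratEmbedding_of_wellFounded hwf).false e
end

section
/- Let n ≥ 1 and let C be a scattered linear order that does not have Hausdorff degree ≤ n. Then there is an order embedding of L_n into C. -/
universe u

section AltLexBasic

variable {n : ℕ}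

theorem altLex_irrefl (x : Fin n → ℕ) : ¬ AltLexLt x x := by
  rintro ⟨k, -, h⟩
  split at h <;> exact lt_irrefl _ h

theorem altLex_asymm {x y : Fin n → ℕ} (h1 : AltLexLt x y) (h2 : AltLexLt y x) : False := by
  obtain ⟨k1, hb1, h1⟩ := h1
  obtain ⟨k2, hb2, h2⟩ := h2
  rcases lt_trichotomy k1 k2 with hk | hk | hk
  · have h3 := hb2 k1 hk
    split at h1 <;> omega
  · subst hk
    split at h1 <;> split at h2 <;> first | omega | exact absurd ‹Even (k1 : ℕ)› ‹¬ Even (k1 : ℕ)›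
  · have h3 := hb1 k2 hk
    split at h2 <;> omega

theorem altLex_trichotomy (x y : Fin n → ℕ) :
    x = y ∨ AltLexLt x y ∨ AltLexLt y x := by
  by_cases hxy : x = y
  · exact Or.inl hxy
  right
  classical
  have hne : ∃ i : ℕ, ∃ h : i < n, x ⟨i, h⟩ ≠ y ⟨i, h⟩ := by
    by_contra h
    push_neg at h
    exact hxy (funext fun i => h i.1 i.2)
  let k0 := Nat.find hne
  obtain ⟨hk0, hne0⟩ := Nat.find_spec hne
  set k : Fin n := ⟨k0, hk0⟩ with hkdef
  have hbelow : ∀ j : Fin n, j < k → x j = y j := by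
    intro j hj
    by_contra hj'
    exact Nat.find_min hne (m := j.1) hj ⟨j.2, by simpa using hj'⟩
  have hbelow' : ∀ j : Fin n, j < k → y j = x j := fun j hj => (hbelow j hj).symm
  rcases lt_trichotomy (x k) (y k) with h | h | h
  · rcases Nat.even_or_odd (k : ℕ) with he | he
    · exact Or.inl ⟨k, hbelow, by simp [he, h]⟩
    · exact Or.inr ⟨k, hbelow', by simp [Nat.not_even_iff_odd.2 he, h]⟩
  · exact absurd h hne0
  · rcases Nat.even_or_odd (k : ℕ) with he | he
    · exact Or.inr ⟨k, hbelow', by simp [he, h]⟩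
    · exact Or.inl ⟨k, hbelow, by simp [Nat.not_even_iff_odd.2 he, h]⟩

end AltLexBasic

section AltLexStruct

theorem altLex_one (x y : Fin 1 → ℕ) : AltLexLt x y ↔ x 0 < y 0 := by
  constructor
  · rintro ⟨k, -, h⟩
    have hk : k = 0 := Subsingleton.elim _ _
    subst hk
    simpa using h
  · intro h
    exact ⟨0, by simp [Fin.lt_iff_val_lt_val], by simpa using h⟩

theorem altLex_succ_iff {n : ℕ} (x y : Fin (n + 1) → ℕ) :
    AltLexLt x y ↔ x 0 < y 0 ∨
      (x 0 = y 0 ∧ AltLexLt (fun i => y i.succ) (fun i => x i.succ)) := by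
  constructor
  · rintro ⟨k, hb, h⟩
    rcases Fin.eq_zero_or_eq_succ k with rfl | ⟨j, rfl⟩
    · left; simpa using h
    · right
      refine ⟨hb 0 (Fin.succ_pos j), ⟨j, ?_, ?_⟩⟩
      · intro j' hj'
        exact (hb j'.succ (by simpa [Fin.succ_lt_succ_iff] using hj')).symm
      · rw [Fin.val_succ] at h
        rcases Nat.even_or_odd (j : ℕ) with he | he
        · rw [if_pos he]
          rw [if_neg (by simpa [Nat.even_add_one] using he)] at h
          exact h
        · rw [if_neg (by simpa using he)]
          rw [if_pos (Nat.even_add_one.2 (by simpa using he))] at h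
          exact h
  · rintro (h | ⟨h0, j, hb, h⟩)
    · exact ⟨0, by simp [Fin.pos_iff_ne_zero], by simpa using h⟩
    · refine ⟨j.succ, ?_, ?_⟩
      · intro j' hj'
        rcases Fin.eq_zero_or_eq_succ j' with rfl | ⟨i, rfl⟩
        · exact h0
        · exact (hb i (by simpa [Fin.succ_lt_succ_iff] using hj')).symm
      · rw [Fin.val_succ]
        rcases Nat.even_or_odd (j : ℕ) with he | he
        · rw [if_pos he] at h
          rw [if_neg (by simpa [Nat.even_add_one] using he)]
          exact h
        · rw [if_neg (by simpa using he)] at h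
          rw [if_pos (Nat.even_add_one.2 (by simpa using he))]
          exact h

/-- shift on coordinate 0 -/
def altShift {n : ℕ} (s : ℕ) (p : Fin (n + 1) → ℕ) : Fin (n + 1) → ℕ :=
  fun i => p i + if i = 0 then s else 0

theorem altLex_shift_iff {n : ℕ} (s : ℕ) (p q : Fin (n + 1) → ℕ) :
    AltLexLt (altShift s p) (altShift s q) ↔ AltLexLt p q := by
  have key : ∀ u v : Fin (n+1) → ℕ, AltLexLt u v → AltLexLt (altShift s u) (altShift s v) := by
    rintro u v ⟨k, hb, h⟩
    refine ⟨k, ?_, ?_⟩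
    · intro j hj
      simp only [altShift, hb j hj]
    · simp only [altShift]
      split at h <;> split <;>
        first
          | omega
          | exact absurd ‹Even (k : ℕ)› ‹¬ Even (k : ℕ)›
  constructor
  · intro h
    rcases altLex_trichotomy p q with rfl | h' | h'
    · exact absurd h (altLex_irrefl _)
    · exact h'
    · exact (altLex_asymm h (key _ _ h')).elim
  · exact key p q

theorem altLex_lt_shift {n : ℕ} (p0 p : Fin (n + 1) → ℕ) :
    AltLexLt p0 (altShift (p0 0 + 1) p) := by
  refine ⟨0, by simp [Fin.pos_iff_ne_zero], ?_⟩
  simp only [altShift]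
  have h2 : Even ((0 : Fin (n+1)) : ℕ) := by simp
  rw [if_pos h2, if_pos trivial]
  omega

end AltLexStruct

section Hdeg

theorem hdegLe_of_orderEmbedding :
    ∀ (n : ℕ) {D E : Type u} [LinearOrder D] [LinearOrder E],
      (D ↪o E) → HdegLe n E → HdegLe n D := by
  intro n
  induction n with
  | zero =>
    intro D E _ _ e hE
    have : Finite E := hE
    exact Finite.of_injective e e.injective
  | succ n ih =>
    intro D E _ _ e hE
    obtain ⟨I, instI, hwf, g, hmono, hfib⟩ := hE
    refine ⟨I, instI, hwf, g ∘ e, hmono.comp e.monotone, fun i => ?_⟩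
    refine ih ?_ (hfib i)
    refine ⟨⟨fun d => ⟨e d.1, d.2⟩, ?_⟩, ?_⟩
    · intro a b hab
      exact Subtype.ext (e.injective (congrArg Subtype.val hab))
    · intro a b
      simp [Subtype.mk_le_mk]

theorem hdegLe_congr {D E : Type u} [LinearOrder D] [LinearOrder E]
    (e : D ≃o E) (n : ℕ) (hE : HdegLe n E) : HdegLe n D :=
  hdegLe_of_orderEmbedding n e.toOrderEmbedding hE

theorem hdegLe_dual :
    ∀ (n : ℕ) (C : Type u) [LinearOrder C], HdegLe n C → HdegLe n Cᵒᵈ := by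
  intro n
  induction n with
  | zero =>
    intro C _ hC
    have : Finite C := hC
    exact Finite.of_equiv C OrderDual.toDual
  | succ n ih =>
    intro C _ hC
    obtain ⟨I, instI, hwf, g, hmono, hfib⟩ := hC
    letI := instI
    refine ⟨Iᵒᵈ, inferInstance, ?_, OrderDual.toDual ∘ g ∘ OrderDual.ofDual,
      hmono.dual, fun i => ?_⟩
    · rcases hwf with h | h
      · exact Or.inr (by exact h)
      · exact Or.inl (by exact h)
    · -- fiber over i : Iᵒᵈ
      have h1 : HdegLe n ({c : C // g c = OrderDual.ofDual i}ᵒᵈ) :=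
        ih _ (hfib (OrderDual.ofDual i))
      refine hdegLe_congr ?_ n h1
      exact {
        toFun := fun c => OrderDual.toDual (⟨OrderDual.ofDual c.1, c.2⟩ :
          {c : C // g c = OrderDual.ofDual i})
        invFun := fun c => ⟨OrderDual.toDual (OrderDual.ofDual c).1, (OrderDual.ofDual c).2⟩
        left_inv := fun c => rfl
        right_inv := fun c => rfl
        map_rel_iff' := Iff.rfl }

end Hdeg

section Copies

variable {C : Type u} [LinearOrder C] {m : ℕ}

/-- There is a reversed copy of `L_n` (i.e. a copy of `L_nᵒᵈ`) inside the set `S`. -/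
def RevOn (n : ℕ) (S : Set C) : Prop :=
  ∃ f : (Fin n → ℕ) → C, (∀ p q, AltLexLt p q ↔ f q < f p) ∧ ∀ p, f p ∈ S

theorem revOn_mono {n : ℕ} {S T : Set C} (h : RevOn n S) (hST : S ⊆ T) : RevOn n T := by
  obtain ⟨f, h1, h2⟩ := h
  exact ⟨f, h1, fun p => hST (h2 p)⟩

/-- From a reversed copy in `S` and a point `p0`, get a reversed copy in `S` strictly
below `f p0`. -/
theorem revOn_below {S : Set C} {f : (Fin (m+1) → ℕ) → C}
    (hf : ∀ p q, AltLexLt p q ↔ f q < f p) (hS : ∀ p, f p ∈ S)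
    (p0 : Fin (m+1) → ℕ) : RevOn (m+1) {x | x ∈ S ∧ x < f p0} := by
  refine ⟨fun p => f (altShift (p0 0 + 1) p), fun p q => ?_, fun p => ?_⟩
  · rw [← hf]
    exact (altLex_shift_iff _ _ _).symm
  · exact ⟨hS _, (hf p0 (altShift (p0 0 + 1) p)).1 (altLex_lt_shift p0 p)⟩

def BadI (m : ℕ) (a b : C) : Prop := RevOn (m+1) (Set.Icc a b)

theorem badI_mono {a b a' b' : C} (h : BadI m a' b') (ha : a ≤ a') (hb : b' ≤ b) :
    BadI m a b :=
  revOn_mono h (Set.Icc_subset_Icc ha hb)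

theorem not_badI_self (a : C) : ¬ BadI m a a := by
  rintro ⟨f, hf, hmem⟩
  set p : Fin (m+1) → ℕ := fun _ => 0 with hp
  have h1 : AltLexLt p (altShift 1 p) := by
    have := altLex_lt_shift p p
    simpa [hp] using this
  have h2 := (hf _ _).1 h1
  have e1 : f p = a := le_antisymm (hmem p).2 (hmem p).1
  have e2 : f (altShift 1 p) = a := le_antisymm (hmem _).2 (hmem _).1
  rw [e1, e2] at h2
  exact lt_irrefl _ h2

theorem badI_cut {a b c : C} (h : BadI m a c) (hab : a ≤ b) (hbc : b ≤ c) :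
    BadI m a b ∨ BadI m b c := by
  obtain ⟨f, hf, hmem⟩ := h
  by_cases hex : ∃ p0, f p0 ≤ b
  · obtain ⟨p0, hp0⟩ := hex
    left
    refine revOn_mono (revOn_below hf hmem p0) ?_
    rintro x ⟨hx1, hx2⟩
    exact ⟨hx1.1, le_trans (le_of_lt hx2) hp0⟩
  · push_neg at hex
    right
    exact ⟨f, hf, fun p => ⟨le_of_lt (hex p), (hmem p).2⟩⟩

/-- `a` and `b` are equivalent: the interval between them contains no copy of `L_{m+1}ᵒᵈ`. -/
def EqvI (m : ℕ) (a b : C) : Prop := ¬ BadI m (min a b) (max a b)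

theorem eqvI_refl (a : C) : EqvI m a a := by
  simpa [EqvI] using not_badI_self a

theorem eqvI_symm {a b : C} (h : EqvI m a b) : EqvI m b a := by
  rwa [EqvI, min_comm, max_comm]

theorem eqvI_of_le {a b : C} (hab : a ≤ b) (h : ¬ BadI m a b) : EqvI m a b := by
  rwa [EqvI, min_eq_left hab, max_eq_right hab]

theorem eqvI_elim {a b : C} (hab : a ≤ b) (h : EqvI m a b) : ¬ BadI m a b := by
  rwa [EqvI, min_eq_left hab, max_eq_right hab] at h

/-- subinterval property -/
theorem eqvI_sub {u v x y : C} (h : EqvI m u v) (huv : u ≤ v) (h1 : u ≤ x) (h2 : x ≤ y)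
    (h3 : y ≤ v) : EqvI m x y := by
  refine eqvI_of_le h2 (fun hB => eqvI_elim huv h (badI_mono hB h1 h3))

theorem eqvI_trans_ordered {a b c : C} (hab : a ≤ b) (hbc : b ≤ c)
    (h1 : EqvI m a b) (h2 : EqvI m b c) : EqvI m a c := by
  refine eqvI_of_le (le_trans hab hbc) (fun hB => ?_)
  rcases badI_cut hB hab hbc with h | h
  · exact eqvI_elim hab h1 h
  · exact eqvI_elim hbc h2 h

theorem eqvI_trans {a b c : C} (h1 : EqvI m a b) (h2 : EqvI m b c) : EqvI m a c := by
  rcases le_total a b with hab | hab <;> rcases le_total b c with hbc | hbc <;>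
    rcases le_total a c with hac | hac
  · exact eqvI_trans_ordered hab hbc h1 h2
  · have h : a = c := le_antisymm (hab.trans hbc) hac
    rw [h]; exact eqvI_refl c
  · exact eqvI_sub h1 hab (le_refl a) hac hbc
  · exact eqvI_symm (eqvI_sub (eqvI_symm h2) hbc (le_refl c) hac hab)
  · exact eqvI_sub h2 hbc hab hac (le_refl c)
  · exact eqvI_symm (eqvI_sub (eqvI_symm h1) hab hbc hac (le_refl a))
  · have h : a = c := le_antisymm hac (hbc.trans hab)
    rw [h]; exact eqvI_refl c
  · exact eqvI_symm (eqvI_trans_ordered hbc hab (eqvI_symm h2) (eqvI_symm h1))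

theorem eqvI_sep {x y a b : C} (hxy : x < y) (hneq : ¬ EqvI m x y)
    (hax : EqvI m a x) (hby : EqvI m b y) : a < b := by
  by_contra hba
  push_neg at hba
  have hxb : x < b := by
    by_contra hbx
    push_neg at hbx
    exact hneq (eqvI_sub hby (hbx.trans hxy.le) hbx hxy.le (le_refl y))
  have hay : a < y := by
    by_contra hya
    push_neg at hya
    exact hneq (eqvI_sub (eqvI_symm hax) (hxy.le.trans hya) (le_refl x) hxy.le hya)
  have h1 : EqvI m a y := eqvI_sub hby (hba.trans hay.le) hba hay.le (le_refl y)
  exact hneq (eqvI_trans (eqvI_symm hax) h1)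

end Copies

section Main

/-- `L_n` order-embeds into `X`. -/
def EmbLn (n : ℕ) (X : Type u) [LinearOrder X] : Prop :=
  ∃ g : (Fin n → ℕ) → X, ∀ x y, AltLexLt x y ↔ g x < g y

variable {C : Type u} [LinearOrder C]

theorem embLn_of_strictMono {s : ℕ → C} (hs : StrictMono s) : EmbLn 1 C := by
  refine ⟨fun x => s (x 0), fun x y => ?_⟩
  rw [altLex_one, hs.lt_iff_lt]

theorem hdegLe_one_of_wfGT (h : WellFoundedGT C) : HdegLe 1 C := by
  refine ⟨C, inferInstance, Or.inr h, id, monotone_id, fun i => ?_⟩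
  have : Subsingleton {c : C // id c = i} := ⟨fun a b => Subtype.ext (a.2.trans b.2.symm)⟩
  exact Finite.of_subsingleton

theorem base_case (hC : ¬ EmbLn 1 C) : HdegLe 1 C := by
  refine hdegLe_one_of_wfGT ⟨?_⟩
  rw [RelEmbedding.wellFounded_iff_isEmpty]
  refine ⟨fun e => hC (embLn_of_strictMono (s := fun j => e j) ?_)⟩
  exact strictMono_nat_of_lt_succ (fun j => e.map_rel_iff.2 (Nat.lt_succ_self j))
end Main

section Assembly

variable {C : Type u} [LinearOrder C] {m : ℕ}

theorem embLn_succ_of_copies (f : ℕ → (Fin (m+1) → ℕ) → C) (l uu : ℕ → C)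
    (hf : ∀ j p q, AltLexLt p q ↔ f j q < f j p)
    (hl : ∀ j p, l j ≤ f j p) (hu : ∀ j p, f j p ≤ uu j)
    (hsep : ∀ j, uu j < l (j+1)) : EmbLn (m+2) C := by
  have hlu : ∀ j, l j ≤ uu j := fun j => (hl j (fun _ => 0)).trans (hu j (fun _ => 0))
  have hchain : ∀ j k, j < k → uu j < l k := by
    have key : ∀ d j, uu j < l (j + d + 1) := by
      intro d
      induction d with
      | zero => intro j; simpa using hsep j
      | succ d ih =>
        intro j
        calc uu j < l (j + d + 1) := ih j
        _ ≤ uu (j + d + 1) := hlu _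
        _ < l (j + d + 1 + 1) := hsep _
    intro j k h
    obtain ⟨d, rfl⟩ : ∃ d, k = j + d + 1 := ⟨k - j - 1, by omega⟩
    exact key d j
  have forward : ∀ x y : Fin (m+2) → ℕ, AltLexLt x y →
      f (x 0) (fun i => x i.succ) < f (y 0) (fun i => y i.succ) := by
    intro x y h
    rw [altLex_succ_iff] at h
    rcases h with h | ⟨h0, ht⟩
    · calc f (x 0) (fun i => x i.succ) ≤ uu (x 0) := hu _ _
      _ < l (y 0) := hchain _ _ h
      _ ≤ f (y 0) (fun i => y i.succ) := hl _ _
    · rw [h0]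
      exact (hf (y 0) _ _).1 ht
  refine ⟨fun x => f (x 0) (fun i => x i.succ), fun x y => ⟨forward x y, fun hlt => ?_⟩⟩
  rcases altLex_trichotomy x y with rfl | h | h
  · exact absurd hlt (lt_irrefl _)
  · exact h
  · exact absurd (forward y x h) (not_lt.2 hlt.le)

end Assembly

section Step

variable {C : Type u} [LinearOrder C] {m : ℕ}

theorem step_case
    (IH : ∀ (X : Type u) [LinearOrder X], ¬ EmbLn (m+1) X → HdegLe (m+1) X)
    (hC : ¬ EmbLn (m+2) C) : HdegLe (m+2) C := by
  classical
  haveI hwo : IsWellOrder C WellOrderingRel := WellOrderingRel.isWellOrder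
  set r : C → C → Prop := WellOrderingRel with hr
  haveI hso : IsStrictOrder C r := ⟨⟩
  have wf : WellFounded r := hwo.wf
  -- the set of "locally r-least" representatives
  set Dset : Set C := {x | ∀ y, r y x → EqvI m y x → x < y} with hD
  -- the candidate sets
  set Sx : C → Set C := fun x => {d | d ∈ Dset ∧ d ≤ x ∧ EqvI m d x} with hSx
  have hSne : ∀ x, (Sx x).Nonempty := by
    intro z
    have hne : ({y | y ≤ z ∧ EqvI m y z} : Set C).Nonempty := ⟨z, le_refl z, eqvI_refl z⟩
    refine ⟨wf.min _ hne, ?_, (wf.min_mem _ hne).1, (wf.min_mem _ hne).2⟩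
    intro y hry heq
    by_contra hlt
    push_neg at hlt
    have hymem : y ∈ {y | y ≤ z ∧ EqvI m y z} :=
      ⟨hlt.trans (wf.min_mem _ hne).1, eqvI_trans heq (wf.min_mem _ hne).2⟩
    exact wf.not_lt_min _ hymem hry
  -- gfun x : the largest element of Sx x (realized as the r-least)
  set gfun : C → C := fun x => wf.min (Sx x) (hSne x) with hg
  have hgmem : ∀ x, gfun x ∈ Sx x := fun x => wf.min_mem _ _
  have hgD : ∀ x, gfun x ∈ Dset := fun x => (hgmem x).1
  have hgle : ∀ x, gfun x ≤ x := fun x => (hgmem x).2.1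
  have hgeqv : ∀ x, EqvI m (gfun x) x := fun x => (hgmem x).2.2
  have hgmax : ∀ x, ∀ d ∈ Sx x, d ≤ gfun x := by
    intro x d hd
    rcases trichotomous_of r d (gfun x) with h | h | h
    · exact absurd h (wf.not_lt_min _ hd)
    · exact le_of_eq h
    · have heq : EqvI m (gfun x) d := eqvI_trans (hgeqv x) (eqvI_symm hd.2.2)
      exact le_of_lt (hd.1 (gfun x) h heq)
  have hgmono : Monotone gfun := by
    intro x y hxy
    by_cases hxy2 : EqvI m x y
    · exact hgmax y (gfun x) ⟨hgD x, (hgle x).trans hxy, eqvI_trans (hgeqv x) hxy2⟩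
    · have hlt : x < y := lt_of_le_of_ne hxy (fun h => hxy2 (h ▸ eqvI_refl x))
      exact le_of_lt (eqvI_sep hlt hxy2 (hgeqv x) (hgeqv y))
  -- no strictly increasing sequences inside Dset
  have hasc : ∀ b : ℕ → C, (∀ j, b j ∈ Dset) → StrictMono b → False := by
    intro b hbD hbmono
    by_cases hA : ∃ N, ∀ k, N ≤ k → EqvI m (b N) (b k)
    · obtain ⟨N, hN⟩ := hA
      have hpair : ∀ j, r (b (N + j + 1)) (b (N + j)) := by
        intro j
        have heq : EqvI m (b (N + j)) (b (N + j + 1)) :=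
          eqvI_trans (eqvI_symm (hN (N + j) (by omega))) (hN (N + j + 1) (by omega))
        rcases trichotomous_of r (b (N + j)) (b (N + j + 1)) with h | h | h
        · exact absurd (hbD (N + j + 1) (b (N + j)) h heq)
            (lt_asymm (hbmono (by omega : N + j < N + j + 1)))
        · exact absurd h (ne_of_lt (hbmono (by omega : N + j < N + j + 1)))
        · exact h
      exact (RelEmbedding.wellFounded_iff_isEmpty.1 wf).false
        (RelEmbedding.natGT (fun j => b (N + j)) hpair)
    · push_neg at hA
      choose nxt hnxt1 hnxt2 using hA
      set φ : ℕ → ℕ := fun j => Nat.rec 0 (fun _ prev => nxt prev) j with hφ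
      have hφbad : ∀ j, ¬ EqvI m (b (φ j)) (b (φ (j+1))) := fun j => hnxt2 (φ j)
      have hφlt : ∀ j, φ j < φ (j+1) := by
        intro j
        rcases lt_or_eq_of_le (hnxt1 (φ j)) with h | h
        · exact h
        · have hb := hφbad j
          rw [show φ (j+1) = nxt (φ j) from rfl, ← h] at hb
          exact absurd (eqvI_refl _) hb
      have hφmono : StrictMono φ := strictMono_nat_of_lt_succ hφlt
      have hbadpairs : ∀ j, BadI m (b (φ j)) (b (φ (j+1))) := by
        intro j
        by_contra hnb
        exact hφbad j (eqvI_of_le (hbmono (hφlt j)).le hnb)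
      have hcop : ∀ j : ℕ, ∃ f : (Fin (m+1) → ℕ) → C,
          (∀ p q, AltLexLt p q ↔ f q < f p) ∧
          ∀ p, f p ∈ Set.Icc (b (φ (2*j))) (b (φ (2*j+1))) := fun j => hbadpairs (2*j)
      choose f hf1 hf2 using hcop
      refine hC (embLn_succ_of_copies f (fun j => b (φ (2*j))) (fun j => b (φ (2*j+1)))
        hf1 (fun j p => (hf2 j p).1) (fun j p => (hf2 j p).2) (fun j => ?_))
      exact hbmono (hφmono (by omega : 2*j+1 < 2*(j+1)))
  -- Dset is reverse well-founded
  have hwfGT : WellFoundedGT ↥Dset := by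
    constructor
    rw [RelEmbedding.wellFounded_iff_isEmpty]
    refine ⟨fun e => ?_⟩
    refine hasc (fun j => (e j : C)) (fun j => (e j).2) ?_
    refine strictMono_nat_of_lt_succ (fun j => ?_)
    exact Subtype.coe_lt_coe.2 (e.map_rel_iff.2 (Nat.lt_succ_self j))
  -- the decomposition
  refine ⟨↥Dset, inferInstance, Or.inr hwfGT,
    fun x => (⟨gfun x, hgD x⟩ : ↥Dset), fun x y h => Subtype.mk_le_mk.2 (hgmono h),
    fun i => ?_⟩
  -- each fiber contains no reversed copy of L_{m+1}
  set T := {c : C // (⟨gfun c, hgD c⟩ : ↥Dset) = i} with hT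
  have hfib : ∀ c : T, gfun c.1 = (i : C) := fun c => congrArg Subtype.val c.2
  have hnoemb : ¬ EmbLn (m+1) (Tᵒᵈ) := by
    rintro ⟨g', hg'⟩
    set fc : (Fin (m+1) → ℕ) → C := fun p => ((OrderDual.ofDual (g' p) : T) : C) with hfc
    have hrev : ∀ p q, AltLexLt p q ↔ fc q < fc p := by
      intro p q
      exact (hg' p q).trans (OrderDual.ofDual_lt_ofDual.symm.trans Subtype.coe_lt_coe.symm)
    have hge : ∀ p, (i : C) ≤ fc p := by
      intro p
      have := hfib (OrderDual.ofDual (g' p))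
      rw [← this]
      exact hgle _
    have heqv : ∀ p, EqvI m (i : C) (fc p) := by
      intro p
      have := hfib (OrderDual.ofDual (g' p))
      rw [← this]
      exact hgeqv _
    set p0 : Fin (m+1) → ℕ := fun _ => 0 with hp0
    have hB : BadI m (i : C) (fc p0) := by
      refine revOn_mono (revOn_below (S := Set.Ici (i : C)) hrev (fun p => hge p) p0) ?_
      rintro x ⟨h1, h2⟩
      exact ⟨h1, h2.le⟩
    exact eqvI_elim (hge p0) (heqv p0) hB
  have h1 : HdegLe (m+1) (Tᵒᵈ) := IH (Tᵒᵈ) hnoemb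
  exact hdegLe_congr (OrderIso.dualDual T) (m+1) (hdegLe_dual (m+1) (Tᵒᵈ) h1)

end Step

theorem hdegLe_of_not_embLn :
    ∀ (n : ℕ), 1 ≤ n → ∀ (C : Type u) [LinearOrder C], ¬ EmbLn n C → HdegLe n C := by
  intro n
  induction n with
  | zero => intro h; omega
  | succ n ih =>
    intro _ C _ hC
    match n, ih with
    | 0, _ => exact base_case hC
    | m + 1, ih => exact step_case (fun X _ hX => ih (by omega) X hX) hC


/-- Fact 3.7: a scattered linear order of Hausdorff degree ≥ n+1 admits an order
embedding of `L_n`. -/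
theorem Ln_embeds_of_not_hdegLe {C : Type u} [LinearOrder C]
    (hscat : ¬ Nonempty (ℚ ↪o C)) {n : ℕ} (hn : 1 ≤ n) (hC : ¬ HdegLe n C) :
    ∃ g : (Fin n → ℕ) → C, ∀ x y : Fin n → ℕ, AltLexLt x y ↔ g x < g y := by
  by_contra h
  exact hC (hdegLe_of_not_embLn n hn C h)
end

section
/- Let C be a scattered linear order such that for every natural number n, C does not have Hausdorff degree ≤ n. Then for every n ≥ 1 there is an order embedding of L_n into C. -/
universe u

theorem hdegLe_mono : ∀ (m : ℕ) {C D : Type u} [LinearOrder C] [LinearOrder D]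
    (f : D → C), StrictMono f → HdegLe m C → HdegLe m D := by
  intro m
  induction m with
  | zero =>
    intro C D _ _ f hf h
    have : Finite C := h
    exact Finite.of_injective f hf.injective
  | succ n ih =>
    intro C D _ _ f hf h
    obtain ⟨I, instI, hwf, g, hg, hfib⟩ := h
    refine ⟨I, instI, hwf, g ∘ f, hg.comp hf.monotone, fun i => ?_⟩
    exact ih (fun d : {d : D // (g ∘ f) d = i} => (⟨f d.1, d.2⟩ : {c : C // g c = i}))
      (fun a b hab => by simpa [Subtype.mk_lt_mk] using hf hab) (hfib i)

theorem hdegLe_anti : ∀ (m : ℕ) {C D : Type u} [LinearOrder C] [LinearOrder D]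
    (f : D → C), StrictAnti f → HdegLe m C → HdegLe m D := by
  intro m
  induction m with
  | zero =>
    intro C D _ _ f hf h
    have : Finite C := h
    exact Finite.of_injective f hf.injective
  | succ n ih =>
    intro C D _ _ f hf h
    obtain ⟨I, instI, hwf, g, hg, hfib⟩ := h
    refine ⟨Iᵒᵈ, inferInstance, ?_, fun d => OrderDual.toDual (g (f d)), ?_, fun i => ?_⟩
    · rcases hwf with h1 | h1
      · exact Or.inr ((wellFoundedGT_dual_iff I).mpr h1)
      · exact Or.inl ((wellFoundedLT_dual_iff I).mpr h1)
    · intro a b hab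
      exact OrderDual.toDual_le_toDual.mpr (hg (hf.antitone hab))
    · refine ih (fun d : {d : D // OrderDual.toDual (g (f d)) = i} =>
        (⟨f d.1, ?_⟩ : {c : C // g c = OrderDual.ofDual i})) ?_ (hfib i)
      · exact congrArg OrderDual.ofDual d.2
      · intro a b hab
        exact hf hab

theorem hdegLe_succ {m : ℕ} {C : Type u} [LinearOrder C] (h : HdegLe m C) :
    HdegLe (m + 1) C := by
  refine ⟨PUnit, inferInstance, Or.inl Finite.to_wellFoundedLT, fun _ => PUnit.unit, monotone_const,
    fun i => ?_⟩
  exact hdegLe_mono m (fun c : {c : C // PUnit.unit = i} => c.1)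
    (fun a b hab => hab) h

theorem hdegLe_of_le {m m' : ℕ} (hm : m ≤ m') {C : Type u} [LinearOrder C]
    (h : HdegLe m C) : HdegLe m' C := by
  induction m' with
  | zero => exact (Nat.le_zero.mp hm) ▸ h
  | succ k ih =>
    rcases Nat.lt_or_ge m (k+1) with h1 | h1
    · exact hdegLe_succ (ih (Nat.lt_succ_iff.mp h1))
    · exact (Nat.le_antisymm hm h1) ▸ h

theorem altLexLt_irrefl {n : ℕ} (x : Fin n → ℕ) : ¬ AltLexLt x x := by
  rintro ⟨k, -, hc⟩
  split at hc <;> exact lt_irrefl _ hc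

theorem altLexLt_trichotomy {n : ℕ} {x y : Fin n → ℕ} (h : x ≠ y) :
    AltLexLt x y ∨ AltLexLt y x := by
  classical
  have hne : {k : Fin n | x k ≠ y k}.Nonempty := by
    by_contra hc
    exact h (funext fun k => by
      by_contra hk
      exact hc ⟨k, hk⟩)
  set k := wellFounded_lt.min {k : Fin n | x k ≠ y k} hne with hkdef
  have hk : x k ≠ y k := wellFounded_lt.min_mem _ hne
  have heq : ∀ j : Fin n, j < k → x j = y j := by
    intro j hj
    by_contra hjne
    exact wellFounded_lt.not_lt_min {k : Fin n | x k ≠ y k} hjne hj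
  rcases lt_trichotomy (x k) (y k) with h1 | h1 | h1
  · by_cases he : Even (k : ℕ)
    · exact Or.inl ⟨k, heq, by simp [he, h1]⟩
    · exact Or.inr ⟨k, fun j hj => (heq j hj).symm, by simp [he, h1]⟩
  · exact absurd h1 hk
  · by_cases he : Even (k : ℕ)
    · exact Or.inr ⟨k, fun j hj => (heq j hj).symm, by simp [he, h1]⟩
    · exact Or.inl ⟨k, heq, by simp [he, h1]⟩

/-- shift the 0-th coordinate by `c` -/
def shiftf {n : ℕ} (c : ℕ) (x : Fin n → ℕ) : Fin n → ℕ :=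
  fun k => if (k : ℕ) = 0 then x k + c else x k

theorem altLexLt_shift_iff {n : ℕ} (c : ℕ) (x y : Fin n → ℕ) :
    AltLexLt (shiftf c x) (shiftf c y) ↔ AltLexLt x y := by
  constructor
  · rintro ⟨k, hj, hc⟩
    refine ⟨k, fun j hjk => ?_, ?_⟩
    · have := hj j hjk
      by_cases h0 : (j : ℕ) = 0 <;> simpa [shiftf, h0] using this
    · by_cases h0 : (k : ℕ) = 0 <;> simp [shiftf, h0] at hc <;> simpa [h0] using hc
  · rintro ⟨k, hj, hc⟩
    refine ⟨k, fun j hjk => ?_, ?_⟩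
    · have := hj j hjk
      by_cases h0 : (j : ℕ) = 0 <;> simp [shiftf, h0, this]
    · by_cases h0 : (k : ℕ) = 0 <;> simp [shiftf, h0] at hc ⊢ <;> simpa [h0] using hc

theorem altLexLt_shift_big {n : ℕ} (hn : 0 < n) (x0 y : Fin n → ℕ) :
    AltLexLt x0 (shiftf (x0 ⟨0, hn⟩ + 1) y) := by
  refine ⟨⟨0, hn⟩, fun j hj => absurd hj (by simp [Fin.lt_def]), ?_⟩
  simp [shiftf]
  omega

/-- tail of a function on `Fin (n+1)` -/
def ftail {n : ℕ} (x : Fin (n+1) → ℕ) : Fin n → ℕ := fun k => x k.succ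

theorem altLexLt_succ_iff {n : ℕ} (x y : Fin (n+1) → ℕ) :
    AltLexLt x y ↔ x 0 < y 0 ∨ (x 0 = y 0 ∧ AltLexLt (ftail y) (ftail x)) := by
  constructor
  · rintro ⟨k, hj, hc⟩
    rcases Fin.eq_zero_or_eq_succ k with rfl | ⟨j, rfl⟩
    · left
      simpa using hc
    · right
      refine ⟨hj 0 (Fin.succ_pos j), ⟨j, ?_, ?_⟩⟩
      · intro j' hj'
        exact (hj j'.succ (Fin.succ_lt_succ_iff.mpr hj')).symm
      · have hpar : Even ((j.succ : Fin (n+1)) : ℕ) ↔ ¬ Even (j : ℕ) := by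
          simp [Fin.val_succ, Nat.even_add_one]
        by_cases he : Even (j : ℕ)
        · have : ¬ Even ((j.succ : Fin (n+1)) : ℕ) := by simp [hpar, he]
          simp only [if_neg this] at hc
          simpa [ftail, he] using hc
        · have : Even ((j.succ : Fin (n+1)) : ℕ) := hpar.mpr he
          simp only [if_pos this] at hc
          simpa [ftail, he] using hc
  · rintro (h | ⟨h0, j, hj, hc⟩)
    · exact ⟨0, fun j hj => absurd hj (Fin.not_lt_zero j), by simpa using h⟩
    · refine ⟨j.succ, ?_, ?_⟩
      · intro j' hj'
        rcases Fin.eq_zero_or_eq_succ j' with rfl | ⟨i, rfl⟩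
        · exact h0
        · exact (hj i (Fin.succ_lt_succ_iff.mp hj')).symm
      · have hpar : Even ((j.succ : Fin (n+1)) : ℕ) ↔ ¬ Even (j : ℕ) := by
          simp [Fin.val_succ, Nat.even_add_one]
        by_cases he : Even (j : ℕ)
        · simp only [if_pos he] at hc
          have hs : ¬ Even ((j : ℕ) + 1) := by simp [Nat.even_add_one, he]
          simp only [Fin.val_succ, if_neg hs]
          exact hc
        · simp only [if_neg he] at hc
          have hs : Even ((j : ℕ) + 1) := Nat.even_add_one.mpr he
          simp only [Fin.val_succ, if_pos hs]
          exact hc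

/-- a copy of `D` to carry an auxiliary well-order -/
def WOCopy (D : Type u) : Type u := D
def WOCopy.up {D : Type u} (d : D) : WOCopy D := d
def WOCopy.down {D : Type u} (d : WOCopy D) : D := d

theorem wot_up {D : Type u} [LinearOrder D] {m : ℕ}
    (h : ∀ b : D, HdegLe m {x : D // x ≤ b}) : HdegLe (m + 1) D := by
  classical
  obtain ⟨instW, hwf⟩ := exists_wellOrder (WOCopy D)
  have wf : WellFounded (fun a b : WOCopy D => a < b) := hwf.wf
  set S : D → Set (WOCopy D) := fun x => {y | x ≤ WOCopy.down y} with hS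
  have hne : ∀ x : D, (S x).Nonempty := fun x => ⟨WOCopy.up x, le_refl x⟩
  set sel : D → WOCopy D := fun x => wf.min (S x) (hne x) with hsel
  have hmem : ∀ x : D, x ≤ WOCopy.down (sel x) := fun x => wf.min_mem (S x) (hne x)
  have hmin : ∀ x : D, ∀ y ∈ S x, ¬ y < sel x := fun x => fun y hy =>
    wf.not_lt_min (S x) hy
  refine ⟨WOCopy D, instW, Or.inl hwf, sel, ?_, ?_⟩
  · intro a b hab
    exact le_of_not_gt (hmin a (sel b) (le_trans hab (hmem b)))
  · intro i
    refine hdegLe_mono m (fun c : {c : D // sel c = i} =>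
      (⟨c.1, ?_⟩ : {x : D // x ≤ WOCopy.down i})) ?_ (h (WOCopy.down i))
    · have := hmem c.1
      rw [c.2] at this
      exact this
    · intro a b hab
      exact hab

theorem wot_down {D : Type u} [LinearOrder D] {m : ℕ}
    (h : ∀ b : D, HdegLe m {x : D // b ≤ x}) : HdegLe (m + 1) D := by
  classical
  obtain ⟨instW, hwf⟩ := exists_wellOrder (WOCopy D)
  have wf : WellFounded (fun a b : WOCopy D => a < b) := hwf.wf
  set S : D → Set (WOCopy D) := fun x => {y | WOCopy.down y ≤ x} with hS
  have hne : ∀ x : D, (S x).Nonempty := fun x => ⟨WOCopy.up x, le_refl x⟩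
  set sel : D → WOCopy D := fun x => wf.min (S x) (hne x) with hsel
  have hmem : ∀ x : D, WOCopy.down (sel x) ≤ x := fun x => wf.min_mem (S x) (hne x)
  have hmin : ∀ x : D, ∀ y ∈ S x, ¬ y < sel x := fun x => fun y hy =>
    wf.not_lt_min (S x) hy
  refine ⟨(WOCopy D)ᵒᵈ, inferInstance, Or.inr ((wellFoundedGT_dual_iff _).mpr hwf),
    fun d => OrderDual.toDual (sel d), ?_, ?_⟩
  · intro a b hab
    exact OrderDual.toDual_le_toDual.mpr (le_of_not_gt (hmin b (sel a) (le_trans (hmem a) hab)))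
  · intro i
    refine hdegLe_mono m (fun c : {c : D // OrderDual.toDual (sel c) = i} =>
      (⟨c.1, ?_⟩ : {x : D // WOCopy.down (OrderDual.ofDual i) ≤ x})) ?_
      (h (WOCopy.down (OrderDual.ofDual i)))
    · have : sel c.1 = OrderDual.ofDual i := congrArg OrderDual.ofDual c.2
      exact this ▸ hmem c.1
    · intro a b hab
      exact hab

/-- A reversed copy of `L_n` inside the subset `s`. -/
def RevEmb (n : ℕ) {C : Type u} [LinearOrder C] (s : Set C) : Prop :=
  ∃ g : (Fin n → ℕ) → C, (∀ x, g x ∈ s) ∧ ∀ x y, AltLexLt x y ↔ g y < g x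

theorem revEmb_mono {n : ℕ} {C : Type u} [LinearOrder C] {s t : Set C} (hst : s ⊆ t) :
    RevEmb n s → RevEmb n t := fun ⟨g, hmem, hg⟩ => ⟨g, fun x => hst (hmem x), hg⟩

theorem revEmb_split {n : ℕ} {C : Type u} [LinearOrder C] {a c : C} (u : C)
    (hau : a ≤ u) (huc : u ≤ c) (h : RevEmb n (Set.Icc a c)) :
    RevEmb n (Set.Icc a u) ∨ RevEmb n (Set.Icc u c) := by
  classical
  obtain ⟨g, hmem, hg⟩ := h
  by_cases hc : ∃ x0, g x0 < u
  · obtain ⟨x0, hx0⟩ := hc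
    left
    rcases Nat.eq_zero_or_pos n with rfl | hn
    · refine ⟨g, fun x => ⟨(hmem x).1, ?_⟩, hg⟩
      have : x = x0 := funext fun i => i.elim0
      rw [this]
      exact le_of_lt hx0
    · refine ⟨fun y => g (shiftf (x0 ⟨0, hn⟩ + 1) y), fun y => ⟨(hmem _).1, ?_⟩, ?_⟩
      · have := (hg x0 (shiftf (x0 ⟨0, hn⟩ + 1) y)).mp (altLexLt_shift_big hn x0 y)
        exact le_of_lt (lt_trans this hx0)
      · intro x y
        rw [← altLexLt_shift_iff (x0 ⟨0, hn⟩ + 1) x y]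
        exact hg _ _
  · push_neg at hc
    exact Or.inr ⟨g, fun x => ⟨hc x, (hmem x).2⟩, hg⟩

theorem revEmb_usplit_le {n : ℕ} {C : Type u} [LinearOrder C] {a c : C} (u : C)
    (hac : a ≤ c) (h : RevEmb n (Set.Icc a c)) :
    RevEmb n (Set.uIcc a u) ∨ RevEmb n (Set.uIcc u c) := by
  rcases le_total u a with hua | hau
  · right
    rw [Set.uIcc_of_le (hua.trans hac)]
    exact revEmb_mono (Set.Icc_subset_Icc_left hua) h
  · rcases le_total c u with hcu | huc
    · left
      rw [Set.uIcc_of_le hau]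
      exact revEmb_mono (Set.Icc_subset_Icc_right hcu) h
    · rcases revEmb_split u hau huc h with h' | h'
      · left
        rw [Set.uIcc_of_le hau]
        exact h'
      · right
        rw [Set.uIcc_of_le huc]
        exact h'

theorem revEmb_usplit {n : ℕ} {C : Type u} [LinearOrder C] (a c u : C)
    (h : RevEmb n (Set.uIcc a c)) :
    RevEmb n (Set.uIcc a u) ∨ RevEmb n (Set.uIcc u c) := by
  rcases le_total a c with hac | hca
  · rw [Set.uIcc_of_le hac] at h
    exact revEmb_usplit_le u hac h
  · rw [Set.uIcc_comm] at h
    rw [Set.uIcc_of_le hca] at h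
    rcases revEmb_usplit_le u hca h with h' | h'
    · right
      rw [Set.uIcc_comm]
      exact h'
    · left
      rw [Set.uIcc_comm]
      exact h'

theorem main_step : ∀ n : ℕ, ∀ (C : Type u) [LinearOrder C],
    (¬ ∃ g : (Fin n → ℕ) → C, ∀ x y, AltLexLt x y ↔ g x < g y) → HdegLe (3*n) C := by
  intro n
  induction n with
  | zero =>
    intro C _ hemb
    have hempty : IsEmpty C := by
      by_contra hne
      rw [not_isEmpty_iff] at hne
      obtain ⟨c⟩ := hne
      exact hemb ⟨fun _ => c, fun x y =>
        ⟨fun ⟨k, _, _⟩ => k.elim0, fun h => absurd h (lt_irrefl c)⟩⟩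
    haveI := hempty
    have : Finite C := Finite.of_subsingleton
    exact this
  | succ n ih =>
    intro C _ hemb
    classical
    -- the finite-degree equivalence
    set E : C → C → Prop := fun a b => a = b ∨ ¬ RevEmb n (Set.uIcc a b) with hE
    have hrefl : ∀ a, E a a := fun a => Or.inl rfl
    have hsymm : ∀ {p q : C}, E p q → E q p := by
      rintro p q (rfl | h)
      · exact Or.inl rfl
      · right
        rw [Set.uIcc_comm]
        exact h
    have htrans : ∀ {p q r : C}, E p q → E q r → E p r := by
      rintro p q r (rfl | h1) h2
      · exact h2
      · rcases h2 with rfl | h2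
        · exact Or.inr h1
        · right
          intro hrev
          rcases revEmb_usplit p r q hrev with h' | h'
          · exact h1 h'
          · exact h2 h'
    have hconv : ∀ {p q x : C}, E p q → p ≤ x → x ≤ q → E p x := by
      rintro p q x (rfl | h) hpx hxq
      · exact Or.inl (le_antisymm hpx hxq)
      · rcases eq_or_ne p x with rfl | hne
        · exact Or.inl rfl
        · right
          intro hrev
          refine h (revEmb_mono ?_ hrev)
          refine Set.uIcc_subset_uIcc Set.left_mem_uIcc ?_
          rw [Set.uIcc_of_le (hpx.trans hxq), Set.mem_Icc]
          exact ⟨hpx, hxq⟩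
    set st : Setoid C := ⟨E, ⟨hrefl, hsymm, htrans⟩⟩ with hst
    set rep : C → C := fun c => (Quotient.mk st c).out with hrep
    have hrepE : ∀ c, E (rep c) c := fun c =>
      Quotient.exact (Quotient.out_eq (Quotient.mk st c))
    have hrepeq : ∀ {a b : C}, E a b → rep a = rep b := fun h =>
      congrArg Quotient.out (Quotient.sound h)
    have hrep_idem : ∀ c, rep (rep c) = rep c := fun c => hrepeq (hrepE c)
    have hlt : ∀ {a b : C}, a < b → ¬ E a b → rep a < rep b := by
      intro a b hab hne
      by_contra hge
      push_neg at hge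
      apply hne
      rcases le_total (rep b) a with h1 | h1
      · exact htrans (hsymm (hconv (hrepE b) h1 (le_of_lt hab))) (hrepE b)
      · have h2 : E a (rep b) := hconv (hsymm (hrepE a)) h1 hge
        exact htrans h2 (hrepE b)
    have hle : ∀ {a b : C}, a ≤ b → rep a ≤ rep b := by
      intro a b hab
      rcases eq_or_lt_of_le hab with rfl | hab'
      · exact le_refl _
      · by_cases he : E a b
        · exact le_of_eq (hrepeq he)
        · exact le_of_lt (hlt hab' he)
    -- the index order
    set I : Type u := {c : C // rep c = c} with hI
    set g0 : C → I := fun c => ⟨rep c, hrep_idem c⟩ with hg0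
    have hg0mono : Monotone g0 := fun a b hab => hle hab
    -- key degree bound on intervals inside a class
    have hIcc : ∀ p q : C, E p q → p ≤ q → HdegLe (3*n) {x : C // x ∈ Set.Icc p q} := by
      intro p q hpq hle'
      rcases hpq with rfl | hrev
      · have hsub : Subsingleton {x : C // x ∈ Set.Icc p p} := by
          constructor
          rintro ⟨x, hx⟩ ⟨y, hy⟩
          rw [Set.mem_Icc] at hx hy
          have : x = y := le_antisymm (le_trans hx.2 hy.1) (le_trans hy.2 hx.1)
          exact Subtype.ext this
        have : Finite {x : C // x ∈ Set.Icc p p} := Finite.of_subsingleton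
        exact hdegLe_of_le (Nat.zero_le _) this
      · rw [Set.uIcc_of_le hle'] at hrev
        set S := {x : C // x ∈ Set.Icc p q} with hS
        have hdual : HdegLe (3*n) Sᵒᵈ := by
          apply ih
          rintro ⟨g, hg⟩
          apply hrev
          refine ⟨fun x => ((OrderDual.ofDual (g x) : S) : C), fun x => ?_, ?_⟩
          · exact (OrderDual.ofDual (g x)).2
          · intro x y
            rw [hg x y]
            rfl
        exact hdegLe_anti (3*n) (OrderDual.toDual : S → Sᵒᵈ)
          (fun a b hab => OrderDual.toDual_lt_toDual.mpr hab) hdual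
    -- well-foundedness of the index order
    have hWFGT : WellFoundedGT I := by
      by_contra hwf
      have hnwf : ¬ WellFounded (fun a b : I => a > b) := fun h => hwf ⟨h⟩
      rw [RelEmbedding.wellFounded_iff_isEmpty] at hnwf
      rw [not_isEmpty_iff] at hnwf
      obtain ⟨f⟩ := hnwf
      set uu : ℕ → C := fun i => (f i : I).1 with huu
      have hmono : StrictMono uu := by
        intro i j hij
        have : (f i : I) < f j := f.map_rel_iff.mpr hij
        exact this
      have hRev : ∀ i : ℕ, RevEmb n (Set.Icc (uu (2*i)) (uu (2*i+1))) := by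
        intro i
        have hlt' : uu (2*i) < uu (2*i+1) := hmono (by omega)
        have hne : ¬ E (uu (2*i)) (uu (2*i+1)) := by
          intro he
          have := hrepeq he
          have h1 : rep (uu (2*i)) = uu (2*i) := (f (2*i) : I).2
          have h2 : rep (uu (2*i+1)) = uu (2*i+1) := (f (2*i+1) : I).2
          rw [h1, h2] at this
          exact absurd this (ne_of_lt hlt')
        by_contra hrev
        apply hne
        right
        rw [Set.uIcc_of_le (le_of_lt hlt')]
        exact hrev
      choose gs hmem hgs using hRev
      set G : (Fin (n+1) → ℕ) → C := fun x => gs (x 0) (ftail x) with hG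
      have hGlt : ∀ x y, AltLexLt x y → G x < G y := by
        intro x y hxy
        rw [altLexLt_succ_iff] at hxy
        rcases hxy with h | ⟨h0, htail⟩
        · have h1 : G x ≤ uu (2*(x 0)+1) := (hmem (x 0) (ftail x)).2
          have h2 : uu (2*(x 0)+1) < uu (2*(y 0)) := hmono (by omega)
          have h3 : uu (2*(y 0)) ≤ G y := (hmem (y 0) (ftail y)).1
          exact lt_of_le_of_lt h1 (lt_of_lt_of_le h2 h3)
        · have := (hgs (x 0) (ftail y) (ftail x)).mp htail
          show gs (x 0) (ftail x) < gs (y 0) (ftail y)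
          rw [← h0]
          exact this
      apply hemb
      refine ⟨G, fun x y => ⟨hGlt x y, ?_⟩⟩
      intro hG'
      rcases eq_or_ne x y with rfl | hne
      · exact absurd hG' (lt_irrefl _)
      · rcases altLexLt_trichotomy hne with h | h
        · exact h
        · exact absurd hG' (lt_asymm (hGlt y x h))
    -- degree of each class
    have hfib : ∀ i : I, HdegLe (3*n+1+1) {c : C // g0 c = i} := by
      intro i
      set T := {c : C // g0 c = i} with hT
      have hTrep : ∀ t : T, rep t.1 = i.1 := fun t => congrArg Subtype.val t.2
      have hTE : ∀ t : T, E t.1 i.1 := by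
        intro t
        have h1 : E t.1 (rep t.1) := hsymm (hrepE t.1)
        rw [hTrep t] at h1
        exact h1
      set m2 : T → Fin 2 := fun t => if t.1 ≤ i.1 then 0 else 1 with hm2
      have hm2mono : Monotone m2 := by
        intro a b hab
        by_cases hb : b.1 ≤ i.1
        · have ha : a.1 ≤ i.1 := le_trans hab hb
          simp [hm2, ha, hb]
        · by_cases ha : a.1 ≤ i.1 <;> simp [hm2, ha, hb] <;> decide
      have hm2fib : ∀ j : Fin 2, HdegLe (3*n+1) {t : T // m2 t = j} := by
        intro j
        fin_cases j
        · -- lower part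
          set T0 := {t : T // m2 t = 0} with hT0
          have hmem0 : ∀ t : T0, t.1.1 ≤ i.1 := by
            intro t
            have h2 := t.2
            by_contra hc
            simp only [hm2, if_neg hc] at h2
            exact absurd h2 (by decide)
          apply wot_down
          intro b
          have hE' : E b.1.1 i.1 := hTE b.1
          have hdeg : HdegLe (3*n) {x : C // x ∈ Set.Icc b.1.1 i.1} :=
            hIcc _ _ hE' (hmem0 b)
          refine hdegLe_mono (3*n) (fun x : {x : T0 // b ≤ x} =>
            (⟨x.1.1.1, ?_⟩ : {y : C // y ∈ Set.Icc b.1.1 i.1})) ?_ hdeg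
          · rw [Set.mem_Icc]
            exact ⟨x.2, hmem0 x.1⟩
          · intro p q hpq
            exact hpq
        · -- upper part
          set T1 := {t : T // m2 t = 1} with hT1
          have hmem1 : ∀ t : T1, i.1 ≤ t.1.1 := by
            intro t
            have h2 := t.2
            by_cases hc : t.1.1 ≤ i.1
            · simp only [hm2, if_pos hc] at h2
              exact absurd h2 (by decide)
            · exact le_of_not_ge hc
          apply wot_up
          intro b
          have hE' : E i.1 b.1.1 := hsymm (hTE b.1)
          have hdeg : HdegLe (3*n) {x : C // x ∈ Set.Icc i.1 b.1.1} :=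
            hIcc _ _ hE' (hmem1 b)
          refine hdegLe_mono (3*n) (fun x : {x : T1 // x ≤ b} =>
            (⟨x.1.1.1, ?_⟩ : {y : C // y ∈ Set.Icc i.1 b.1.1})) ?_ hdeg
          · rw [Set.mem_Icc]
            exact ⟨hmem1 x.1, x.2⟩
          · intro p q hpq
            exact hpq
      set M2 : T → ULift.{u} (Fin 2) := fun t => ⟨m2 t⟩ with hM2
      have hM2mono : Monotone M2 := fun a b hab => hm2mono hab
      have hM2fib : ∀ j : ULift.{u} (Fin 2), HdegLe (3*n+1) {t : T // M2 t = j} := by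
        intro j
        refine hdegLe_mono (3*n+1) (fun t : {t : T // M2 t = j} =>
          (⟨t.1, congrArg ULift.down t.2⟩ : {t : T // m2 t = j.down})) ?_ (hm2fib j.down)
        intro p q hpq
        exact hpq
      exact ⟨ULift.{u} (Fin 2), inferInstance, Or.inl Finite.to_wellFoundedLT, M2, hM2mono, hM2fib⟩
    have : HdegLe (3*n+1+1+1) C :=
      ⟨I, inferInstance, Or.inr hWFGT, g0, hg0mono, hfib⟩
    have harith : 3*(n+1) = 3*n+1+1+1 := by ring
    rw [harith]
    exact this

/-- Conclusion 3.8: a scattered linear order of infinite Hausdorff degree admits an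
order embedding of `L_n` for every `n ≥ 1`. -/
theorem Ln_embeds_of_infinite_hdeg {C : Type u} [LinearOrder C]
    (hscat : ¬ Nonempty (ℚ ↪o C)) (hC : ∀ n : ℕ, ¬ HdegLe n C) :
    ∀ n : ℕ, 1 ≤ n →
      ∃ g : (Fin n → ℕ) → C, ∀ x y : Fin n → ℕ, AltLexLt x y ↔ g x < g y := by
  intro n _
  by_contra hg
  exact hC (3*n) (main_step n C hg)
end

section
/- Define Scat to be the least class of linear orders such that: every finite linear order is in Scat, and whenever I is a linear order with < on I well-founded or > on I well-founded, C is a linear order, and g : C → I is a monotone map such that every fiber g⁻¹(i), with the order induced from C, is in Scat, then C is in Scat. Then a linear order C is scattered (admits no order embedding of ℚ) if and only if C belongs to Scat. -/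
universe u

/-- `Scat` is the least class of linear orders containing the finite linear orders and
closed under well-ordered and inversely well-ordered sums. -/
inductive Scat : ∀ (C : Type u) [LinearOrder C], Prop
  | finite (C : Type u) [LinearOrder C] [Finite C] : Scat C
  | sum (C : Type u) [LinearOrder C] (I : Type u) [LinearOrder I]
      (hI : WellFoundedLT I ∨ WellFoundedGT I) (g : C → I) (hg : Monotone g)
      (hfib : ∀ i : I, Scat {c : C // g c = i}) : Scat C

namespace ScatAux

/-- `Scat` is closed under order embeddings. -/
theorem scat_embed {C : Type u} [LinearOrder C] (h : Scat C) :
    ∀ (D : Type u) [LinearOrder D], (D ↪o C) → Scat D := by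
  induction h with
  | finite C =>
    intro D _ e
    haveI := Finite.of_injective _ e.injective
    exact Scat.finite D
  | sum C I hI g hg hfib IH =>
    intro D _ e
    refine Scat.sum D I hI (fun d => g (e d)) (fun a b hab => hg (e.monotone hab)) (fun i => ?_)
    exact IH i _ (OrderEmbedding.ofStrictMono
      (fun d => (⟨e d.1, d.2⟩ : {c : C // g c = i}))
      (fun a b hab => by
        rw [Subtype.mk_lt_mk]
        exact e.strictMono (Subtype.coe_lt_coe.2 hab)))

theorem scat_of_strictMono {C D : Type u} [LinearOrder C] [LinearOrder D]
    (h : Scat C) (f : D → C) (hf : StrictMono f) : Scat D :=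
  scat_embed h D (OrderEmbedding.ofStrictMono f hf)

theorem scat_subsingleton (D : Type u) [LinearOrder D] [Subsingleton D] : Scat D :=
  haveI : Finite D := Finite.of_subsingleton
  Scat.finite D

/-- A type synonym used to carry an auxiliary well-order. -/
def WOrd (α : Type u) : Type u := α

def toWOrd {α : Type u} (a : α) : WOrd α := a

def WOrd.out {α : Type u} (a : WOrd α) : α := a

variable {C : Type u} [LinearOrder C]

/-- Glue lemma: if all bounded-above initial pieces of `S` are in `Scat`, so is `S`. -/
theorem scat_left (S : Set C) (h : ∀ d ∈ S, Scat ↥{c ∈ S | c ≤ d}) : Scat ↥S := by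
  obtain ⟨instI, wfI⟩ := exists_wellOrder (WOrd ↥S)
  letI := instI
  haveI := wfI
  have hne : ∀ c : ↥S, (toWOrd c) ∈ {d : WOrd ↥S | c ≤ d.out} := fun c => le_refl c
  set g : ↥S → WOrd ↥S := fun c => wfI.wf.min {d : WOrd ↥S | c ≤ d.out} ⟨toWOrd c, hne c⟩
    with hg_def
  have hmem : ∀ c : ↥S, c ≤ (g c).out := fun c => wfI.wf.min_mem _ ⟨toWOrd c, hne c⟩
  have hmono : Monotone g := by
    intro a b hab
    refine le_of_not_gt fun hlt => ?_
    exact wfI.wf.not_lt_min {d : WOrd ↥S | a ≤ d.out}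
      (le_trans hab (hmem b)) hlt
  refine @Scat.sum ↥S _ (WOrd ↥S) instI (Or.inl wfI) g hmono (fun i => ?_)
  refine scat_of_strictMono (h ↑i.out i.out.2)
    (fun x => ⟨↑x.1, ⟨x.1.2, ?_⟩⟩) ?_
  · have := hmem x.1
    rw [x.2] at this
    exact Subtype.coe_le_coe.2 this
  · intro a b hab
    rw [Subtype.mk_lt_mk]
    exact Subtype.coe_lt_coe.2 (Subtype.coe_lt_coe.2 hab)

/-- Glue lemma: if all bounded-below final pieces of `S` are in `Scat`, so is `S`. -/
theorem scat_right (S : Set C) (h : ∀ d ∈ S, Scat ↥{c ∈ S | d ≤ c}) : Scat ↥S := by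
  obtain ⟨instI, wfI⟩ := exists_wellOrder (WOrd ↥S)
  letI := instI
  haveI := wfI
  have hne : ∀ c : ↥S, (toWOrd c) ∈ {d : WOrd ↥S | d.out ≤ c} := fun c => le_refl c
  set g : ↥S → (WOrd ↥S)ᵒᵈ :=
    fun c => OrderDual.toDual (wfI.wf.min {d : WOrd ↥S | d.out ≤ c} ⟨toWOrd c, hne c⟩)
    with hg_def
  have hmem : ∀ c : ↥S, (OrderDual.ofDual (g c)).out ≤ c :=
    fun c => wfI.wf.min_mem _ ⟨toWOrd c, hne c⟩
  have hmono : Monotone g := by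
    intro a b hab
    show OrderDual.ofDual (g b) ≤ OrderDual.ofDual (g a)
    refine le_of_not_gt fun hlt => ?_
    exact wfI.wf.not_lt_min {d : WOrd ↥S | d.out ≤ b}
      (le_trans (hmem a) hab) hlt
  refine @Scat.sum ↥S _ ((WOrd ↥S)ᵒᵈ) _ (Or.inr ?_) g hmono (fun i => ?_)
  · exact inferInstance
  · refine scat_of_strictMono (h ↑(OrderDual.ofDual i).out (OrderDual.ofDual i).out.2)
      (fun x => ⟨↑x.1, ⟨x.1.2, ?_⟩⟩) ?_
    · have := hmem x.1
      rw [x.2] at this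
      exact Subtype.coe_le_coe.2 this
    · intro a b hab
      rw [Subtype.mk_lt_mk]
      exact Subtype.coe_lt_coe.2 (Subtype.coe_lt_coe.2 hab)

/-- Glue two `Scat` pieces, the first downward closed in `S`. -/
theorem scat_union2 (S A B : Set C) (hSA : ∀ c ∈ S, c ∈ A ∨ c ∈ B)
    (hdown : ∀ c ∈ S, ∀ c' ∈ S, c' ≤ c → c ∈ A → c' ∈ A)
    (hA : Scat ↥A) (hB : Scat ↥B) : Scat ↥S := by
  classical
  haveI hwo : WellFoundedLT (ULift.{u} Bool) := Finite.to_wellFoundedLT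
  refine @Scat.sum ↥S _ (ULift.{u} Bool) _ (Or.inl hwo)
    (fun c => ⟨if (c : C) ∈ A then false else true⟩) ?_ ?_
  · intro a b hab
    by_cases ha : (a : C) ∈ A
    · by_cases hb : (b : C) ∈ A <;> simp [ha, hb]
    · have hb : (b : C) ∉ A := fun hb => ha (hdown b b.2 a a.2 hab hb)
      simp [ha, hb]
  · rintro ⟨i⟩
    cases i with
    | false =>
      refine scat_of_strictMono hA (fun x => ⟨↑x.1, ?_⟩) ?_
      · have hx := x.2
        by_cases h : (x.1 : C) ∈ A
        · exact h
        · simp [h] at hx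
      · intro a b hab
        rw [Subtype.mk_lt_mk]
        exact Subtype.coe_lt_coe.2 (Subtype.coe_lt_coe.2 hab)
    | true =>
      refine scat_of_strictMono hB (fun x => ⟨↑x.1, ?_⟩) ?_
      · have hx := x.2
        by_cases h : (x.1 : C) ∈ A
        · simp [h] at hx
        · exact (hSA x.1 x.1.2).resolve_left h
      · intro a b hab
        rw [Subtype.mk_lt_mk]
        exact Subtype.coe_lt_coe.2 (Subtype.coe_lt_coe.2 hab)

theorem scat_icc_self (a : C) : Scat ↥(Set.Icc a a) := by
  haveI : Subsingleton ↥(Set.Icc a a) := by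
    constructor
    rintro ⟨x, hx⟩ ⟨y, hy⟩
    simp only [Set.mem_Icc] at hx hy
    have : x = y := le_antisymm (le_trans hx.2 hy.1) (le_trans hy.2 hx.1)
    simpa using this
  exact scat_subsingleton _

/-- If an interval is not `Scat`, it has a strictly interior point splitting it into two
non-`Scat` halves. -/
theorem exists_bad_mid {a b : C} (hab : a < b) (h : ¬ Scat ↥(Set.Icc a b)) :
    ∃ m, a < m ∧ m < b ∧ ¬ Scat ↥(Set.Icc a m) ∧ ¬ Scat ↥(Set.Icc m b) := by
  by_contra hc
  push_neg at hc
  apply h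
  have key : ∀ m ∈ Set.Icc a b, Scat ↥(Set.Icc a m) ∨ Scat ↥(Set.Icc m b) := by
    intro m hm
    rcases eq_or_lt_of_le hm.1 with h1 | h1
    · exact Or.inl (h1 ▸ scat_icc_self a)
    rcases eq_or_lt_of_le hm.2 with h2 | h2
    · exact Or.inr (h2 ▸ scat_icc_self b)
    by_cases hS : Scat ↥(Set.Icc a m)
    · exact Or.inl hS
    · exact Or.inr (hc m h1 h2 hS)
  set A : Set C := {m | m ∈ Set.Icc a b ∧ Scat ↥(Set.Icc a m)} with hA_def
  set B : Set C := {m | m ∈ Set.Icc a b ∧ Scat ↥(Set.Icc m b)} with hB_def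
  have hA : Scat ↥A := by
    refine scat_left A (fun d hd => ?_)
    refine scat_of_strictMono hd.2
      (fun x => ⟨x.1, by obtain ⟨⟨⟨h1, _⟩, _⟩, h2⟩ := x.2; exact ⟨h1, h2⟩⟩) ?_
    intro p q hpq
    rw [Subtype.mk_lt_mk]
    exact Subtype.coe_lt_coe.2 hpq
  have hB : Scat ↥B := by
    refine scat_right B (fun d hd => ?_)
    refine scat_of_strictMono hd.2
      (fun x => ⟨x.1, by obtain ⟨⟨⟨_, h1⟩, _⟩, h2⟩ := x.2; exact ⟨h2, h1⟩⟩) ?_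
    intro p q hpq
    rw [Subtype.mk_lt_mk]
    exact Subtype.coe_lt_coe.2 hpq
  refine scat_union2 (Set.Icc a b) A B ?_ ?_ hA hB
  · intro c hc'
    rcases key c hc' with h' | h'
    · exact Or.inl ⟨hc', h'⟩
    · exact Or.inr ⟨hc', h'⟩
  · intro c hcS c' hc'S hle hcA
    refine ⟨hc'S, ?_⟩
    refine scat_of_strictMono hcA.2
      (fun x => ⟨x.1, by obtain ⟨h1, h2⟩ := x.2; exact ⟨h1, le_trans h2 hle⟩⟩) ?_
    intro p q hpq
    rw [Subtype.mk_lt_mk]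
    exact Subtype.coe_lt_coe.2 hpq

theorem scat_of_forall_icc (h : ∀ a b : C, Scat ↥(Set.Icc a b)) : Scat C := by
  rcases isEmpty_or_nonempty C with hE | hNE
  · haveI : Finite C := Finite.of_subsingleton
    exact Scat.finite C
  obtain ⟨x⟩ := hNE
  have hIic : Scat ↥(Set.Iic x) := by
    refine scat_right (Set.Iic x) (fun d hd => ?_)
    refine scat_of_strictMono (h d x)
      (fun y => ⟨y.1, by obtain ⟨h1, h2⟩ := y.2; exact ⟨h2, h1⟩⟩) ?_
    intro p q hpq
    rw [Subtype.mk_lt_mk]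
    exact Subtype.coe_lt_coe.2 hpq
  have hIci : Scat ↥(Set.Ici x) := by
    refine scat_left (Set.Ici x) (fun d hd => ?_)
    refine scat_of_strictMono (h x d)
      (fun y => ⟨y.1, by obtain ⟨h1, h2⟩ := y.2; exact ⟨h1, h2⟩⟩) ?_
    intro p q hpq
    rw [Subtype.mk_lt_mk]
    exact Subtype.coe_lt_coe.2 hpq
  have huniv : Scat ↥(Set.univ : Set C) := by
    refine scat_union2 Set.univ (Set.Iic x) (Set.Ici x) ?_ ?_ hIic hIci
    · intro c _
      rcases le_total c x with h' | h'
      · exact Or.inl h'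
      · exact Or.inr h'
    · intro c _ c' _ hle hcx
      exact le_trans hle hcx
  exact scat_of_strictMono huniv (fun c => ⟨c, trivial⟩) (fun p q hpq => by
    exact hpq)

/-! ### The binary tree of bad intervals -/

structure Bad (C : Type u) [LinearOrder C] where
  lo : C
  hi : C
  lt : lo < hi
  bad : ¬ Scat ↥(Set.Icc lo hi)

variable (p : Bad C)

noncomputable def Bad.mid : C := (exists_bad_mid p.lt p.bad).choose

theorem Bad.lo_lt_mid : p.lo < p.mid := (exists_bad_mid p.lt p.bad).choose_spec.1
theorem Bad.mid_lt_hi : p.mid < p.hi := (exists_bad_mid p.lt p.bad).choose_spec.2.1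
theorem Bad.bad_lo : ¬ Scat ↥(Set.Icc p.lo p.mid) :=
  (exists_bad_mid p.lt p.bad).choose_spec.2.2.1
theorem Bad.bad_hi : ¬ Scat ↥(Set.Icc p.mid p.hi) :=
  (exists_bad_mid p.lt p.bad).choose_spec.2.2.2

noncomputable def stepB (b : Bool) (p : Bad C) : Bad C :=
  if b then ⟨p.mid, p.hi, p.mid_lt_hi, p.bad_hi⟩ else ⟨p.lo, p.mid, p.lo_lt_mid, p.bad_lo⟩

theorem stepB_lo_le (b : Bool) (p : Bad C) : p.lo ≤ (stepB b p).lo := by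
  cases b <;> simp [stepB] <;> exact le_of_lt p.lo_lt_mid

theorem stepB_hi_le (b : Bool) (p : Bad C) : (stepB b p).hi ≤ p.hi := by
  cases b <;> simp [stepB] <;> exact le_of_lt p.mid_lt_hi

noncomputable def iter : List Bool → Bad C → Bad C
  | [], p => p
  | b :: s, p => iter s (stepB b p)

theorem iter_lo_le : ∀ (s : List Bool) (p : Bad C), p.lo ≤ (iter s p).lo := by
  intro s
  induction s with
  | nil => intro p; exact le_refl _
  | cons b s IH => intro p; exact le_trans (stepB_lo_le b p) (IH (stepB b p))

theorem iter_hi_le : ∀ (s : List Bool) (p : Bad C), (iter s p).hi ≤ p.hi := by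
  intro s
  induction s with
  | nil => intro p; exact le_refl _
  | cons b s IH => intro p; exact le_trans (IH (stepB b p)) (stepB_hi_le b p)

/-! ### Dyadic values of binary strings -/

def v : List Bool → ℚ
  | [] => 1/2
  | b :: s => (cond b 1 0 + v s) / 2

theorem v_pos : ∀ s, 0 < v s := by
  intro s
  induction s with
  | nil => norm_num [v]
  | cons b s IH => cases b <;> simp only [v, cond] <;> linarith

theorem v_lt_one : ∀ s, v s < 1 := by
  intro s
  induction s with
  | nil => norm_num [v]
  | cons b s IH =>
    have := v_pos s
    cases b <;> simp only [v, cond] <;> linarith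

theorem v_inj : ∀ s t : List Bool, v s = v t → s = t := by
  intro s
  induction s with
  | nil =>
    intro t
    cases t with
    | nil => intro _; rfl
    | cons b t' =>
      intro h
      have h1 := v_pos t'
      have h2 := v_lt_one t'
      cases b <;> simp only [v, cond] at h <;> norm_num at h <;> linarith
  | cons b s' IH =>
    intro t
    cases t with
    | nil =>
      intro h
      have h1 := v_pos s'
      have h2 := v_lt_one s'
      cases b <;> simp only [v, cond] at h <;> norm_num at h <;> linarith
    | cons b' t' =>
      intro h
      have h1 := v_pos s'
      have h2 := v_lt_one s'
      have h3 := v_pos t'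
      have h4 := v_lt_one t'
      cases b <;> cases b' <;> simp only [v, cond] at h
      · have : v s' = v t' := by linarith
        rw [IH t' this]
      · exfalso; linarith
      · exfalso; linarith
      · have : v s' = v t' := by linarith
        rw [IH t' this]

theorem v_dense : ∀ s t : List Bool, v s < v t → ∃ u, v s < v u ∧ v u < v t := by
  intro s
  induction s with
  | nil =>
    intro t
    cases t with
    | nil => intro h; exact absurd h (lt_irrefl _)
    | cons b t' =>
      intro h
      have h1 := v_pos t'
      have h2 := v_lt_one t'
      cases b
      · exfalso; simp only [v, cond] at h; linarith
      · refine ⟨true :: false :: t', ?_, ?_⟩ <;> simp only [v, cond] <;> linarith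
  | cons b s' IH =>
    intro t
    cases t with
    | nil =>
      intro h
      have h1 := v_pos s'
      have h2 := v_lt_one s'
      cases b
      · refine ⟨false :: true :: s', ?_, ?_⟩ <;> simp only [v, cond] at h ⊢ <;> linarith
      · exfalso; simp only [v, cond] at h; linarith
    | cons b' t' =>
      intro h
      have h1 := v_pos s'
      have h2 := v_lt_one s'
      have h3 := v_pos t'
      have h4 := v_lt_one t'
      cases b <;> cases b'
      · have h' : v s' < v t' := by simp only [v, cond] at h; linarith
        obtain ⟨u, hu1, hu2⟩ := IH t' h'
        refine ⟨false :: u, ?_, ?_⟩ <;> simp only [v, cond] <;> linarith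
      · refine ⟨[], ?_, ?_⟩ <;> simp only [v, cond] <;> norm_num <;> linarith
      · exfalso; simp only [v, cond] at h; linarith
      · have h' : v s' < v t' := by simp only [v, cond] at h; linarith
        obtain ⟨u, hu1, hu2⟩ := IH t' h'
        refine ⟨true :: u, ?_, ?_⟩ <;> simp only [v, cond] <;> linarith

/-- Key monotonicity: midpoints are ordered like the dyadic values. -/
theorem mid_lt_mid : ∀ (s t : List Bool) (p : Bad C), v s < v t →
    (iter s p).mid < (iter t p).mid := by
  intro s
  induction s with
  | nil =>
    intro t p h
    cases t with
    | nil => exact absurd h (lt_irrefl _)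
    | cons b t' =>
      have h1 := v_pos t'
      have h2 := v_lt_one t'
      cases b
      · exfalso; simp only [v, cond] at h; linarith
      · show (iter ([] : List Bool) p).mid < (iter (true :: t') p).mid
        have step1 : p.mid ≤ (iter t' (stepB true p)).lo := by
          have := iter_lo_le t' (stepB true p)
          simpa [stepB] using this
        calc (iter ([] : List Bool) p).mid = p.mid := rfl
          _ ≤ (iter t' (stepB true p)).lo := step1
          _ < (iter t' (stepB true p)).mid := (iter t' (stepB true p)).lo_lt_mid
          _ = (iter (true :: t') p).mid := rfl
  | cons b s' IH =>
    intro t p h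
    cases t with
    | nil =>
      have h1 := v_pos s'
      have h2 := v_lt_one s'
      cases b
      · show (iter (false :: s') p).mid < (iter ([] : List Bool) p).mid
        have step1 : (iter s' (stepB false p)).hi ≤ p.mid := by
          have := iter_hi_le s' (stepB false p)
          simpa [stepB] using this
        calc (iter (false :: s') p).mid = (iter s' (stepB false p)).mid := rfl
          _ < (iter s' (stepB false p)).hi := (iter s' (stepB false p)).mid_lt_hi
          _ ≤ p.mid := step1
          _ = (iter ([] : List Bool) p).mid := rfl
      · exfalso; simp only [v, cond] at h; linarith
    | cons b' t' =>
      have h1 := v_pos s'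
      have h2 := v_lt_one s'
      have h3 := v_pos t'
      have h4 := v_lt_one t'
      cases b <;> cases b'
      · have h' : v s' < v t' := by simp only [v, cond] at h; linarith
        exact IH t' (stepB false p) h'
      · -- false :: s' < true :: t'
        show (iter s' (stepB false p)).mid < (iter t' (stepB true p)).mid
        have hs : (iter s' (stepB false p)).hi ≤ p.mid := by
          have := iter_hi_le s' (stepB false p)
          simpa [stepB] using this
        have ht : p.mid ≤ (iter t' (stepB true p)).lo := by
          have := iter_lo_le t' (stepB true p)
          simpa [stepB] using this
        calc (iter s' (stepB false p)).mid < (iter s' (stepB false p)).hi :=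
              (iter s' (stepB false p)).mid_lt_hi
          _ ≤ p.mid := hs
          _ ≤ (iter t' (stepB true p)).lo := ht
          _ < (iter t' (stepB true p)).mid := (iter t' (stepB true p)).lo_lt_mid
      · exfalso; simp only [v, cond] at h; linarith
      · have h' : v s' < v t' := by simp only [v, cond] at h; linarith
        exact IH t' (stepB true p) h'

/-! ### The hard direction -/

theorem scat_of_not_embed (h : ¬ Nonempty (ℚ ↪o C)) : Scat C := by
  by_contra hC
  apply h
  have hicc : ¬ ∀ a b : C, Scat ↥(Set.Icc a b) := fun hh => hC (scat_of_forall_icc hh)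
  push_neg at hicc
  obtain ⟨a₀, b₀, hbad⟩ := hicc
  have hab : a₀ < b₀ := by
    rcases lt_trichotomy a₀ b₀ with h' | h' | h'
    · exact h'
    · exact absurd (h' ▸ scat_icc_self a₀) hbad
    · exfalso
      apply hbad
      haveI : IsEmpty ↥(Set.Icc a₀ b₀) := by
        rw [Set.Icc_eq_empty (not_le.2 h')]
        infer_instance
      haveI : Finite ↥(Set.Icc a₀ b₀) := Finite.of_subsingleton
      exact Scat.finite _
  set p₀ : Bad C := ⟨a₀, b₀, hab, hbad⟩ with hp₀
  set M : List Bool → C := fun s => (iter s p₀).mid with hM_def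
  have hM : ∀ s t, v s < v t → M s < M t := fun s t h' => mid_lt_mid s t p₀ h'
  have hM' : ∀ s t, M s < M t → v s < v t := by
    intro s t h'
    rcases lt_trichotomy (v s) (v t) with h'' | h'' | h''
    · exact h''
    · exact absurd (congrArg M (v_inj s t h'')) (ne_of_lt h')
    · exact absurd (hM t s h'') (not_lt.2 (le_of_lt h'))
  set D : Set C := Set.range M with hD_def
  haveI : Countable ↥D := (Set.countable_range M).to_subtype
  haveI hDdense : DenselyOrdered ↥D := by
    constructor
    rintro ⟨_, s, rfl⟩ ⟨_, t, rfl⟩ hlt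
    have hlt' : M s < M t := hlt
    obtain ⟨u, hu1, hu2⟩ := v_dense s t (hM' s t hlt')
    exact ⟨⟨M u, ⟨u, rfl⟩⟩, hM s u hu1, hM u t hu2⟩
  haveI hDnt : Nontrivial ↥D := by
    refine ⟨⟨M [], ⟨[], rfl⟩⟩, ⟨M [true], ⟨[true], rfl⟩⟩, ?_⟩
    have : v [] < v [true] := by norm_num [v]
    have := hM [] [true] this
    intro hcon
    replace hcon := congrArg Subtype.val hcon
    exact absurd hcon (ne_of_lt this)
  obtain ⟨e⟩ := Order.embedding_from_countable_to_dense ℚ ↥D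
  exact ⟨e.trans (OrderEmbedding.subtype _)⟩

/-! ### The easy direction -/

theorem not_embed_of_scat {C : Type u} [LinearOrder C] (h : Scat C) :
    ¬ Nonempty (ℚ ↪o C) := by
  induction h with
  | finite C =>
    rintro ⟨f⟩
    haveI := Finite.of_injective _ f.injective
    exact not_finite ℚ
  | sum C I hI g hg hfib IH =>
    rintro ⟨f⟩
    set h' : ℚ → I := fun q => g (f q) with hh'
    have hran : (Set.range h').Nonempty := ⟨h' 0, 0, rfl⟩
    have hmono : Monotone h' := fun a b hab => hg (f.monotone hab)
    rcases hI with hwf | hwf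
    · set i₀ := hwf.wf.min (Set.range h') hran with hi₀
      obtain ⟨q₀, hq₀⟩ := hwf.wf.min_mem (Set.range h') hran
      have hconst : ∀ q, q ≤ q₀ → h' q = i₀ := by
        intro q hq
        refine le_antisymm ?_ ?_
        · rw [hi₀, ← hq₀]
          exact hmono hq
        · exact not_lt.1 (hwf.wf.not_lt_min (Set.range h') ⟨q, rfl⟩)
      obtain ⟨φ⟩ := Order.iso_of_countable_dense ℚ ↥(Set.Iio q₀)
      apply IH i₀
      refine ⟨OrderEmbedding.ofStrictMono
        (fun q => ⟨f ↑(φ q), hconst ↑(φ q) (le_of_lt (φ q).2)⟩) ?_⟩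
      intro a b hab
      rw [Subtype.mk_lt_mk]
      exact f.strictMono (Subtype.coe_lt_coe.2 (φ.strictMono hab))
    · set i₀ := hwf.wf.min (Set.range h') hran with hi₀
      obtain ⟨q₀, hq₀⟩ := hwf.wf.min_mem (Set.range h') hran
      have hconst : ∀ q, q₀ ≤ q → h' q = i₀ := by
        intro q hq
        refine le_antisymm ?_ ?_
        · exact not_lt.1 (hwf.wf.not_lt_min (Set.range h') ⟨q, rfl⟩)
        · rw [hi₀, ← hq₀]
          exact hmono hq
      obtain ⟨φ⟩ := Order.iso_of_countable_dense ℚ ↥(Set.Ioi q₀)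
      apply IH i₀
      refine ⟨OrderEmbedding.ofStrictMono
        (fun q => ⟨f ↑(φ q), hconst ↑(φ q) (le_of_lt (φ q).2)⟩) ?_⟩
      intro a b hab
      rw [Subtype.mk_lt_mk]
      exact f.strictMono (Subtype.coe_lt_coe.2 (φ.strictMono hab))

end ScatAux

/-- Hausdorff's theorem: a linear order is scattered iff it lies in the least class of
linear orders containing the finite orders and closed under well-ordered and inversely
well-ordered sums. -/
theorem scattered_iff_scat {C : Type u} [LinearOrder C] :
    ¬ Nonempty (ℚ ↪o C) ↔ Scat C :=
  ⟨ScatAux.scat_of_not_embed, ScatAux.not_embed_of_scat⟩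
end
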